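/- arXiv:2508.11319 — 7 statements merged into one kernel-verified Lean document; each statement's English description precedes it below -/
import Mathlib

section
/- Let α be the unique root in the open interval (0,1) of the polynomial x² − 3x + 1. Then M_α is atomic, its set of atoms is A(M_α) = {α^n : n ∈ ℕ₀} (in particular A(M_α) is infinite), and its set of strong atoms is S(M_α) = {1}. -/
open Polynomial

/-- `M_α`: the additive submonoid of `ℂ` generated by the nonnegative powers of `α`. -/
def Malpha (α : ℂ) : AddSubmonoid ℂ :=
  AddSubmonoid.closure (Set.range fun n : ℕ => α ^ n)

/-- The set of atoms of `M_α`: nonzero elements of `M_α` that cannot be written as a sum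
of two nonzero elements of `M_α`. -/
def atomsM (α : ℂ) : Set ℂ :=
  {a | a ∈ Malpha α ∧ a ≠ 0 ∧
    ∀ u v : ℂ, u ∈ Malpha α → v ∈ Malpha α → a = u + v → u = 0 ∨ v = 0}

/-- `M_α` is atomic: every nonzero element is a finite sum of atoms. -/
def IsAtomicMalpha (α : ℂ) : Prop :=
  ∀ x ∈ Malpha α, x ≠ 0 →
    ∃ s : Multiset ℂ, (∀ a ∈ s, a ∈ atomsM α) ∧ s.sum = x

/-- The set of strong atoms of `M_α`: atoms `a` such that for every `n ≥ 1` the only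
multiset of atoms summing to `n • a` is the one consisting of `n` copies of `a`. -/
def strongAtomsM (α : ℂ) : Set ℂ :=
  {a | a ∈ atomsM α ∧ ∀ n : ℕ, 0 < n →
    ∀ s : Multiset ℂ, (∀ b ∈ s, b ∈ atomsM α) → s.sum = n • a →
      s = Multiset.replicate n a}

namespace StmtAux

/-- Evaluation of a multiset of exponents at `x`. -/
def ev (x : ℝ) (s : Multiset ℕ) : ℝ := (s.map (fun n => x ^ n)).sum

/-- Coefficients of `x^k` in terms of `x` modulo `x^2 - 3x + 1`. -/
def coef : ℕ → ℤ × ℤ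
  | 0 => (0, 1)
  | k + 1 => (3 * (coef k).1 + (coef k).2, -(coef k).1)

lemma pow_eq_coef {x : ℝ} (hx : x ^ 2 - 3 * x + 1 = 0) (k : ℕ) :
    x ^ k = ((coef k).1 : ℝ) * x + ((coef k).2 : ℝ) := by
  induction k with
  | zero => simp [coef]
  | succ k ih =>
    have hx2 : x ^ 2 = 3 * x - 1 := by linarith
    have h1 : x ^ (k + 1) = x ^ k * x := by ring
    rw [h1, ih, coef]
    have h2 : (((coef k).1 : ℝ) * x + ((coef k).2 : ℝ)) * x
        = ((coef k).1 : ℝ) * x ^ 2 + ((coef k).2 : ℝ) * x := by ring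
    rw [h2, hx2]
    push_cast
    ring

def evA (s : Multiset ℕ) : ℤ := (s.map (fun n => (coef n).1)).sum
def evB (s : Multiset ℕ) : ℤ := (s.map (fun n => (coef n).2)).sum

lemma ev_eq {x : ℝ} (hx : x ^ 2 - 3 * x + 1 = 0) (s : Multiset ℕ) :
    ev x s = (evA s : ℝ) * x + (evB s : ℝ) := by
  induction s using Multiset.induction with
  | empty => simp [ev, evA, evB]
  | cons a s ih =>
    simp only [ev, evA, evB, Multiset.map_cons, Multiset.sum_cons] at *
    rw [ih, pow_eq_coef hx a]
    push_cast
    ring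

lemma ev_add (x : ℝ) (s t : Multiset ℕ) : ev x (s + t) = ev x s + ev x t := by
  simp [ev]

lemma ev_nonneg {x : ℝ} (hx : 0 < x) (s : Multiset ℕ) : 0 ≤ ev x s := by
  refine Multiset.sum_nonneg ?_
  intro a ha
  obtain ⟨n, _, rfl⟩ := Multiset.mem_map.1 ha
  positivity

lemma ev_pos {x : ℝ} (hx : 0 < x) {s : Multiset ℕ} (hs : s ≠ 0) : 0 < ev x s := by
  obtain ⟨e, he⟩ := Multiset.exists_mem_of_ne_zero hs
  have h1 : x ^ e ≤ ev x s := by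
    refine Multiset.single_le_sum ?_ _ (Multiset.mem_map_of_mem _ he)
    intro a ha
    obtain ⟨n, _, rfl⟩ := Multiset.mem_map.1 ha
    positivity
  have : (0:ℝ) < x ^ e := by positivity
  linarith

lemma single_le_ev {x : ℝ} (hx : 0 < x) {s : Multiset ℕ} {e : ℕ} (he : e ∈ s) :
    x ^ e ≤ ev x s := by
  refine Multiset.single_le_sum ?_ _ (Multiset.mem_map_of_mem _ he)
  intro a ha
  obtain ⟨n, _, rfl⟩ := Multiset.mem_map.1 ha
  positivity

lemma map_sum_eq (α : ℝ) (s : Multiset ℕ) :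
    (s.map (fun n => (α : ℂ) ^ n)).sum = ((ev α s : ℝ) : ℂ) := by
  induction s using Multiset.induction with
  | empty => simp [ev]
  | cons a s ih =>
    simp only [Multiset.map_cons, Multiset.sum_cons, ih, ev]
    push_cast
    ring

lemma choose_exponents (α : ℝ) (s : Multiset ℂ)
    (h : ∀ b ∈ s, ∃ e : ℕ, (α : ℂ) ^ e = b) :
    ∃ t : Multiset ℕ, t.map (fun n => (α : ℂ) ^ n) = s := by
  induction s using Multiset.induction with
  | empty => exact ⟨0, rfl⟩
  | cons a s ih =>
    obtain ⟨t, ht⟩ := ih (fun b hb => h b (Multiset.mem_cons_of_mem hb))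
    obtain ⟨e, he⟩ := h a (Multiset.mem_cons_self a s)
    exact ⟨e ::ₘ t, by simp [ht, he]⟩

section Main

variable {α : ℝ} (hα1 : 0 < α) (hα2 : α < 1) (hroot : α ^ 2 - 3 * α + 1 = 0)

include hα1 hα2 hroot

lemma irrational_alpha : Irrational α := by
  have h5 : (3 - 2 * α) ^ 2 = 5 := by nlinarith
  have hsq : 3 - 2 * α = Real.sqrt 5 := by
    rw [show (5:ℝ) = (3 - 2*α)^2 from h5.symm, Real.sqrt_sq (by linarith)]
  have hs : Irrational (Real.sqrt 5) := by
    have h : Nat.Prime 5 := by norm_num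
    simpa using h.irrational_sqrt
  have hα : α = (((3:ℚ):ℝ) - Real.sqrt 5) / ((2:ℚ):ℝ) := by push_cast; linarith
  rw [hα]
  exact (hs.ratCast_sub 3).div_ratCast (by norm_num)

lemma lin_indep {c d : ℤ} (h : (c : ℝ) * α + d = 0) : c = 0 ∧ d = 0 := by
  by_cases hc : c = 0
  · refine ⟨hc, ?_⟩
    rw [hc] at h
    push_cast at h
    have : (d : ℝ) = 0 := by linarith
    exact_mod_cast this
  · exfalso
    have hirr := irrational_alpha hα1 hα2 hroot
    have : α = ((-d / c : ℚ) : ℝ) := by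
      have hc' : (c : ℝ) ≠ 0 := Int.cast_ne_zero.2 hc
      push_cast
      field_simp
      linarith
    exact hirr ⟨_, this.symm⟩

lemma beta_root : (3 - α) ^ 2 - 3 * (3 - α) + 1 = 0 := by nlinarith

lemma conj_ev {s t : Multiset ℕ} (h : ev α s = ev α t) : ev (3 - α) s = ev (3 - α) t := by
  have hβ := beta_root hα1 hα2 hroot
  rw [ev_eq hroot, ev_eq hroot] at h
  have h' : ((evA s - evA t : ℤ) : ℝ) * α + ((evB s - evB t : ℤ) : ℝ) = 0 := by
    push_cast; linarith
  obtain ⟨h1, h2⟩ := lin_indep hα1 hα2 hroot h'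
  have e1 : evA s = evA t := by omega
  have e2 : evB s = evB t := by omega
  rw [ev_eq hβ, ev_eq hβ, e1, e2]

omit hα1 hα2 hroot

lemma mem_iff (x : ℂ) :
    x ∈ Malpha (α : ℂ) ↔ ∃ s : Multiset ℕ, ((ev α s : ℝ) : ℂ) = x := by
  constructor
  · intro hx
    refine AddSubmonoid.closure_induction ?_ ?_ ?_ hx
    · rintro y ⟨n, rfl⟩
      exact ⟨{n}, by simp [ev]⟩
    · exact ⟨0, by simp [ev]⟩
    · rintro y z _ _ ⟨s, rfl⟩ ⟨t, rfl⟩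
      exact ⟨s + t, by rw [ev_add]; push_cast; ring⟩
  · rintro ⟨s, rfl⟩
    induction s using Multiset.induction with
    | empty => simpa [ev] using (Malpha (α:ℂ)).zero_mem
    | cons a s ih =>
      have : ((ev α (a ::ₘ s) : ℝ) : ℂ) = (α : ℂ) ^ a + ((ev α s : ℝ) : ℂ) := by
        simp [ev]
      rw [this]
      exact (Malpha (α:ℂ)).add_mem (AddSubmonoid.subset_closure ⟨a, rfl⟩) ih

include hα1 hα2 hroot

/-- each power of α is an atom -/
lemma pow_mem_atoms (n : ℕ) : (α : ℂ) ^ n ∈ atomsM (α : ℂ) := by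
  have hβ1 : (2:ℝ) < 3 - α := by linarith
  refine ⟨AddSubmonoid.subset_closure ⟨n, rfl⟩,
    pow_ne_zero n (Complex.ofReal_ne_zero.2 hα1.ne'), ?_⟩
  rintro u v hu hv heq
  obtain ⟨s, rfl⟩ := (mem_iff u).1 hu
  obtain ⟨t, rfl⟩ := (mem_iff v).1 hv
  by_contra hcon
  push_neg at hcon
  obtain ⟨hu0, hv0⟩ := hcon
  have hs0 : s ≠ 0 := by
    rintro rfl; simp [ev] at hu0
  have ht0 : t ≠ 0 := by
    rintro rfl; simp [ev] at hv0
  -- real equation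
  have heqR : α ^ n = ev α s + ev α t := by exact_mod_cast heq
  have hsingle : ∀ x : ℝ, ev x ({n} : Multiset ℕ) = x ^ n := by
    intro x; simp [ev]
  have hcomb : ev α (s + t) = ev α ({n} : Multiset ℕ) := by
    rw [ev_add, hsingle]; linarith
  have hβcomb := conj_ev hα1 hα2 hroot hcomb
  rw [ev_add, hsingle] at hβcomb
  have hβn : ev (3 - α) s + ev (3 - α) t = (3 - α) ^ n := hβcomb
  obtain ⟨e, he⟩ := Multiset.exists_mem_of_ne_zero hs0
  have hαe : α ^ e ≤ ev α s := single_le_ev hα1 he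
  have hβe : (3 - α) ^ e ≤ ev (3 - α) s := single_le_ev (by linarith) he
  have htposα : 0 < ev α t := ev_pos hα1 ht0
  have htposβ : 0 < ev (3 - α) t := ev_pos (by linarith) ht0
  have h1 : α ^ e < α ^ n := by linarith
  have h2 : (3 - α) ^ e < (3 - α) ^ n := by linarith
  have hne : n < e := by
    by_contra hne
    push_neg at hne
    exact absurd (pow_le_pow_of_le_one (le_of_lt hα1) (le_of_lt hα2) hne) (not_le.2 h1)
  have hne2 : e < n := by
    by_contra hne2
    push_neg at hne2
    have : (3 - α) ^ n ≤ (3 - α) ^ e := pow_le_pow_right₀ (by linarith) hne2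
    linarith
  omega

lemma atoms_eq : atomsM (α : ℂ) = Set.range (fun n : ℕ => (α : ℂ) ^ n) := by
  ext a
  constructor
  · rintro ⟨hmem, ha0, hatom⟩
    obtain ⟨s, rfl⟩ := (mem_iff a).1 hmem
    have hs0 : s ≠ 0 := by rintro rfl; simp [ev] at ha0
    obtain ⟨e, he⟩ := Multiset.exists_mem_of_ne_zero hs0
    obtain ⟨t, rfl⟩ : ∃ t, s = e ::ₘ t := ⟨s.erase e, (Multiset.cons_erase he).symm⟩
    rcases eq_or_ne t 0 with ht | htne
    · subst ht
      refine ⟨e, ?_⟩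
      simp [ev]
    · exfalso
      have h1 : ((ev α (e ::ₘ t) : ℝ) : ℂ)
          = ((ev α {e} : ℝ) : ℂ) + ((ev α t : ℝ) : ℂ) := by
        have : ev α (e ::ₘ t) = ev α {e} + ev α t := by simp [ev]
        rw [this]; push_cast; ring
      rcases hatom _ _ ((mem_iff _).2 ⟨{e}, rfl⟩) ((mem_iff _).2 ⟨t, rfl⟩) h1 with h | h
      · have hpos : (0:ℝ) < ev α {e} := ev_pos hα1 (by simp)
        have h' : ev α ({e} : Multiset ℕ) = 0 := by exact_mod_cast h
        linarith
      · have hpos : (0:ℝ) < ev α t := ev_pos hα1 htne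
        have h' : ev α t = 0 := by exact_mod_cast h
        linarith
  · rintro ⟨n, rfl⟩
    exact pow_mem_atoms hα1 hα2 hroot n

lemma atomic : IsAtomicMalpha (α : ℂ) := by
  intro x hx hx0
  obtain ⟨s, rfl⟩ := (mem_iff x).1 hx
  refine ⟨s.map (fun n => (α : ℂ) ^ n), ?_, ?_⟩
  · intro a ha
    obtain ⟨n, _, rfl⟩ := Multiset.mem_map.1 ha
    exact pow_mem_atoms hα1 hα2 hroot n
  · exact map_sum_eq α s

lemma atoms_infinite : (atomsM (α : ℂ)).Infinite := by
  rw [atoms_eq hα1 hα2 hroot]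
  apply Set.infinite_range_of_injective
  intro m n hmn
  by_contra hne
  rcases Nat.lt_or_ge m n with h | h
  · have : α ^ n < α ^ m := by
      calc α ^ n ≤ α ^ (m+1) := pow_le_pow_of_le_one hα1.le hα2.le h
      _ < α ^ m := by
        have := pow_pos hα1 m
        calc α ^ (m+1) = α ^ m * α := pow_succ α m
        _ < α ^ m * 1 := by nlinarith
        _ = α ^ m := mul_one _
    have : ((α:ℂ)) ^ n ≠ (α:ℂ) ^ m := by
      intro hc
      have : α ^ n = α ^ m := by exact_mod_cast hc
      linarith
    exact this hmn.symm
  · have hlt : m ≠ n := hne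
    have h' : n < m := lt_of_le_of_ne h (Ne.symm hlt)
    have : α ^ m < α ^ n := by
      calc α ^ m ≤ α ^ (n+1) := pow_le_pow_of_le_one hα1.le hα2.le h'
      _ < α ^ n := by
        have := pow_pos hα1 n
        calc α ^ (n+1) = α ^ n * α := pow_succ α n
        _ < α ^ n * 1 := by nlinarith
        _ = α ^ n := mul_one _
    have : ((α:ℂ)) ^ m ≠ (α:ℂ) ^ n := by
      intro hc
      have : α ^ m = α ^ n := by exact_mod_cast hc
      linarith
    exact this hmn

lemma one_strong : (1 : ℂ) ∈ strongAtomsM (α : ℂ) := by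
  have hβ2 : (2:ℝ) < 3 - α := by linarith
  refine ⟨by simpa using pow_mem_atoms hα1 hα2 hroot 0, ?_⟩
  intro n hn s hs hsum
  have hexp : ∀ b ∈ s, ∃ e : ℕ, (α : ℂ) ^ e = b := by
    intro b hb
    have h := hs b hb
    rw [atoms_eq hα1 hα2 hroot] at h
    exact h
  obtain ⟨t, rfl⟩ := choose_exponents α s hexp
  rw [map_sum_eq] at hsum
  have hsumR : ev α t = (n : ℝ) := by
    have : ((ev α t : ℝ) : ℂ) = ((n : ℝ) : ℂ) := by
      rw [hsum]; push_cast; simp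
    exact_mod_cast this
  -- conjugate equation
  have hrep : ev α (Multiset.replicate n 0) = (n : ℝ) := by
    simp [ev, Multiset.map_replicate, Multiset.sum_replicate]
  have hconj : ev (3 - α) t = (n : ℝ) := by
    have h := conj_ev hα1 hα2 hroot (by rw [hsumR, ← hrep] : ev α t = ev α (Multiset.replicate n 0))
    rw [h]
    simp [ev, Multiset.map_replicate, Multiset.sum_replicate]
  classical
  set t0 := t.filter (fun e => e = 0) with ht0def
  set t1 := t.filter (fun e => ¬ e = 0) with ht1def
  have hsplit : t0 + t1 = t := Multiset.filter_add_not _ t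
  have ht0rep : t0 = Multiset.replicate (Multiset.card t0) 0 := by
    rw [Multiset.eq_replicate]
    refine ⟨rfl, fun b hb => ?_⟩
    rw [ht0def] at hb
    exact (Multiset.mem_filter.1 hb).2
  have hev0 : ev α t0 = (Multiset.card t0 : ℝ) := by
    rw [ht0rep]; simp [ev, Multiset.map_replicate, Multiset.sum_replicate]
  have hev0b : ev (3 - α) t0 = (Multiset.card t0 : ℝ) := by
    rw [ht0rep]; simp [ev, Multiset.map_replicate, Multiset.sum_replicate]
  have ht1z : t1 = 0 := by
    by_contra ht1ne
    have hcard1 : 1 ≤ (Multiset.card t1 : ℝ) := by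
      have : 0 < Multiset.card t1 := Multiset.card_pos.2 ht1ne
      exact_mod_cast this
    have hub : ev α t1 ≤ (Multiset.card t1 : ℝ) * α := by
      have := Multiset.sum_le_card_nsmul (t1.map (fun n => α ^ n)) α ?_
      · simpa [ev, nsmul_eq_mul] using this
      · intro x hx
        obtain ⟨e, he, rfl⟩ := Multiset.mem_map.1 hx
        have heno : ¬ e = 0 := by rw [ht1def] at he; exact (Multiset.mem_filter.1 he).2
        have he1 : 1 ≤ e := Nat.one_le_iff_ne_zero.2 heno
        calc α ^ e ≤ α ^ 1 := pow_le_pow_of_le_one hα1.le hα2.le he1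
        _ = α := pow_one α
    have hlb : (Multiset.card t1 : ℝ) * 2 ≤ ev (3 - α) t1 := by
      have := Multiset.card_nsmul_le_sum (s := t1.map (fun n => (3 - α) ^ n)) (a := (2:ℝ)) ?_
      · simpa [ev, nsmul_eq_mul] using this
      · intro x hx
        obtain ⟨e, he, rfl⟩ := Multiset.mem_map.1 hx
        have he1 : ¬ e = 0 := by rw [ht1def] at he; exact (Multiset.mem_filter.1 he).2
        calc (2:ℝ) ≤ 3 - α := hβ2.le
        _ ≤ (3 - α) ^ e := le_self_pow₀ (by linarith) he1
    have heq1 : ev α t0 + ev α t1 = (n : ℝ) := by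
      rw [← hsumR, ← ev_add, hsplit]
    have heq2 : ev (3 - α) t0 + ev (3 - α) t1 = (n : ℝ) := by
      rw [← hconj, ← ev_add, hsplit]
    have : ev α t1 = ev (3 - α) t1 := by
      rw [hev0] at heq1; rw [hev0b] at heq2; linarith
    nlinarith [this, hub, hlb, hcard1, hα2]
  have htall : t = Multiset.replicate (Multiset.card t) 0 := by
    rw [← hsplit, ht1z, add_zero] at *
    exact ht0rep
  have hcardn : Multiset.card t = n := by
    have : ev α t = (Multiset.card t : ℝ) := by
      rw [htall]
      simp [ev, Multiset.map_replicate, Multiset.sum_replicate, Multiset.card_replicate]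
    rw [hsumR] at this
    exact_mod_cast this.symm
  rw [htall, hcardn, Multiset.map_replicate]
  simp

lemma strong_eq : strongAtomsM (α : ℂ) = {1} := by
  ext a
  simp only [Set.mem_singleton_iff]
  constructor
  · rintro ⟨ha, hstrong⟩
    rw [atoms_eq hα1 hα2 hroot] at ha
    obtain ⟨e, rfl⟩ := ha
    simp only []
    rcases Nat.eq_zero_or_pos e with he0 | hepos
    · rw [he0]; norm_num
    · exfalso
      have hsum3 : ({(α:ℂ) ^ (e-1), (α:ℂ) ^ (e+1)} : Multiset ℂ).sum
          = (3 : ℕ) • (α:ℂ) ^ e := by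
      -- α^(e-1) + α^(e+1) = 3 α^e
        have h3 : α ^ (e-1) + α ^ (e+1) = 3 * α ^ e := by
          have hee : α ^ (e+1) = α ^ (e-1) * α ^ 2 := by
            rw [← pow_add]; congr 1; omega
          have hee2 : α ^ e = α ^ (e-1) * α := by
            rw [← pow_succ]; congr 1; omega
          rw [hee, hee2]
          nlinarith [pow_pos hα1 (e-1)]
        have h3c : ((α:ℂ)) ^ (e-1) + (α:ℂ) ^ (e+1) = 3 * (α:ℂ) ^ e := by
          exact_mod_cast congrArg (fun x : ℝ => (x : ℂ)) h3
        simp only [Multiset.insert_eq_cons, Multiset.sum_cons, Multiset.sum_singleton]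
        rw [h3c]
        push_cast
        ring
      have hmem : ∀ b ∈ ({(α:ℂ) ^ (e-1), (α:ℂ) ^ (e+1)} : Multiset ℂ), b ∈ atomsM (α:ℂ) := by
        intro b hb
        simp only [Multiset.insert_eq_cons, Multiset.mem_cons, Multiset.mem_singleton] at hb
        rcases hb with rfl | rfl
        · exact pow_mem_atoms hα1 hα2 hroot _
        · exact pow_mem_atoms hα1 hα2 hroot _
      have := hstrong 3 (by norm_num) _ hmem hsum3
      have hcard := congrArg Multiset.card this
      simp [Multiset.card_replicate] at hcard
  · rintro rfl
    exact one_strong hα1 hα2 hroot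

end Main
end StmtAux

theorem stmt_0 (α : ℝ) (hα1 : 0 < α) (hα2 : α < 1)
    (hroot : α ^ 2 - 3 * α + 1 = 0) :
    IsAtomicMalpha (α : ℂ) ∧
    atomsM (α : ℂ) = Set.range (fun n : ℕ => (α : ℂ) ^ n) ∧
    (atomsM (α : ℂ)).Infinite ∧
    strongAtomsM (α : ℂ) = {1} := by
  exact ⟨StmtAux.atomic hα1 hα2 hroot, StmtAux.atoms_eq hα1 hα2 hroot,
    StmtAux.atoms_infinite hα1 hα2 hroot, StmtAux.strong_eq hα1 hα2 hroot⟩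
end

section
/- Let α be an algebraic number with minimal polynomial m_α over ℚ. If M_α is finitely generated as an additive monoid and 1 ≤ |S(M_α)| < |A(M_α)|, then there exists a nonzero polynomial f ∈ ℚ[x] with deg f = |S(M_α)| − deg m_α such that the product f·m_α has negative leading coefficient and all of its other coefficients nonnegative. -/
open Polynomial

namespace Stmt1Aux

open Multiset in
/-- value of a multiset of exponents -/
noncomputable def V (α : ℂ) (E : Multiset ℕ) : ℂ := (E.map fun e => α ^ e).sum

lemma V_zero (α : ℂ) : V α 0 = 0 := rfl

lemma V_cons (α : ℂ) (e : ℕ) (E : Multiset ℕ) : V α (e ::ₘ E) = α ^ e + V α E := by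
  simp [V]

lemma V_add (α : ℂ) (E F : Multiset ℕ) : V α (E + F) = V α E + V α F := by
  simp [V]

lemma pow_mem (α : ℂ) (n : ℕ) : α ^ n ∈ Malpha α :=
  AddSubmonoid.subset_closure ⟨n, rfl⟩

lemma V_mem (α : ℂ) (E : Multiset ℕ) : V α E ∈ Malpha α := by
  induction E using Multiset.induction with
  | empty => simpa [V_zero] using (Malpha α).zero_mem
  | cons e E ih => rw [V_cons]; exact (Malpha α).add_mem (pow_mem α e) ih

lemma mem_iff_V (α : ℂ) (x : ℂ) : x ∈ Malpha α ↔ ∃ E : Multiset ℕ, x = V α E := by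
  constructor
  · intro hx
    induction hx using AddSubmonoid.closure_induction with
    | mem y hy => obtain ⟨n, rfl⟩ := hy; exact ⟨{n}, by simp [V]⟩
    | zero => exact ⟨0, rfl⟩
    | add x y _ _ hx hy =>
        obtain ⟨E, rfl⟩ := hx; obtain ⟨F, rfl⟩ := hy
        exact ⟨E + F, (V_add α E F).symm⟩
  · rintro ⟨E, rfl⟩; exact V_mem α E

lemma M_mul (α : ℂ) {x : ℂ} (hx : x ∈ Malpha α) : α * x ∈ Malpha α := by
  obtain ⟨E, rfl⟩ := (mem_iff_V α x).mp hx
  rw [show α * V α E = V α (E.map (· + 1)) by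
    simp only [V, Multiset.map_map, Function.comp]
    rw [← Multiset.sum_map_mul_left]
    congr 1
    exact Multiset.map_congr rfl fun e _ => (pow_succ' α e).symm]
  exact V_mem _ _

section Reduced

variable {α : ℂ} (hred : ∀ x ∈ Malpha α, -x ∈ Malpha α → x = 0)
variable (h0 : α ≠ 0) (h1 : ∀ k : ℕ, k ≠ 0 → α ^ k ≠ 1)

include h0 h1 in
lemma hinj : Function.Injective fun n : ℕ => α ^ n := by
  have key : ∀ i j : ℕ, i < j → α ^ i = α ^ j → False := by
    intro i j hij h
    have : α ^ i * α ^ (j - i) = α ^ i * 1 := by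
      rw [mul_one, ← pow_add]
      rw [show i + (j - i) = j by omega]
      exact h.symm
    have h2 := mul_left_cancel₀ (pow_ne_zero i h0) this
    exact h1 (j - i) (by omega) h2
  intro i j h
  rcases lt_trichotomy i j with hlt | he | hgt
  · exact absurd h (fun hh => key i j hlt hh)
  · exact he
  · exact absurd h.symm (fun hh => key j i hgt hh)

include hred h0 in
lemma V_ne_zero {E : Multiset ℕ} (hE : E ≠ 0) : V α E ≠ 0 := by
  obtain ⟨e, he⟩ := Multiset.exists_mem_of_ne_zero hE
  intro hzero
  rw [← Multiset.cons_erase he, V_cons] at hzero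
  have hmem : -(α ^ e) ∈ Malpha α := by
    rw [show -(α ^ e) = V α (E.erase e) by linear_combination -hzero]
    exact V_mem _ _
  exact pow_ne_zero e h0 (hred _ (pow_mem α e) hmem)

include hred h0 in
lemma atom_pow {a : ℂ} (ha : a ∈ atomsM α) : ∃ e : ℕ, a = α ^ e := by
  obtain ⟨E, rfl⟩ := (mem_iff_V α a).mp ha.1
  by_cases hE : E = 0
  · exact absurd (by simp [hE, V_zero]) ha.2.1
  obtain ⟨e, he⟩ := Multiset.exists_mem_of_ne_zero hE
  by_cases hE' : E.erase e = 0
  · refine ⟨e, ?_⟩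
    rw [← Multiset.cons_erase he, V_cons, hE', V_zero, add_zero]
  · exfalso
    have hdec := ha.2.2 (α ^ e) (V α (E.erase e)) (pow_mem α e) (V_mem _ _)
      (by rw [← V_cons, Multiset.cons_erase he])
    rcases hdec with h | h
    · exact pow_ne_zero e h0 h
    · exact V_ne_zero hred h0 hE' h

include h0 in
lemma pow_not_atom_succ {k : ℕ} (hk : α ^ k ∉ atomsM α) : α ^ (k + 1) ∉ atomsM α := by
  intro hat
  apply hk
  refine ⟨pow_mem α k, pow_ne_zero k h0, ?_⟩
  by_contra hcon
  push_neg at hcon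
  obtain ⟨u, v, hu, hv, heq, hu0, hv0⟩ := hcon
  have := hat.2.2 (α * u) (α * v) (M_mul α hu) (M_mul α hv)
    (by rw [pow_succ', heq, mul_add])
  rcases this with h | h
  · rcases mul_eq_zero.mp h with h' | h'
    · exact h0 h'
    · exact hu0 h'
  · rcases mul_eq_zero.mp h with h' | h'
    · exact h0 h'
    · exact hv0 h'

end Reduced

end Stmt1Aux
namespace Stmt1Aux

open Multiset

/-- multiset of exponents from a count function -/
noncomputable def R (c : ℕ → ℕ) (m : ℕ) : Multiset ℕ :=
  ∑ i ∈ Finset.range m, Multiset.replicate (c i) i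

lemma V_R (α : ℂ) (c : ℕ → ℕ) (m : ℕ) :
    V α (R c m) = ∑ i ∈ Finset.range m, (c i) • α ^ i := by
  classical
  induction m with
  | zero => simp [R, V_zero]
  | succ m ih =>
      rw [R, Finset.sum_range_succ, ← R, V_add, ih, Finset.sum_range_succ]
      congr 1
      simp [V, Multiset.map_replicate, Multiset.sum_replicate]

lemma count_R (c : ℕ → ℕ) (m : ℕ) {j : ℕ} (hj : j < m) : (R c m).count j = c j := by
  classical
  rw [R, Multiset.count_sum']
  have key : ∀ i ∈ Finset.range m, (Multiset.replicate (c i) i).count j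
      = if i = j then c j else 0 := by
    intro i _
    rw [Multiset.count_replicate]
    split_ifs with h
    · rw [h]
    · rfl
  rw [Finset.sum_congr rfl key, Finset.sum_ite_eq' (Finset.range m) j (fun _ => c j)]
  simp [hj]

section Reduced

variable {α : ℂ} (hred : ∀ x ∈ Malpha α, -x ∈ Malpha α → x = 0)
variable (h0 : α ≠ 0)

include hred h0 in
lemma nzero_sum {c : ℕ → ℕ} {m : ℕ}
    (h : ∑ i ∈ Finset.range m, (c i) • α ^ i = 0) : ∀ i < m, c i = 0 := by
  intro i hi
  have hR : R c m = 0 := by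
    by_contra hne
    exact V_ne_zero hred h0 hne (by rw [V_R]; exact h)
  have := count_R c m hi
  rw [hR] at this
  simpa using this.symm

end Reduced

/-- common-denominator scaling of a nonneg rational vector -/
lemma qscale (w : ℕ → ℚ) (hw : ∀ i, 0 ≤ w i) :
    ∀ m : ℕ, ∃ D : ℕ, 0 < D ∧ ∃ c : ℕ → ℕ, ∀ i < m, (c i : ℚ) = D * w i := by
  intro m
  induction m with
  | zero => exact ⟨1, one_pos, fun _ => 0, by omega⟩
  | succ m ih =>
      obtain ⟨D, hD, c, hc⟩ := ih
      set q := w m with hq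
      refine ⟨D * q.den, by positivity, fun i => if i = m then (q.num.toNat) * D else c i * q.den, ?_⟩
      intro i hi
      by_cases heq : i = m
      · subst heq
        beta_reduce
        rw [if_pos rfl]
        have hnum : (q.num.toNat : ℚ) = (q.num : ℚ) := by
          exact_mod_cast Int.toNat_of_nonneg (Rat.num_nonneg.mpr (hw i))
        push_cast
        rw [hnum, ← hq]
        linear_combination (-(D : ℚ)) * Rat.mul_den_eq_num q
      · have hlt : i < m := by omega
        beta_reduce
        rw [if_neg heq]
        push_cast
        rw [hc i hlt]; ring

/-- rational-coefficient combination of powers -/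
noncomputable def CS (α : ℂ) (w : ℕ → ℚ) (m : ℕ) : ℂ :=
  ∑ i ∈ Finset.range m, (w i : ℂ) * α ^ i

lemma CS_drop (α : ℂ) {w : ℕ → ℚ} {m n : ℕ} (hmn : m ≤ n) (hw : ∀ i, m ≤ i → w i = 0) :
    CS α w n = CS α w m := by
  rw [CS, CS]
  refine (Finset.sum_subset (Finset.range_subset_range.mpr hmn) ?_).symm
  intro i _ hi
  rw [hw i (by simpa using hi)]
  simp

section Reduced2

variable {α : ℂ} (hred : ∀ x ∈ Malpha α, -x ∈ Malpha α → x = 0)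
variable (h0 : α ≠ 0)

include hred h0 in
lemma qzero_sum {w : ℕ → ℚ} {m : ℕ} (hw : ∀ i, 0 ≤ w i)
    (h : CS α w m = 0) : ∀ i < m, w i = 0 := by
  obtain ⟨D, hD, c, hc⟩ := qscale w hw m
  have hsum : ∑ i ∈ Finset.range m, (c i) • α ^ i = 0 := by
    have : ∑ i ∈ Finset.range m, (c i) • α ^ i = (D : ℂ) * CS α w m := by
      rw [CS, Finset.mul_sum]
      refine Finset.sum_congr rfl fun i hi => ?_
      rw [nsmul_eq_mul, ← mul_assoc]
      congr 1
      exact_mod_cast hc i (Finset.mem_range.mp hi)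
    rw [this, h, mul_zero]
  intro i hi
  have hci := nzero_sum hred h0 hsum i hi
  have := hc i hi
  rw [hci] at this
  have : (D : ℚ) * w i = 0 := by exact_mod_cast this.symm
  rcases mul_eq_zero.mp this with h' | h'
  · exact absurd h' (by positivity)
  · exact h'

end Reduced2

end Stmt1Aux
namespace Stmt1Aux

open Multiset

lemma brep {α : ℂ} (hfg : (Malpha α).FG) :
    ∃ K : ℕ, ∀ x ∈ Malpha α, ∃ E : Multiset ℕ, (∀ e ∈ E, e < K) ∧ x = V α E := by
  classical
  obtain ⟨G, hG⟩ := hfg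
  have hgen : ∀ (G' : Finset ℂ), (∀ g ∈ G', g ∈ Malpha α) →
      ∃ K : ℕ, ∀ g ∈ G', ∃ E : Multiset ℕ, (∀ e ∈ E, e < K) ∧ g = V α E := by
    intro G'
    induction G' using Finset.induction with
    | empty => exact fun _ => ⟨0, by simp⟩
    | @insert a s ha ih =>
        intro hmem
        obtain ⟨K₁, hK₁⟩ := ih (fun g hg => hmem g (Finset.mem_insert_of_mem hg))
        obtain ⟨E₀, hE₀⟩ := (mem_iff_V α a).mp (hmem a (Finset.mem_insert_self a s))
        refine ⟨max K₁ (E₀.sum + 1), ?_⟩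
        intro g hg
        rcases Finset.mem_insert.mp hg with rfl | hg'
        · refine ⟨E₀, fun e he => ?_, hE₀⟩
          have := Multiset.single_le_sum (fun x _ => Nat.zero_le x) e he
          omega
        · obtain ⟨E, hEb, hEv⟩ := hK₁ g hg'
          exact ⟨E, fun e he => lt_of_lt_of_le (hEb e he) (le_max_left _ _), hEv⟩
  obtain ⟨K, hK⟩ := hgen G (fun g hg => by rw [← hG]; exact AddSubmonoid.subset_closure hg)
  refine ⟨K, ?_⟩
  intro x hx
  rw [← hG] at hx
  induction hx using AddSubmonoid.closure_induction with
  | mem y hy => exact hK y hy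
  | zero => exact ⟨0, by simp, rfl⟩
  | add x y _ _ hx hy =>
      obtain ⟨E, hEb, rfl⟩ := hx; obtain ⟨F, hFb, rfl⟩ := hy
      refine ⟨E + F, fun e he => ?_, (V_add α E F).symm⟩
      rcases Multiset.mem_add.mp he with h | h
      exacts [hEb e h, hFb e h]

section NLayer

variable {α : ℂ} (hred : ∀ x ∈ Malpha α, -x ∈ Malpha α → x = 0)
variable (h0 : α ≠ 0) (h1 : ∀ k : ℕ, k ≠ 0 → α ^ k ≠ 1)

include hred h0 h1 in
lemma exists_nonatom (hfg : (Malpha α).FG) : ∃ k : ℕ, α ^ k ∉ atomsM α := by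
  obtain ⟨K, hK⟩ := brep hfg
  obtain ⟨E, hEb, hEv⟩ := hK (α ^ K) (pow_mem α K)
  by_cases hE : E = 0
  · rw [hE, V_zero] at hEv
    exact absurd hEv (pow_ne_zero K h0)
  obtain ⟨e, he⟩ := Multiset.exists_mem_of_ne_zero hE
  by_cases hE' : E.erase e = 0
  · exfalso
    have hKe : α ^ K = α ^ e := by
      rw [hEv, ← Multiset.cons_erase he, V_cons, hE', V_zero, add_zero]
    have := hinj h0 h1 hKe
    have hlt := hEb e he
    omega
  · refine ⟨K, fun hat => ?_⟩
    have := hat.2.2 (α ^ e) (V α (E.erase e)) (pow_mem α e) (V_mem _ _)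
      (by rw [hEv, ← V_cons, Multiset.cons_erase he])
    rcases this with h | h
    · exact pow_ne_zero e h0 h
    · exact V_ne_zero hred h0 hE' h

variable (N : ℕ) (hNa : ∀ i, i < N → α ^ i ∈ atomsM α) (hNn : α ^ N ∉ atomsM α)

include h0 hNn in
lemma not_atom_of_ge : ∀ j, N ≤ j → α ^ j ∉ atomsM α := by
  intro j hj
  induction j, hj using Nat.le_induction with
  | base => exact hNn
  | succ j hj ih => exact pow_not_atom_succ h0 ih

include hred h0 h1 hNa hNn in
lemma atoms_eq : atomsM α = (fun i : ℕ => α ^ i) '' Set.Iio N := by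
  ext a
  constructor
  · intro ha
    obtain ⟨e, rfl⟩ := atom_pow hred h0 ha
    refine ⟨e, ?_, rfl⟩
    simp only [Set.mem_Iio]
    by_contra hge
    exact not_atom_of_ge h0 N hNn e (by omega) ha
  · rintro ⟨e, he, rfl⟩
    exact hNa e he

end NLayer

section Atomic

variable {α : ℂ} (hred : ∀ x ∈ Malpha α, -x ∈ Malpha α → x = 0) (h0 : α ≠ 0)

include hred h0 in
lemma atomic (hfg : (Malpha α).FG) :
    ∀ x ∈ Malpha α, ∃ s : Multiset ℂ, (∀ a ∈ s, a ∈ atomsM α) ∧ s.sum = x := by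
  classical
  obtain ⟨K, hK⟩ := brep hfg
  set Good : ℂ → Prop := fun x => ∃ s : Multiset ℂ, (∀ a ∈ s, a ∈ atomsM α) ∧ s.sum = x
    with hGoodDef
  by_contra hbad
  push_neg at hbad
  obtain ⟨x₀, hmem, hng⟩ := hbad
  have hng : ¬ Good x₀ := by
    rw [hGoodDef]
    intro ⟨s, hs1, hs2⟩
    exact (hng s hs1) hs2
  have step : ∀ x, x ∈ Malpha α → ¬ Good x →
      ∃ p : ℂ × ℂ, (p.1 ∈ Malpha α ∧ ¬ Good p.1) ∧ p.2 ∈ Malpha α ∧ p.2 ≠ 0 ∧ x = p.1 + p.2 := by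
    intro x hx hngx
    have hx0 : x ≠ 0 := fun h => hngx ⟨0, by simp, by simp [h]⟩
    have hnat : x ∉ atomsM α := fun hat => hngx ⟨{x}, by simpa using hat, by simp⟩
    have hdec : ¬ (∀ u v : ℂ, u ∈ Malpha α → v ∈ Malpha α → x = u + v → u = 0 ∨ v = 0) :=
      fun hall => hnat ⟨hx, hx0, hall⟩
    push_neg at hdec
    obtain ⟨u, v, hu, hv, heq, hu0, hv0⟩ := hdec
    by_cases hgu : Good u
    · by_cases hgv : Good v
      · exfalso
        obtain ⟨s₁, hs₁, hs₁s⟩ := hgu; obtain ⟨s₂, hs₂, hs₂s⟩ := hgv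
        refine hngx ⟨s₁ + s₂, fun a ha => ?_, ?_⟩
        · rcases Multiset.mem_add.mp ha with h | h
          exacts [hs₁ a h, hs₂ a h]
        · rw [Multiset.sum_add, hs₁s, hs₂s, heq]
      · exact ⟨(v, u), ⟨hv, hgv⟩, hu, hu0, by rw [heq, add_comm]⟩
    · exact ⟨(u, v), ⟨hu, hgu⟩, hv, hv0, heq⟩
  let nxt : {x : ℂ // x ∈ Malpha α ∧ ¬ Good x} → {x : ℂ // x ∈ Malpha α ∧ ¬ Good x} :=
    fun p => ⟨(step p.1 p.2.1 p.2.2).choose.1, (step p.1 p.2.1 p.2.2).choose_spec.1⟩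
  let F : ℕ → {x : ℂ // x ∈ Malpha α ∧ ¬ Good x} :=
    fun n => Nat.rec ⟨x₀, hmem, hng⟩ (fun _ p => nxt p) n
  have hFs : ∀ n, F (n + 1) = nxt (F n) := fun n => rfl
  have hlink : ∀ n, ∃ z, z ∈ Malpha α ∧ z ≠ 0 ∧ (F n).1 = (F (n + 1)).1 + z := by
    intro n
    obtain ⟨hA, hB, hC, hD⟩ := (step (F n).1 (F n).2.1 (F n).2.2).choose_spec
    exact ⟨_, hB, hC, by rw [hFs n]; exact hD⟩
  have hchain : ∀ n m, n ≤ m → ∃ Y, Y ∈ Malpha α ∧ (n < m → Y ≠ 0) ∧ (F n).1 = (F m).1 + Y := by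
    intro n m hnm
    induction m, hnm using Nat.le_induction with
    | base => exact ⟨0, (Malpha α).zero_mem, fun h => absurd h (lt_irrefl n), by simp⟩
    | succ m hm ih =>
        obtain ⟨Y, hY, hY0, hYe⟩ := ih
        obtain ⟨z, hz, hz0, hze⟩ := hlink m
        refine ⟨z + Y, (Malpha α).add_mem hz hY, fun _ hzY => ?_, by rw [hYe, hze]; ring⟩
        exact hz0 (hred z hz (by rw [show -z = Y by linear_combination -hzY]; exact hY))
  have hEx : ∀ n, ∃ E : Multiset ℕ, (∀ e ∈ E, e < K) ∧ (F n).1 = V α E :=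
    fun n => hK _ (F n).2.1
  choose Es hEb hEv using hEx
  have hpwo : WellQuasiOrdered ((· ≤ ·) : (Fin K → ℕ) → (Fin K → ℕ) → Prop) :=
    WellQuasiOrderedLE.wqo
  obtain ⟨n, m, hnm, hle⟩ := hpwo (fun n (i : Fin K) => (Es n).count i.val)
  have hEle : Es n ≤ Es m := by
    rw [Multiset.le_iff_count]
    intro a
    by_cases ha : a < K
    · exact hle ⟨a, ha⟩
    · have hnot : a ∉ Es n := fun h => ha (hEb n a h)
      simp [Multiset.count_eq_zero_of_notMem hnot]
  have hsplit : (F m).1 = (F n).1 + V α (Es m - Es n) := by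
    rw [hEv m, hEv n, ← V_add, add_comm, tsub_add_cancel_of_le hEle]
  obtain ⟨Y, hY, hY0, hYe⟩ := hchain n m (le_of_lt hnm)
  have hzero : V α (Es m - Es n) + Y = 0 := by
    rw [hsplit] at hYe
    linear_combination -hYe
  exact (hY0 hnm) (hred Y hY (by
    rw [show -Y = V α (Es m - Es n) by linear_combination -hzero]; exact V_mem _ _))

end Atomic

end Stmt1Aux
namespace Stmt1Aux

open Multiset

lemma msum_sum {ι : Type*} (r : Finset ι) (f : ι → Multiset ℂ) :
    (∑ i ∈ r, f i).sum = ∑ i ∈ r, (f i).sum := by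
  classical
  induction r using Finset.induction with
  | empty => simp
  | @insert a s ha ih => rw [Finset.sum_insert ha, Multiset.sum_add, ih, Finset.sum_insert ha]

section SLayer

variable {α : ℂ} (hred : ∀ x ∈ Malpha α, -x ∈ Malpha α → x = 0)
variable (h0 : α ≠ 0) (h1 : ∀ k : ℕ, k ≠ 0 → α ^ k ≠ 1)
variable (N : ℕ) (hNa : ∀ i, i < N → α ^ i ∈ atomsM α) (hNn : α ^ N ∉ atomsM α)

include hred h0 hNn in
lemma atom_pow_lt {a : ℂ} (ha : a ∈ atomsM α) : ∃ e, e < N ∧ a = α ^ e := by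
  obtain ⟨e, rfl⟩ := atom_pow hred h0 ha
  refine ⟨e, ?_, rfl⟩
  by_contra hh
  exact not_atom_of_ge h0 N hNn e (by omega) ha

include h0 h1 in
lemma count_repl_sum (c : ℕ → ℕ) {j : ℕ} (hj : j < N) :
    (∑ i ∈ Finset.range N, Multiset.replicate (c i) (α ^ i)).count (α ^ j) = c j := by
  classical
  rw [Multiset.count_sum']
  have key : ∀ i ∈ Finset.range N, (Multiset.replicate (c i) (α ^ i)).count (α ^ j)
      = if i = j then c j else 0 := by
    intro i _
    rw [Multiset.count_replicate]
    by_cases hij : i = j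
    · subst hij; simp
    · rw [if_neg (fun hpow => hij (hinj h0 h1 hpow)), if_neg hij]
  rw [Finset.sum_congr rfl key, Finset.sum_ite_eq' (Finset.range N) j (fun _ => c j)]
  simp [hj]

include hred h0 h1 hNn in
lemma s_decomp {s : Multiset ℂ} (hs : ∀ b ∈ s, b ∈ atomsM α) :
    s = ∑ i ∈ Finset.range N, Multiset.replicate (s.count (α ^ i)) (α ^ i) := by
  classical
  ext b
  by_cases hb : ∃ j, j < N ∧ b = α ^ j
  · obtain ⟨j, hj, rfl⟩ := hb
    rw [count_repl_sum h0 h1 N _ hj]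
  · push_neg at hb
    have hbs : b ∉ s := by
      intro hmem
      obtain ⟨e, he, hbe⟩ := atom_pow_lt hred h0 N hNn (hs b hmem)
      exact hb e he hbe
    rw [Multiset.count_eq_zero_of_notMem hbs, Multiset.count_sum']
    symm; apply Finset.sum_eq_zero
    intro i hi
    rw [Multiset.count_replicate, if_neg (fun h => hb i (Finset.mem_range.mp hi) h.symm)]

include hred h0 h1 hNn in
lemma s_sum_counts {s : Multiset ℂ} (hs : ∀ b ∈ s, b ∈ atomsM α) :
    s.sum = ∑ i ∈ Finset.range N, s.count (α ^ i) • α ^ i := by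
  conv_lhs => rw [s_decomp hred h0 h1 N hNn hs]
  rw [msum_sum]
  exact Finset.sum_congr rfl fun i _ => Multiset.sum_replicate _ _

include hred h0 h1 hNa hNn in
lemma notStrong_of {u : ℕ} (hu : u < N) {n : ℕ} (hn : 0 < n) (c : ℕ → ℕ)
    (hsum : ∑ i ∈ Finset.range N, c i • α ^ i = n • α ^ u)
    (hne : ¬ ∀ i, i < N → c i = if i = u then n else 0) :
    α ^ u ∉ strongAtomsM α := by
  classical
  intro hstrong
  set s : Multiset ℂ := ∑ i ∈ Finset.range N, Multiset.replicate (c i) (α ^ i) with hsdef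
  have hmem : ∀ b ∈ s, b ∈ atomsM α := by
    intro b hb
    rw [hsdef, Multiset.mem_sum] at hb
    obtain ⟨i, hi, hbi⟩ := hb
    rw [Multiset.eq_of_mem_replicate hbi]
    exact hNa i (Finset.mem_range.mp hi)
  have hssum : s.sum = n • α ^ u := by
    rw [hsdef, msum_sum, Finset.sum_congr rfl fun i _ => Multiset.sum_replicate _ _, hsum]
  have hrep := hstrong.2 n hn s hmem hssum
  apply hne
  intro j hj
  have hcount : s.count (α ^ j) = c j := by
    rw [hsdef]; exact count_repl_sum h0 h1 N c hj
  rw [hrep, Multiset.count_replicate] at hcount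
  by_cases hju : j = u
  · subst hju
    rw [if_pos rfl] at hcount
    rw [if_pos rfl, ← hcount]
  · rw [if_neg (fun hpow => hju (hinj h0 h1 hpow.symm))] at hcount
    rw [if_neg hju, ← hcount]

include hred h0 h1 hNa hNn in
lemma strong_witness {u : ℕ} (hu : u < N) (hns : α ^ u ∉ strongAtomsM α) :
    ∃ n : ℕ, 0 < n ∧ ∃ c : ℕ → ℕ,
      (∑ i ∈ Finset.range N, c i • α ^ i = n • α ^ u) ∧
      ¬ ∀ i, i < N → c i = if i = u then n else 0 := by
  classical
  have hat : α ^ u ∈ atomsM α := hNa u hu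
  have hnall : ¬ ∀ n : ℕ, 0 < n → ∀ s : Multiset ℂ, (∀ b ∈ s, b ∈ atomsM α) →
      s.sum = n • α ^ u → s = Multiset.replicate n (α ^ u) := fun hall => hns ⟨hat, hall⟩
  push_neg at hnall
  obtain ⟨n, hn, s, hsa, hssum, hsne⟩ := hnall
  refine ⟨n, hn, fun i => s.count (α ^ i), ?_, ?_⟩
  · rw [← s_sum_counts hred h0 h1 N hNn hsa]; exact hssum
  · intro hall
    beta_reduce at hall
    apply hsne
    rw [s_decomp hred h0 h1 N hNn hsa]
    have key : ∀ i ∈ Finset.range N, Multiset.replicate (s.count (α ^ i)) (α ^ i)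
        = if i = u then Multiset.replicate n (α ^ u) else 0 := by
      intro i hi
      rw [hall i (Finset.mem_range.mp hi)]
      by_cases hiu : i = u
      · subst hiu; simp
      · simp [hiu]
    rw [Finset.sum_congr rfl key, Finset.sum_ite_eq' (Finset.range N) u _]
    simp [Finset.mem_range.mpr hu]

include hred h0 h1 hNa hNn in
lemma lemma_up (sN : Multiset ℂ) (hsNa : ∀ b ∈ sN, b ∈ atomsM α) (hsNs : sN.sum = α ^ N)
    {u : ℕ} (hu1 : u + 1 < N) (hns : α ^ u ∉ strongAtomsM α) :
    α ^ (u + 1) ∉ strongAtomsM α := by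
  classical
  have hu : u < N := by omega
  have hat : α ^ u ∈ atomsM α := hNa u hu
  have hnall : ¬ ∀ n : ℕ, 0 < n → ∀ s : Multiset ℂ, (∀ b ∈ s, b ∈ atomsM α) →
      s.sum = n • α ^ u → s = Multiset.replicate n (α ^ u) := fun hall => hns ⟨hat, hall⟩
  push_neg at hnall
  obtain ⟨n, hn, s, hsa, hssum, hsne⟩ := hnall
  intro hstrong
  set step : ℂ → Multiset ℂ := fun a => if α * a ∈ atomsM α then {α * a} else sN with hstep
  have hcard2 : 2 ≤ Multiset.card sN := by
    by_contra hc
    push_neg at hc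
    have : Multiset.card sN = 0 ∨ Multiset.card sN = 1 := by omega
    rcases this with h | h
    · rw [Multiset.card_eq_zero] at h
      rw [h, Multiset.sum_zero] at hsNs
      exact pow_ne_zero N h0 hsNs.symm
    · rw [Multiset.card_eq_one] at h
      obtain ⟨a, rfl⟩ := h
      obtain ⟨e, he, rfl⟩ := atom_pow_lt hred h0 N hNn (hsNa a (by simp))
      rw [Multiset.sum_singleton] at hsNs
      have := hinj h0 h1 hsNs
      omega
  have hstep_sum : ∀ a ∈ s, (step a).sum = α * a := by
    intro a ha
    by_cases hat' : α * a ∈ atomsM α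
    · simp only [hstep, if_pos hat', Multiset.sum_singleton]
    · simp only [hstep, if_neg hat']
      obtain ⟨e, he, rfl⟩ := atom_pow_lt hred h0 N hNn (hsa a ha)
      have hsucc : α * α ^ e = α ^ (e + 1) := (pow_succ' α e).symm
      have heN : e + 1 = N := by
        by_contra hne2
        exact hat' (hsucc ▸ hNa (e + 1) (by omega))
      rw [hsNs, hsucc, heN]
  have hs'a : ∀ b ∈ s.bind step, b ∈ atomsM α := by
    intro b hb
    obtain ⟨a, ha, hba⟩ := Multiset.mem_bind.mp hb
    by_cases hat' : α * a ∈ atomsM α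
    · simp only [hstep, if_pos hat', Multiset.mem_singleton] at hba; rwa [hba]
    · simp only [hstep, if_neg hat'] at hba; exact hsNa b hba
  have hs'sum : (s.bind step).sum = n • α ^ (u + 1) := by
    rw [Multiset.sum_bind, Multiset.map_congr rfl hstep_sum]
    have hmul : (s.map fun x => α * x).sum = α * s.sum := by
      have := Multiset.sum_map_mul_left (a := α) (s := s) (f := fun x => x)
      simpa using this
    rw [hmul, hssum, nsmul_eq_mul, nsmul_eq_mul, pow_succ']
    ring
  have hrep := hstrong.2 n hn (s.bind step) hs'a hs'sum
  have hall : ∀ a ∈ s, a = α ^ u := by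
    intro a ha
    obtain ⟨e, he, rfl⟩ := atom_pow_lt hred h0 N hNn (hsa a ha)
    by_cases hat' : α * α ^ e ∈ atomsM α
    · have hmm : α * α ^ e ∈ s.bind step :=
        Multiset.mem_bind.mpr ⟨_, ha, by simp only [hstep, if_pos hat', Multiset.mem_singleton]⟩
      have heq := Multiset.eq_of_mem_replicate (hrep ▸ hmm)
      rw [← pow_succ'] at heq
      have := hinj h0 h1 heq
      have heu : e = u := by omega
      rw [heu]
    · exfalso
      have hsub : ∀ b ∈ sN, b = α ^ (u + 1) := by
        intro b hb
        have hmm : b ∈ s.bind step :=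
          Multiset.mem_bind.mpr ⟨_, ha, by simp only [hstep, if_neg hat']; exact hb⟩
        exact Multiset.eq_of_mem_replicate (hrep ▸ hmm)
      have hrepN : sN = Multiset.replicate sN.card (α ^ (u + 1)) :=
        Multiset.eq_replicate_card.mpr hsub
      have hNsum : α ^ N = (sN.card) • α ^ (u + 1) := by
        conv_lhs => rw [← hsNs, hrepN]
        rw [Multiset.sum_replicate]
      have hN1 : α ^ (N - 1) = sN.card • α ^ u := by
        apply mul_left_cancel₀ h0
        calc α * α ^ (N - 1) = α ^ N := by rw [← pow_succ']; congr 1; omega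
        _ = sN.card • α ^ (u + 1) := hNsum
        _ = α * (sN.card • α ^ u) := by rw [nsmul_eq_mul, nsmul_eq_mul, pow_succ']; ring
      have hatomN1 : α ^ (N - 1) ∈ atomsM α := hNa _ (by omega)
      have hdec := hatomN1.2.2 (α ^ u) ((sN.card - 1) • α ^ u) (pow_mem α u)
        ((Malpha α).nsmul_mem (pow_mem α u) _)
        (by rw [hN1, nsmul_eq_mul, nsmul_eq_mul,
              Nat.cast_sub (by omega : 1 ≤ Multiset.card sN)]; ring)
      rcases hdec with h | h
      · exact pow_ne_zero u h0 h
      · rw [nsmul_eq_mul] at h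
        rcases mul_eq_zero.mp h with h' | h'
        · have : (sN.card - 1 : ℕ) = 0 := by exact_mod_cast h'
          omega
        · exact pow_ne_zero u h0 h'
  have hs_rep : s = Multiset.replicate s.card (α ^ u) := Multiset.eq_replicate_card.mpr hall
  have hcard : s.card = n := by
    have hcc : (s.card : ℂ) * α ^ u = (n : ℂ) * α ^ u := by
      rw [← nsmul_eq_mul, ← nsmul_eq_mul, ← Multiset.sum_replicate, ← hs_rep, hssum]
    have := mul_right_cancel₀ (pow_ne_zero u h0) hcc
    exact_mod_cast this
  exact hsne (by rw [hs_rep, hcard])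

end SLayer

end Stmt1Aux
namespace Stmt1Aux

lemma exists_ratproj : ∃ ℓ : ℂ →ₗ[ℚ] ℚ, ∀ q : ℚ, ℓ (q : ℂ) = q := by
  classical
  obtain ⟨U, hU⟩ := Submodule.exists_isCompl (Submodule.span ℚ {(1 : ℂ)})
  set W : Submodule ℚ ℂ := Submodule.span ℚ {(1 : ℂ)} with hW
  set p := W.linearProjOfIsCompl U hU with hp
  have huniq : ∀ w : W, ∃! r : ℚ, (w : ℂ) = r • (1 : ℂ) := by
    intro w
    obtain ⟨r, hr⟩ := Submodule.mem_span_singleton.mp w.2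
    refine ⟨r, hr.symm, ?_⟩
    intro r' hr'
    have hc : (r' : ℂ) = (r : ℂ) := by
      rw [← mul_one (r' : ℂ), ← mul_one (r : ℂ), ← Rat.smul_def, ← Rat.smul_def, ← hr', hr]
    exact_mod_cast hc
  choose co hco hcu using huniq
  have hadd : ∀ w w' : W, co (w + w') = co w + co w' := by
    intro w w'
    refine (hcu (w + w') (co w + co w') ?_).symm
    push_cast
    rw [hco w, hco w', add_smul]
  have hsmul : ∀ (q : ℚ) (w : W), co (q • w) = q * co w := by
    intro q w
    refine (hcu (q • w) (q * co w) ?_).symm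
    have : ((q • w : W) : ℂ) = q • (w : ℂ) := rfl
    rw [this, hco w, smul_smul]
  refine ⟨{ toFun := fun x => co (p x), map_add' := ?_, map_smul' := ?_ }, ?_⟩
  · intro x y; beta_reduce; rw [map_add, hadd]
  · intro q x
    show co (p (q • x)) = (RingHom.id ℚ) q • co (p x)
    rw [map_smul, hsmul]
    simp
  · intro q
    have hqW : (q : ℂ) ∈ W := Submodule.mem_span_singleton.mpr ⟨q, by simp [Rat.smul_def]⟩
    have hpq : p (q : ℂ) = ⟨(q : ℂ), hqW⟩ :=
      Submodule.linearProjOfIsCompl_apply_left hU ⟨(q : ℂ), hqW⟩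
    show co (p (q : ℂ)) = q
    rw [hpq]
    exact (hcu ⟨(q : ℂ), hqW⟩ q (by simp [Rat.smul_def])).symm

lemma int_of_pow_rat {α : ℂ} (hfg : (Malpha α).FG) {r : ℕ} (hr : r ≠ 0) {q : ℚ}
    (hq : α ^ r = (q : ℂ)) : q.den = 1 := by
  classical
  obtain ⟨ℓ, hℓ⟩ := exists_ratproj
  obtain ⟨G, hG⟩ := hfg
  set D : ℕ := ∏ g ∈ G, (ℓ g).den with hD
  have hD0 : 0 < D := Finset.prod_pos fun g _ => (ℓ g).den_pos
  have hmap : ∀ x ∈ Malpha α, ℓ x ∈ AddSubmonoid.closure (⇑ℓ '' ↑G) := by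
    intro x hx
    have hmem : ℓ x ∈ AddSubmonoid.map ℓ.toAddMonoidHom (AddSubmonoid.closure ↑G) :=
      ⟨x, by rw [hG]; exact hx, rfl⟩
    rwa [AddMonoidHom.map_mclosure] at hmem
  let T : AddSubmonoid ℚ :=
    { carrier := {y : ℚ | ∃ z : ℤ, (D : ℚ) * y = (z : ℚ)}
      zero_mem' := ⟨0, by simp⟩
      add_mem' := by
        rintro a b ⟨za, hza⟩ ⟨zb, hzb⟩
        exact ⟨za + zb, by push_cast; rw [mul_add, hza, hzb]⟩ }
  have hTG : AddSubmonoid.closure (⇑ℓ '' ↑G) ≤ T := by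
    rw [AddSubmonoid.closure_le]
    rintro y ⟨g, hg, rfl⟩
    obtain ⟨k, hk⟩ := Finset.dvd_prod_of_mem (fun g => (ℓ g).den) hg
    refine ⟨(ℓ g).num * k, ?_⟩
    rw [hD, hk]
    push_cast
    linear_combination (k : ℚ) * Rat.mul_den_eq_num (ℓ g)
  have key : ∀ a : ℕ, ∃ z : ℤ, (D : ℚ) * q ^ a = (z : ℚ) := by
    intro a
    have hmem : ((q ^ a : ℚ) : ℂ) ∈ Malpha α := by
      push_cast
      rw [← hq, ← pow_mul]
      exact pow_mem α (r * a)
    have := hTG (hmap _ hmem)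
    rwa [hℓ] at this
  by_contra hden
  have hden2 : 2 ≤ q.den := by
    have := q.den_pos
    omega
  obtain ⟨z, hz⟩ := key D
  have h2 : (D : ℚ) * ((q ^ D).num : ℚ) = (z : ℚ) * ((q ^ D).den : ℚ) := by
    have h3 := Rat.mul_den_eq_num (q ^ D)
    linear_combination ((q ^ D).den : ℚ) * hz - (D : ℚ) * h3 + (D:ℚ) * h3 + ((q ^ D).den : ℚ) * 0 - ((q ^ D).den : ℚ) * hz + ((q ^ D).den : ℚ) * hz - (D : ℚ) * h3
  have heq : (D : ℤ) * (q ^ D).num = z * ((q ^ D).den : ℤ) := by exact_mod_cast h2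
  have hdvd : ((q ^ D).den : ℤ) ∣ (D : ℤ) * (q ^ D).num := ⟨z, by rw [heq, mul_comm]⟩
  have hcop : IsCoprime (((q ^ D).den : ℤ)) (q ^ D).num := by
    rw [Int.isCoprime_iff_gcd_eq_one]
    show (((q ^ D).den : ℤ)).natAbs.gcd ((q ^ D).num).natAbs = 1
    rw [Int.natAbs_natCast]
    exact ((q ^ D).reduced).symm
  have hdvd2 : ((q ^ D).den : ℤ) ∣ (D : ℤ) := hcop.dvd_of_dvd_mul_right hdvd
  have hdvdN : (q ^ D).den ∣ D := Int.ofNat_dvd.mp hdvd2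
  have hpowle : q.den ^ D ≤ D := Nat.le_of_dvd hD0 (by rw [← Rat.den_pow]; exact hdvdN)
  have h2D : D < 2 ^ D := Nat.lt_pow_self (by omega)
  have hle : (2 : ℕ) ^ D ≤ q.den ^ D := Nat.pow_le_pow_left hden2 D
  omega

end Stmt1Aux
namespace Stmt1Aux

section Prune

variable {α : ℂ} (hred : ∀ x ∈ Malpha α, -x ∈ Malpha α → x = 0)
variable (h0 : α ≠ 0) (h1 : ∀ k : ℕ, k ≠ 0 → α ^ k ≠ 1)
variable (N : ℕ) (hNa : ∀ i, i < N → α ^ i ∈ atomsM α) (hNn : α ^ N ∉ atomsM α)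

include hred h0 h1 hNa hNn in
lemma wit_rat {u : ℕ} (hu : u < N) (hns : α ^ u ∉ strongAtomsM α) :
    ∃ w : ℕ → ℚ, (∀ i, 0 ≤ w i) ∧ w u = 0 ∧ (∀ i, N ≤ i → w i = 0) ∧ α ^ u = CS α w N := by
  classical
  obtain ⟨n, hn, c, hsum, hne⟩ := strong_witness hred h0 h1 N hNa hNn hu hns
  have hmemu : u ∈ Finset.range N := Finset.mem_range.mpr hu
  have hcu : c u < n := by
    by_contra hge
    push_neg at hge
    apply hne
    set c' : ℕ → ℕ := fun i => if i = u then c i - n else c i with hc'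
    have hsame : ∑ i ∈ (Finset.range N).erase u, c' i • α ^ i
        = ∑ i ∈ (Finset.range N).erase u, c i • α ^ i := by
      refine Finset.sum_congr rfl fun i hi => ?_
      rw [hc']; beta_reduce; rw [if_neg (Finset.ne_of_mem_erase hi)]
    have hzero : ∑ i ∈ Finset.range N, c' i • α ^ i = 0 := by
      rw [← Finset.add_sum_erase _ (fun i => c' i • α ^ i) hmemu, hsame]
      rw [← Finset.add_sum_erase _ (fun i => c i • α ^ i) hmemu] at hsum
      have hc'u : (c' u : ℂ) = (c u : ℂ) - (n : ℂ) := by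
        rw [hc']; beta_reduce; rw [if_pos rfl]
        push_cast [Nat.cast_sub hge]
        ring
      rw [nsmul_eq_mul, nsmul_eq_mul] at hsum
      rw [nsmul_eq_mul, hc'u]
      linear_combination hsum
    intro i hi
    have hz := nzero_sum hred h0 hzero i hi
    rw [hc'] at hz; beta_reduce at hz
    by_cases hiu : i = u
    · subst hiu; rw [if_pos rfl] at hz; rw [if_pos rfl]; omega
    · rw [if_neg hiu] at hz; rw [if_neg hiu]; exact hz
  set d : ℕ := n - c u with hd
  have hd0 : 0 < d := by omega
  set w : ℕ → ℚ := fun i => if i = u ∨ N ≤ i then 0 else (c i : ℚ) / d with hw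
  have hnsmul : ∀ S : Finset ℕ, ∑ i ∈ S, c i • α ^ i = ∑ i ∈ S, (c i : ℂ) * α ^ i :=
    fun S => Finset.sum_congr rfl fun i _ => nsmul_eq_mul _ _
  have hsum' : ∑ i ∈ Finset.range N, (c i : ℂ) * α ^ i = (n : ℂ) * α ^ u := by
    rw [← hnsmul, hsum, nsmul_eq_mul]
  rw [← Finset.add_sum_erase _ (fun i => (c i : ℂ) * α ^ i) hmemu] at hsum'
  have hdneC : (d : ℂ) ≠ 0 := Nat.cast_ne_zero.mpr (by omega)
  have hkey : (d : ℂ) * CS α w N = (d : ℂ) * α ^ u := by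
    rw [CS, Finset.mul_sum]
    have hterm : ∀ i ∈ Finset.range N, (d : ℂ) * ((w i : ℂ) * α ^ i)
        = (if i = u then 0 else (c i : ℂ)) * α ^ i := by
      intro i hi
      have him := Finset.mem_range.mp hi
      rw [hw]; beta_reduce
      by_cases hiu : i = u
      · rw [if_pos (Or.inl hiu), if_pos hiu]; simp
      · rw [if_neg (by push_neg; exact ⟨hiu, by omega⟩), if_neg hiu]
        push_cast
        field_simp
    rw [Finset.sum_congr rfl hterm]
    have hsp : ∑ i ∈ Finset.range N, (if i = u then 0 else (c i : ℂ)) * α ^ i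
        = ∑ i ∈ (Finset.range N).erase u, (c i : ℂ) * α ^ i := by
      rw [← Finset.add_sum_erase _ (fun i => (if i = u then 0 else (c i : ℂ)) * α ^ i) hmemu]
      rw [if_pos rfl, zero_mul, zero_add]
      exact Finset.sum_congr rfl fun i hi => by rw [if_neg (Finset.ne_of_mem_erase hi)]
    rw [hsp]
    have hdc : (d : ℂ) = (n : ℂ) - (c u : ℂ) := by
      rw [hd]; push_cast [Nat.cast_sub hcu.le]; ring
    rw [hdc]
    linear_combination hsum'
  have hCS := mul_left_cancel₀ hdneC hkey
  refine ⟨w, ?_, ?_, ?_, hCS.symm⟩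
  · intro i; rw [hw]; beta_reduce; split_ifs with h
    · exact le_refl 0
    · exact div_nonneg (Nat.cast_nonneg _) (Nat.cast_nonneg _)
  · rw [hw]; beta_reduce; rw [if_pos (Or.inl rfl)]
  · intro i hi; rw [hw]; beta_reduce; rw [if_pos (Or.inr hi)]

include hred h0 h1 hNa hNn in
lemma prune (hfg : (Malpha α).FG) (t : ℕ) (ht : t < N)
    (hbase : ∀ u, t ≤ u → u < N → α ^ u ∉ strongAtomsM α) :
    ∃ w : ℕ → ℚ, (∀ i, 0 ≤ w i) ∧ (∀ i, t ≤ i → w i = 0) ∧ α ^ t = CS α w N := by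
  classical
  set P : ℕ → Prop := fun m => ∀ u, t ≤ u → u < m → ∃ w : ℕ → ℚ,
    (∀ i, 0 ≤ w i) ∧ w u = 0 ∧ (∀ i, m ≤ i → w i = 0) ∧ α ^ u = CS α w N with hP
  have hbaseP : P N := by
    intro u htu hun
    exact wit_rat hred h0 h1 N hNa hNn hun (hbase u htu hun)
  have hstep : ∀ m, t + 1 ≤ m → m + 1 ≤ N → P (m + 1) → P m := by
    intro m hm1 hmN hPm1
    intro u htu hum
    obtain ⟨w, hw0, hwu, hwv, hwe⟩ := hPm1 u htu (by omega)
    obtain ⟨b, hb0, hbm, hbv, hbe⟩ := hPm1 m (by omega) (by omega)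
    have hbv' : ∀ i, m ≤ i → b i = 0 := by
      intro i hi
      rcases eq_or_lt_of_le hi with heq | hlt
      · rw [← heq]; exact hbm
      · exact hbv i (by omega)
    have hbm' : α ^ m = CS α b m := by
      rw [hbe, CS_drop α (by omega : m ≤ N) hbv']
    set v : ℕ → ℚ := fun i => w i + w m * b i with hv
    have hv0 : ∀ i, 0 ≤ v i := fun i => add_nonneg (hw0 i) (mul_nonneg (hw0 m) (hb0 i))
    have hCSv : α ^ u = CS α v m := by
      have e1 : CS α w N = CS α w (m + 1) := CS_drop α (by omega) hwv
      have e2 : CS α w (m + 1) = CS α w m + (w m : ℂ) * α ^ m := by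
        rw [CS, CS, Finset.sum_range_succ]
      have e3 : CS α v m = CS α w m + (w m : ℂ) * CS α b m := by
        rw [CS, CS, CS, Finset.mul_sum, ← Finset.sum_add_distrib]
        refine Finset.sum_congr rfl fun i hi => ?_
        rw [hv]; beta_reduce; push_cast; ring
      rw [hwe, e1, e2, e3, hbm']
    have hvu : v u = w m * b u := by rw [hv]; beta_reduce; rw [hwu, zero_add]
    have hmemu : u ∈ Finset.range m := Finset.mem_range.mpr (by omega)
    have hCv : (v u : ℂ) * α ^ u + ∑ i ∈ (Finset.range m).erase u, (v i : ℂ) * α ^ i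
        = α ^ u := by
      rw [Finset.add_sum_erase _ (fun i => (v i : ℂ) * α ^ i) hmemu, ← CS, ← hCSv]
    by_cases hγ : w m * b u < 1
    · set η : ℚ := 1 - w m * b u with hη
      have hη0 : 0 < η := by rw [hη]; linarith
      set w' : ℕ → ℚ := fun i => if i = u ∨ m ≤ i then 0 else v i / η with hw'
      refine ⟨w', ?_, ?_, ?_, ?_⟩
      · intro i; rw [hw']; beta_reduce; split_ifs with h
        · exact le_refl 0
        · exact div_nonneg (hv0 i) hη0.le
      · rw [hw']; beta_reduce; rw [if_pos (Or.inl rfl)]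
      · intro i hi; rw [hw']; beta_reduce; rw [if_pos (Or.inr hi)]
      · have hψ : ∀ i, m ≤ i → w' i = 0 := fun i hi => by
          rw [hw']; beta_reduce; rw [if_pos (Or.inr hi)]
        rw [CS_drop α (by omega : m ≤ N) hψ]
        have hηC : (η : ℂ) ≠ 0 := by exact_mod_cast hη0.ne'
        apply mul_left_cancel₀ hηC
        rw [CS, Finset.mul_sum]
        have hterm : ∀ i ∈ Finset.range m, (η : ℂ) * ((w' i : ℂ) * α ^ i)
            = (if i = u then 0 else (v i : ℂ)) * α ^ i := by
          intro i hi
          have him := Finset.mem_range.mp hi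
          rw [hw']; beta_reduce
          by_cases hiu : i = u
          · rw [if_pos (Or.inl hiu), if_pos hiu]; simp
          · rw [if_neg (by push_neg; exact ⟨hiu, by omega⟩), if_neg hiu]
            push_cast
            field_simp
        rw [Finset.sum_congr rfl hterm]
        have hsp : ∑ i ∈ Finset.range m, (if i = u then 0 else (v i : ℂ)) * α ^ i
            = ∑ i ∈ (Finset.range m).erase u, (v i : ℂ) * α ^ i := by
          rw [← Finset.add_sum_erase _ (fun i => (if i = u then 0 else (v i : ℂ)) * α ^ i) hmemu]
          rw [if_pos rfl, zero_mul, zero_add]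
          exact Finset.sum_congr rfl fun i hi => by rw [if_neg (Finset.ne_of_mem_erase hi)]
        rw [hsp]
        have hvuC : (v u : ℂ) = ((w m * b u : ℚ) : ℂ) := by exact_mod_cast hvu
        have hηC2 : (η : ℂ) = 1 - ((w m * b u : ℚ) : ℂ) := by rw [hη]; push_cast; ring
        rw [hηC2, ← hvuC]
        linear_combination -hCv
    · exfalso
      push_neg at hγ
      set z : ℕ → ℚ := fun i => if i = u then w m * b u - 1 else v i with hz
      have hz0 : ∀ i, 0 ≤ z i := by
        intro i; rw [hz]; beta_reduce; split_ifs with h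
        · linarith
        · exact hv0 i
      have hzsum : CS α z m = 0 := by
        rw [CS]
        rw [← Finset.add_sum_erase _ (fun i => (z i : ℂ) * α ^ i) hmemu]
        have hze : ∀ i ∈ (Finset.range m).erase u, (z i : ℂ) * α ^ i = (v i : ℂ) * α ^ i := by
          intro i hi; rw [hz]; beta_reduce; rw [if_neg (Finset.ne_of_mem_erase hi)]
        rw [Finset.sum_congr rfl hze]
        have hzu : (z u : ℂ) = (v u : ℂ) - 1 := by
          have hzq : z u = v u - 1 := by
            rw [hz]; beta_reduce; rw [if_pos rfl, hvu]
          rw [hzq]; push_cast; ring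
        rw [hzu]
        linear_combination hCv
      have hzz := qzero_sum hred h0 hz0 hzsum
      have hγ1 : w m * b u = 1 := by
        have hzu := hzz u (by omega)
        rw [hz] at hzu; beta_reduce at hzu; rw [if_pos rfl] at hzu
        linarith
      have hwm : w m ≠ 0 := fun h => by rw [h, zero_mul] at hγ1; norm_num at hγ1
      have hbz : ∀ i, i < m → i ≠ u → b i = 0 := by
        intro i him hiu
        have hzi := hzz i him
        rw [hz] at hzi; beta_reduce at hzi; rw [if_neg hiu] at hzi
        rw [hv] at hzi; beta_reduce at hzi
        have h1' := hw0 i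
        have h2' := mul_nonneg (hw0 m) (hb0 i)
        have hm0 : w m * b i = 0 := by linarith
        rcases mul_eq_zero.mp hm0 with h | h
        · exact absurd h hwm
        · exact h
      have hαm : α ^ m = ((b u : ℚ) : ℂ) * α ^ u := by
        rw [hbm', CS]
        rw [← Finset.add_sum_erase _ (fun i => (b i : ℂ) * α ^ i) hmemu]
        rw [Finset.sum_eq_zero, add_zero]
        intro i hi
        rw [hbz i (Finset.mem_range.mp (Finset.mem_of_mem_erase hi)) (Finset.ne_of_mem_erase hi)]
        simp
      have hbu0 : 0 < b u := by
        rcases (hb0 u).lt_or_eq with h | h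
        · exact h
        · exfalso
          rw [← h] at hαm
          simp only [Rat.cast_zero, zero_mul] at hαm
          exact pow_ne_zero m h0 hαm
      have hpow : α ^ (m - u) = ((b u : ℚ) : ℂ) := by
        have hmu : m - u + u = m := by omega
        apply mul_right_cancel₀ (pow_ne_zero u h0)
        rw [← pow_add, hmu, hαm]
      have hden := int_of_pow_rat hfg (by omega : m - u ≠ 0) hpow
      have hnum1 : 1 ≤ (b u).num := by
        have := Rat.num_pos.mpr hbu0
        omega
      have hbq : (b u) = ((b u).num : ℚ) := by
        conv_lhs => rw [← Rat.num_div_den (b u)]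
        rw [hden]
        simp
      by_cases hone : b u = 1
      · rw [hone] at hpow
        push_cast at hpow
        exact h1 (m - u) (by omega) hpow
      · set k : ℕ := (b u).num.toNat with hk
        have hk1 : 1 ≤ k := by omega
        have hk2 : 2 ≤ k := by
          rcases Nat.lt_or_ge k 2 with hklt | h
          · exfalso
            apply hone
            rw [hbq, show (b u).num = 1 by omega]
            norm_num
          · exact h
        have hkc : ((b u : ℚ) : ℂ) = (k : ℂ) := by
          rw [hbq, show (b u).num = (k : ℤ) by omega]
          push_cast
          ring
        have hatom := hNa m (by omega)
        have hdec := hatom.2.2 (α ^ u) ((k - 1) • α ^ u) (pow_mem α u)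
          ((Malpha α).nsmul_mem (pow_mem α u) _)
          (by rw [hαm, hkc, nsmul_eq_mul, Nat.cast_sub hk1]; ring)
        rcases hdec with h | h
        · exact pow_ne_zero u h0 h
        · rw [nsmul_eq_mul] at h
          rcases mul_eq_zero.mp h with h' | h'
          · have : (k - 1 : ℕ) = 0 := by exact_mod_cast h'
            omega
          · exact pow_ne_zero u h0 h'
  have down : ∀ j : ℕ, j + (t + 1) ≤ N → P (N - j) := by
    intro j
    induction j with
    | zero => intro _; rw [Nat.sub_zero]; exact hbaseP
    | succ j ih =>
        intro hj
        have hPj := ih (by omega)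
        have hm : N - (j + 1) + 1 = N - j := by omega
        exact hstep (N - (j + 1)) (by omega) (by omega) (by rw [hm]; exact hPj)
  have hPt1 : P (t + 1) := by
    have hdn := down (N - (t + 1)) (by omega)
    rwa [show N - (N - (t + 1)) = t + 1 by omega] at hdn
  obtain ⟨w, hw0, hwu, hwv, hwe⟩ := hPt1 t (le_refl t) (by omega)
  refine ⟨w, hw0, ?_, hwe⟩
  intro i hi
  rcases eq_or_lt_of_le hi with heq | hlt
  · rw [← heq]; exact hwu
  · exact hwv i (by omega)

end Prune

end Stmt1Aux
namespace Stmt1Aux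

lemma atoms_deg {α : ℂ} (hdeg : ∀ n : ℕ, α ^ n = 1 ∨ α ^ n = 0) : atomsM α ⊆ {1} := by
  intro a ha
  obtain ⟨E, hE⟩ := (mem_iff_V α a).mp ha.1
  have hnat : ∀ F : Multiset ℕ, ∃ k : ℕ, V α F = (k : ℂ) := by
    intro F
    induction F using Multiset.induction with
    | empty => exact ⟨0, by simp [V_zero]⟩
    | cons e F ih =>
        obtain ⟨k, hk⟩ := ih
        rcases hdeg e with h | h
        · exact ⟨k + 1, by rw [V_cons, h, hk]; push_cast; ring⟩
        · exact ⟨k, by rw [V_cons, h, hk]; ring⟩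
  obtain ⟨k, hk⟩ := hnat E
  have hk0 : k ≠ 0 := by
    intro h
    apply ha.2.1
    rw [hE, hk, h]; norm_num
  have hone : (1 : ℂ) ∈ Malpha α := by
    have := pow_mem α 0
    rwa [pow_zero] at this
  by_cases hk1 : k = 1
  · show a = 1
    rw [hE, hk, hk1]; norm_num
  · exfalso
    have h2 : 2 ≤ k := by omega
    have hmem2 : ((k - 1 : ℕ) : ℂ) ∈ Malpha α := by
      have := (Malpha α).nsmul_mem hone (k - 1)
      rwa [nsmul_eq_mul, mul_one] at this
    have heq2 : a = 1 + ((k - 1 : ℕ) : ℂ) := by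
      rw [hE, hk]; push_cast [Nat.cast_sub (by omega : 1 ≤ k)]; ring
    rcases ha.2.2 1 _ hone hmem2 heq2 with h | h
    · exact one_ne_zero h
    · have hc : (k - 1 : ℕ) = 0 := by exact_mod_cast h
      omega

end Stmt1Aux

theorem stmt_1 (α : ℂ) (hα : IsAlgebraic ℚ α)
    (hfg : (Malpha α).FG)
    (hS1 : 1 ≤ (strongAtomsM α).encard)
    (hSA : (strongAtomsM α).encard < (atomsM α).encard) :
    ∃ f : ℚ[X], f ≠ 0 ∧
      f.natDegree = (strongAtomsM α).ncard - (minpoly ℚ α).natDegree ∧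
      (f * minpoly ℚ α).leadingCoeff < 0 ∧
      ∀ i : ℕ, i ≠ (f * minpoly ℚ α).natDegree → 0 ≤ (f * minpoly ℚ α).coeff i := by
  classical
  obtain ⟨a₀, ha₀S⟩ := Set.one_le_encard_iff_nonempty.mp hS1
  have ha₀ : a₀ ∈ atomsM α := ha₀S.1
  have hSsubA : strongAtomsM α ⊆ atomsM α := fun a ha => ha.1
  have hdeg : ¬ ∀ n : ℕ, α ^ n = 1 ∨ α ^ n = 0 := by
    intro hdeg
    have hA1 : atomsM α ⊆ {1} := Stmt1Aux.atoms_deg hdeg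
    have hle1 : (atomsM α).encard ≤ 1 := by
      calc (atomsM α).encard ≤ ({1} : Set ℂ).encard := Set.encard_mono hA1
      _ = 1 := Set.encard_singleton 1
    exact absurd (lt_of_le_of_lt hS1 (lt_of_lt_of_le hSA hle1)) (lt_irrefl _)
  have hred : ∀ x ∈ Malpha α, -x ∈ Malpha α → x = 0 := by
    intro x hx hnx
    by_contra hx0
    by_cases hax : a₀ = -x
    · have h2a : a₀ + a₀ ∈ Malpha α := (Malpha α).add_mem ha₀.1 ha₀.1
      have hna : -a₀ ∈ Malpha α := by rw [hax, neg_neg]; exact hx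
      rcases ha₀.2.2 (a₀ + a₀) (-a₀) h2a hna (by ring) with h | h
      · apply ha₀.2.1
        have h2 : (2 : ℂ) * a₀ = 0 := by linear_combination h
        rcases mul_eq_zero.mp h2 with h' | h'
        · norm_num at h'
        · exact h'
      · exact ha₀.2.1 (by linear_combination -h)
    · rcases ha₀.2.2 (a₀ + x) (-x) ((Malpha α).add_mem ha₀.1 hx) hnx (by ring) with h | h
      · exact hax (by linear_combination h)
      · exact hx0 (by linear_combination -h)
  have h0 : α ≠ 0 := by
    intro h
    apply hdeg
    intro n
    cases n with
    | zero => left; rw [pow_zero]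
    | succ n => right; rw [h, zero_pow (by omega : n + 1 ≠ 0)]
  have h1 : ∀ k : ℕ, k ≠ 0 → α ^ k ≠ 1 := by
    intro k hk hαk
    have hα1 : α ≠ 1 := by
      intro h
      apply hdeg; intro n; left; rw [h, one_pow]
    have hgeo : ∑ i ∈ Finset.range k, α ^ i = 0 := by
      rw [geom_sum_eq hα1, hαk, sub_self, zero_div]
    have hzmem : (0 : ℕ) ∈ Finset.range k := Finset.mem_range.mpr (by omega)
    rw [← Finset.add_sum_erase _ (fun i => α ^ i) hzmem, pow_zero] at hgeo
    have hysum : ∑ i ∈ (Finset.range k).erase 0, α ^ i ∈ Malpha α :=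
      AddSubmonoid.sum_mem _ (fun i _ => Stmt1Aux.pow_mem α i)
    have hone : (1 : ℂ) ∈ Malpha α := by
      have := Stmt1Aux.pow_mem α 0
      rwa [pow_zero] at this
    have := hred 1 hone (by
      rw [show -(1 : ℂ) = ∑ i ∈ (Finset.range k).erase 0, α ^ i by linear_combination -hgeo]
      exact hysum)
    exact one_ne_zero this
  -- minimal non-atom index
  have hex : ∃ k : ℕ, α ^ k ∉ atomsM α := Stmt1Aux.exists_nonatom hred h0 h1 hfg
  set N : ℕ := Nat.find hex with hNdef
  have hNn : α ^ N ∉ atomsM α := Nat.find_spec hex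
  have hNa : ∀ i, i < N → α ^ i ∈ atomsM α := by
    intro i hi
    by_contra h
    exact Nat.find_min hex hi h
  have hAeq := Stmt1Aux.atoms_eq hred h0 h1 N hNa hNn
  obtain ⟨sN, hsNa, hsNs⟩ := Stmt1Aux.atomic hred h0 hfg (α ^ N) (Stmt1Aux.pow_mem α N)
  have hTex : ∃ u, u < N ∧ α ^ u ∉ strongAtomsM α := by
    by_contra hc
    push_neg at hc
    have hsub : atomsM α ⊆ strongAtomsM α := by
      intro a ha
      rw [hAeq] at ha
      obtain ⟨e, he, rfl⟩ := ha
      exact hc e (Set.mem_Iio.mp he)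
    have heq : strongAtomsM α = atomsM α := le_antisymm hSsubA hsub
    rw [heq] at hSA
    exact lt_irrefl _ hSA
  set t : ℕ := Nat.find hTex with htdef
  have htlt : t < N := (Nat.find_spec hTex).1
  have htns : α ^ t ∉ strongAtomsM α := (Nat.find_spec hTex).2
  have htmin' : ∀ u, u < t → α ^ u ∈ strongAtomsM α := by
    intro u hu
    by_contra h
    exact Nat.find_min hTex hu ⟨by omega, h⟩
  have hallns : ∀ u, t ≤ u → u < N → α ^ u ∉ strongAtomsM α := by
    intro u htu
    induction u, htu using Nat.le_induction with
    | base => exact fun _ => htns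
    | succ u htu ih =>
        intro hu1
        exact Stmt1Aux.lemma_up hred h0 h1 N hNa hNn sN hsNa hsNs hu1 (ih (by omega))
  have hSeq : strongAtomsM α = (fun i : ℕ => α ^ i) '' Set.Iio t := by
    ext a
    constructor
    · intro ha
      have haA := ha.1
      rw [hAeq] at haA
      obtain ⟨e, he, rfl⟩ := haA
      refine ⟨e, ?_, rfl⟩
      simp only [Set.mem_Iio] at he ⊢
      by_contra hge
      exact hallns e (by omega) he ha
    · rintro ⟨e, he, rfl⟩
      exact htmin' e (Set.mem_Iio.mp he)
  have ht1 : 1 ≤ t := by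
    by_contra hcon
    have ht0 : t = 0 := by omega
    rw [hSeq, ht0] at hS1
    rw [Set.one_le_encard_iff_nonempty] at hS1
    obtain ⟨x, hx⟩ := hS1
    obtain ⟨e, he, rfl⟩ := hx
    exact absurd (Set.mem_Iio.mp he) (by omega)
  have hncard : (strongAtomsM α).ncard = t := by
    rw [hSeq, Set.ncard_image_of_injective _ (Stmt1Aux.hinj h0 h1)]
    rw [show (Set.Iio t) = ((Finset.range t : Finset ℕ) : Set ℕ) by ext i; simp]
    rw [Set.ncard_coe_finset, Finset.card_range]
  obtain ⟨w, hw0, hwv, hwe⟩ := Stmt1Aux.prune hred h0 h1 N hNa hNn hfg t htlt hallns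
  set r : ℚ[X] := ∑ i ∈ Finset.range t, Polynomial.C (w i) * Polynomial.X ^ i with hr
  set g : ℚ[X] := Polynomial.X ^ t - r with hg
  have hrdeg : r.natDegree < t := by
    have hle : r.natDegree ≤ t - 1 := by
      apply Polynomial.natDegree_sum_le_of_forall_le
      intro i hi
      have h2 := Polynomial.natDegree_C_mul_X_pow_le (w i) i
      have h3 := Finset.mem_range.mp hi
      omega
    omega
  have hgdeg : g.natDegree = t := by
    rw [hg, Polynomial.natDegree_sub_eq_left_of_natDegree_lt
      (by rwa [Polynomial.natDegree_X_pow]), Polynomial.natDegree_X_pow]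
  have hrt : r.coeff t = 0 := Polynomial.coeff_eq_zero_of_natDegree_lt hrdeg
  have hglc : g.coeff t = 1 := by
    rw [hg, Polynomial.coeff_sub, Polynomial.coeff_X_pow, if_pos rfl, hrt, sub_zero]
  have hgne : g ≠ 0 := fun h => by rw [h] at hglc; simp at hglc
  have haeval : Polynomial.aeval α g = 0 := by
    rw [hg, map_sub, Polynomial.aeval_X_pow]
    have hav : (Polynomial.aeval α) r = Stmt1Aux.CS α w t := by
      rw [hr, map_sum, Stmt1Aux.CS]
      refine Finset.sum_congr rfl fun i hi => ?_
      rw [map_mul, Polynomial.aeval_C, map_pow, Polynomial.aeval_X, eq_ratCast]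
    have hNt : Stmt1Aux.CS α w N = Stmt1Aux.CS α w t :=
      Stmt1Aux.CS_drop α (le_of_lt htlt) hwv
    rw [hav, hwe, hNt, sub_self]
  have hmdvd : minpoly ℚ α ∣ g := minpoly.dvd ℚ α haeval
  obtain ⟨h₁, hgh⟩ := hmdvd
  have hint : IsIntegral ℚ α := hα.isIntegral
  have hm0 : minpoly ℚ α ≠ 0 := minpoly.ne_zero hint
  have hh0 : h₁ ≠ 0 := by
    rintro rfl
    rw [mul_zero] at hgh
    exact hgne hgh
  have hdeg_eq : t = (minpoly ℚ α).natDegree + h₁.natDegree := by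
    rw [← hgdeg, hgh, Polynomial.natDegree_mul hm0 hh0]
  have hfm : -h₁ * minpoly ℚ α = -g := by rw [hgh]; ring
  refine ⟨-h₁, neg_ne_zero.mpr hh0, ?_, ?_, ?_⟩
  · rw [Polynomial.natDegree_neg, hncard]
    omega
  · rw [hfm, Polynomial.leadingCoeff_neg]
    rw [Polynomial.leadingCoeff, hgdeg, hglc]
    norm_num
  · intro i hi
    rw [hfm] at hi ⊢
    rw [Polynomial.natDegree_neg, hgdeg] at hi
    rw [Polynomial.coeff_neg, hg, Polynomial.coeff_sub, Polynomial.coeff_X_pow,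
      if_neg (fun h => hi h), zero_sub, neg_neg]
    rw [hr, Polynomial.finset_sum_coeff]
    have hterm : ∀ j ∈ Finset.range t,
        (Polynomial.C (w j) * Polynomial.X ^ j).coeff i = if j = i then w j else 0 := by
      intro j hj
      rw [Polynomial.coeff_C_mul, Polynomial.coeff_X_pow]
      by_cases hji : j = i
      · subst hji; simp
      · rw [if_neg (fun h => hji h.symm), if_neg hji, mul_zero]
    rw [Finset.sum_congr rfl hterm, Finset.sum_ite_eq' (Finset.range t) i (fun j => w j)]
    split_ifs with h
    · exact hw0 i
    · exact le_refl 0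
end

section
/- Let n ≥ 2 be an integer and let q be a positive rational number that is neither a positive integer nor the reciprocal of a positive integer. Let α be the positive real n-th root of q, and assume that α, α², …, α^{n−1} are all irrational. Then M_α is atomic, its set of atoms is A(M_α) = {α^j : j ∈ ℕ₀}, and it has no strong atoms: S(M_α) = ∅. -/
open Polynomial

set_option maxHeartbeats 1000000
section All


section Key
variable {q : ℚ}

private lemma cast_numabs (hq : 0 < q) : ((q.num.natAbs : ℚ)) = q * q.den := by
  have h0 : (0:ℤ) ≤ q.num := le_of_lt (Rat.num_pos.mpr hq)
  rw [Rat.mul_den_eq_num]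
  rw [← Int.cast_natCast, Int.natAbs_of_nonneg h0]

private lemma aux_pow (hq : 0 < q) {t M : ℕ} (h : t ≤ M) :
    q ^ t * (q.den : ℚ) ^ M = (q.num.natAbs : ℚ) ^ t * (q.den : ℚ) ^ (M - t) := by
  have : (q.den : ℚ) ^ M = (q.den : ℚ) ^ t * (q.den : ℚ) ^ (M - t) := by
    rw [← pow_add, Nat.add_sub_cancel' h]
  rw [this, ← mul_assoc, ← mul_pow, ← cast_numabs hq]

private lemma int_eq (hq : 0 < q) (k N M : ℕ) (hN : N ≤ M) (hk : k ≤ M) (e : ℕ → ℕ)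
    (h : (∑ t ∈ Finset.range N, (e t : ℚ) * q ^ t) = q ^ k) :
    (∑ t ∈ Finset.range N, e t * q.num.natAbs ^ t * q.den ^ (M - t))
      = q.num.natAbs ^ k * q.den ^ (M - k) := by
  have := congrArg (· * (q.den : ℚ) ^ M) h
  simp only [Finset.sum_mul] at this
  rw [aux_pow hq hk] at this
  have hterm : ∀ t ∈ Finset.range N,
      (e t : ℚ) * q ^ t * (q.den : ℚ) ^ M
        = ((e t * q.num.natAbs ^ t * q.den ^ (M - t) : ℕ) : ℚ) := by
    intro t ht
    rw [mul_assoc, aux_pow hq (le_trans (Nat.le_of_lt_succ (Nat.lt_succ_of_lt (Finset.mem_range.mp ht))) hN)]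
    push_cast
    ring
  rw [Finset.sum_congr rfl hterm, ← Nat.cast_sum] at this
  exact_mod_cast this

private lemma qkey (hq : 0 < q) (hA : 2 ≤ q.num.natAbs) (hB : 2 ≤ q.den) :
    ∀ (k N : ℕ) (e : ℕ → ℕ), (∀ t, N ≤ t → e t = 0) →
      (∑ t ∈ Finset.range N, (e t : ℚ) * q ^ t) = q ^ k → e k = 0 → False := by
  have hco : Nat.Coprime q.num.natAbs q.den := q.reduced
  intro k
  induction k with
  | zero =>
    intro N e hpad hsum hek
    have hint := int_eq hq 0 N N le_rfl (Nat.zero_le N) e hsum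
    simp only [pow_zero, one_mul, Nat.sub_zero] at hint
    have hdvd : q.num.natAbs ∣ q.den ^ N := by
      rw [← hint]
      apply Finset.dvd_sum
      intro t ht
      rcases Nat.eq_zero_or_pos t with h0 | h1
      · simp [h0, hek]
      · exact ((dvd_pow_self _ (Nat.pos_iff_ne_zero.mp h1)).mul_left (e t)).mul_right _
    have := Nat.Coprime.eq_one_of_dvd (hco.pow_right N) hdvd
    omega
  | succ k ih =>
    intro N e hpad hsum hek
    -- N must be positive
    rcases Nat.eq_zero_or_pos N with hN0 | hN0
    · rw [hN0] at hsum
      simp at hsum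
      exact absurd hsum.symm (ne_of_gt (pow_pos hq _))
    obtain ⟨N', rfl⟩ : ∃ N', N = N' + 1 := ⟨N - 1, by omega⟩
    set A := q.num.natAbs with hAdef
    set B := q.den with hBdef
    -- integer equation with M = max (N'+1) (k+1)
    set M := max (N' + 1) (k + 1) with hM
    have hint := int_eq hq (k+1) (N'+1) M (le_max_left _ _) (le_max_right _ _) e hsum
    -- A divides e 0 * B ^ M
    have hdvd0 : A ∣ e 0 * B ^ M := by
      have h1 : (∑ t ∈ Finset.range (N'+1), e t * A ^ t * B ^ (M - t))
          = e 0 * B ^ M + ∑ t ∈ Finset.range N', e (t+1) * A ^ (t+1) * B ^ (M - (t+1)) := by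
        rw [Finset.sum_range_succ' (fun t => e t * A ^ t * B ^ (M - t)) N']
        simp [add_comm]
      have h2 : A ∣ ∑ t ∈ Finset.range N', e (t+1) * A ^ (t+1) * B ^ (M - (t+1)) :=
        Finset.dvd_sum fun t _ =>
          ((dvd_pow_self A (Nat.succ_ne_zero t)).mul_left (e (t+1))).mul_right _
      have h3 : A ∣ A ^ (k+1) * B ^ (M - (k+1)) :=
        Dvd.dvd.mul_right (dvd_pow_self A (Nat.succ_ne_zero k)) _
      rw [h1] at hint
      rw [← hint] at h3
      exact (Nat.dvd_add_right h2).mp (by rwa [add_comm] at h3)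
    have hdvdA : A ∣ e 0 := (Nat.Coprime.dvd_of_dvd_mul_right (hco.pow_right M) hdvd0)
    obtain ⟨s, hs⟩ := hdvdA
    -- transformed coefficients
    set g : ℕ → ℕ := fun t => e (t+1) + if t = 0 then s * B else 0 with hg
    have hgpad : ∀ t, N' + 1 ≤ t → g t = 0 := by
      intro t ht
      have : t ≠ 0 := by omega
      simp [hg, this, hpad (t+1) (by omega)]
    have hAq : (A : ℚ) = q * B := cast_numabs hq
    have hgsum : (∑ t ∈ Finset.range (N'+1), (g t : ℚ) * q ^ t) = q ^ k := by
      have hqne : q ≠ 0 := ne_of_gt hq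
      apply mul_left_cancel₀ hqne
      have expand : q * (∑ t ∈ Finset.range (N'+1), (g t : ℚ) * q ^ t)
          = ∑ t ∈ Finset.range (N'+1), (e (t+1) : ℚ) * q ^ (t+1)
            + (s : ℚ) * B * q := by
        rw [Finset.mul_sum]
        have : ∀ t ∈ Finset.range (N'+1), q * ((g t : ℚ) * q ^ t)
            = (e (t+1) : ℚ) * q ^ (t+1) + (if t = 0 then (s : ℚ) * B * q else 0) := by
          intro t _
          by_cases h0 : t = 0 <;> simp [hg, h0] <;> push_cast <;> ring
        rw [Finset.sum_congr rfl this, Finset.sum_add_distrib, Finset.sum_ite_eq' (Finset.range (N'+1)) 0]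
        simp
      rw [expand]
      have peel : (∑ t ∈ Finset.range (N'+1), (e t : ℚ) * q ^ t)
          = ∑ t ∈ Finset.range N', (e (t+1) : ℚ) * q ^ (t+1) + (e 0 : ℚ) := by
        rw [Finset.sum_range_succ' (fun t => (e t : ℚ) * q ^ t) N']
        simp
      have last0 : (e (N'+1) : ℚ) * q ^ (N'+1) = 0 := by
        rw [hpad (N'+1) le_rfl]; simp
      rw [Finset.sum_range_succ, last0, add_zero]
      have : (∑ t ∈ Finset.range N', (e (t+1) : ℚ) * q ^ (t+1)) = q ^ (k+1) - (e 0 : ℚ) := by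
        rw [← hsum, peel]; ring
      rw [this]
      have : (e 0 : ℚ) = (s : ℚ) * B * q := by
        rw [hs]; push_cast; rw [hAq]; ring
      rw [this]; ring
    -- now case split
    rcases Nat.eq_zero_or_pos k with hk0 | hkpos
    · subst hk0
      rcases Nat.eq_zero_or_pos s with hs0 | hspos
      · -- g 0 = e 1 = e (k+1) = 0
        have hg0 : g 0 = 0 := by simp [hg, hs0, hek]
        exact ih (N'+1) g hgpad hgsum hg0
      · -- sum ≥ g 0 ≥ s*B ≥ 2 > 1
        have hg0 : (2 : ℚ) ≤ (g 0 : ℚ) := by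
          have : 2 ≤ g 0 := by
            have : s * B ≥ 2 := le_trans hB (Nat.le_mul_of_pos_left B hspos)
            simp [hg]; omega
          exact_mod_cast this
        have hle : (g 0 : ℚ) * q ^ 0 ≤ ∑ t ∈ Finset.range (N'+1), (g t : ℚ) * q ^ t := by
          apply Finset.single_le_sum (f := fun t => (g t : ℚ) * q ^ t)
          · intro t _
            positivity
          · exact Finset.mem_range.mpr (Nat.succ_pos N')
        rw [hgsum] at hle
        simp only [pow_zero, mul_one] at hle
        linarith
    · have hgk : g k = 0 := by
        have : k ≠ 0 := by omega
        simp [hg, this, hek]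
      exact ih (N'+1) g hgpad hgsum hgk

end Key


section Indep
variable {n : ℕ} {q : ℚ} {α : ℝ}

private lemma aeval_root (hαroot : α ^ n = (q : ℝ)) :
    (aeval α) ((X : ℚ[X]) ^ n - C q) = 0 := by
  simp [hαroot]

private lemma minpoly_deg_eq (hn : 2 ≤ n) (hq : 0 < q) (hαpos : 0 < α)
    (hαroot : α ^ n = (q : ℝ))
    (hirr : ∀ j : ℕ, 1 ≤ j → j ≤ n - 1 → Irrational (α ^ j)) :
    (minpoly ℚ α).natDegree = n := by
  have hn0 : n ≠ 0 := by omega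
  have hmono : ((X : ℚ[X]) ^ n - C q).Monic := monic_X_pow_sub_C q hn0
  have hint : IsIntegral ℚ α := ⟨(X : ℚ[X]) ^ n - C q, hmono, aeval_root hαroot⟩
  have hdvd : minpoly ℚ α ∣ (X : ℚ[X]) ^ n - C q := minpoly.dvd ℚ α (aeval_root hαroot)
  set d := (minpoly ℚ α).natDegree with hd
  have hd1 : 0 < d := minpoly.natDegree_pos hint
  have hdn : d ≤ n := by
    have := Polynomial.natDegree_le_of_dvd hdvd hmono.ne_zero
    simpa [natDegree_X_pow_sub_C] using this
  by_contra hne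
  have hdlt : d ≤ n - 1 := by omega
  -- work over ℂ
  set P : ℂ[X] := (minpoly ℚ α).map (algebraMap ℚ ℂ) with hP
  have hPmonic : P.Monic := (minpoly.monic hint).map _
  have hPdeg : P.natDegree = d := by
    rw [hP, natDegree_map]
  have hPsplits : P.Splits := IsAlgClosed.splits P
  have hcard : P.roots.card = d := by
    rw [← hPdeg]
    exact (splits_iff_card_roots.mp hPsplits).symm ▸ (splits_iff_card_roots.mp hPsplits)
  have hcoeff : P.coeff 0 = (-1) ^ d * P.roots.prod := by
    rw [← hPdeg]
    exact hPsplits.coeff_zero_eq_prod_roots_of_monic hPmonic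
  -- each root has absolute value α
  have habs : ∀ z ∈ P.roots, ‖z‖ = α := by
    intro z hz
    have hzroot : P.IsRoot z := isRoot_of_mem_roots hz
    have hPdvd : P ∣ ((X : ℂ[X]) ^ n - C (q : ℂ)) := by
      have := Polynomial.map_dvd (algebraMap ℚ ℂ) hdvd
      simpa [Polynomial.map_sub, Polynomial.map_pow, map_X, map_C] using this
    have hzn : z ^ n = (q : ℂ) := by
      obtain ⟨g, hg⟩ := hPdvd
      have : ((X : ℂ[X]) ^ n - C (q : ℂ)).IsRoot z := by
        rw [hg]
        simp [IsRoot, hzroot.eq_zero]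
      simpa [IsRoot, sub_eq_zero] using this
    have h1 : ‖z‖ ^ n = α ^ n := by
      rw [← norm_pow, hzn, hαroot]
      have : ((q : ℝ) : ℂ) = (q : ℂ) := by push_cast; ring
      rw [← this, Complex.norm_real, Real.norm_eq_abs, abs_of_pos (by exact_mod_cast hq)]
    exact (pow_left_inj₀ (norm_nonneg z) (le_of_lt hαpos) hn0).mp h1
  -- |coeff 0| = α ^ d
  have hprodabs : ‖P.roots.prod‖ = α ^ d := by
    rw [show ‖P.roots.prod‖ = (P.roots.map (‖·‖)).prod from map_multiset_prod (normHom : ℂ →*₀ ℝ) _]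
    have : P.roots.map (‖·‖) = Multiset.replicate d α := by
      rw [Multiset.eq_replicate]
      constructor
      · rw [Multiset.card_map, hcard]
      · intro b hb
        obtain ⟨z, hz, rfl⟩ := Multiset.mem_map.mp hb
        exact habs z hz
    rw [this, Multiset.prod_replicate]
  have hcoeffabs : ‖P.coeff 0‖ = α ^ d := by
    rw [hcoeff, norm_mul, hprodabs, norm_pow]
    simp
  have hrat : α ^ d = ((|(minpoly ℚ α).coeff 0| : ℚ) : ℝ) := by
    have h0 : P.coeff 0 = ((( (minpoly ℚ α).coeff 0 : ℚ) : ℂ)) := by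
      rw [hP, coeff_map]
      norm_num
    rw [← hcoeffabs, h0]
    have : (((minpoly ℚ α).coeff 0 : ℚ) : ℂ) = ((((minpoly ℚ α).coeff 0 : ℚ) : ℝ) : ℂ) := by
      push_cast; ring
    rw [this, Complex.norm_real, Real.norm_eq_abs]
    push_cast
    rfl
  exact (hirr d hd1 hdlt) ⟨|(minpoly ℚ α).coeff 0|, hrat.symm⟩

private lemma indep (hn : 2 ≤ n) (hq : 0 < q) (hαpos : 0 < α)
    (hαroot : α ^ n = (q : ℝ))
    (hirr : ∀ j : ℕ, 1 ≤ j → j ≤ n - 1 → Irrational (α ^ j))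
    (c : ℕ → ℚ) (h : (∑ j ∈ Finset.range n, (c j : ℝ) * α ^ j) = 0) :
    ∀ j < n, c j = 0 := by
  set p : ℚ[X] := ∑ j ∈ Finset.range n, C (c j) * X ^ j with hp
  have haeval : aeval α p = 0 := by
    rw [hp]
    rw [map_sum]
    rw [← h]
    apply Finset.sum_congr rfl
    intro j _
    simp [Rat.smul_def]
  have hdeg : p.natDegree < n := by
    apply Nat.lt_of_le_of_lt (Polynomial.natDegree_sum_le _ _)
    rw [Finset.fold_max_lt]
    constructor
    · omega
    · intro j hj
      exact Nat.lt_of_le_of_lt (natDegree_C_mul_X_pow_le (c j) j) (Finset.mem_range.mp hj)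
  have hp0 : p = 0 := by
    by_contra hne
    have hdvd := minpoly.dvd ℚ α haeval
    have := Polynomial.natDegree_le_of_dvd hdvd hne
    rw [minpoly_deg_eq hn hq hαpos hαroot hirr] at this
    omega
  intro j hj
  have : p.coeff j = c j := by
    rw [hp, finset_sum_coeff]
    rw [Finset.sum_eq_single j]
    · simp
    · intro b _ hbj
      simp [coeff_C_mul, coeff_X_pow, Ne.symm hbj]
    · intro hjmem
      exact absurd (Finset.mem_range.mpr hj) hjmem
  rw [hp0] at this
  simpa using this.symm

end Indep



section Rep
variable {n : ℕ} {q : ℚ} {α : ℝ}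

private lemma sum_pad (f : ℕ → ℝ) {N K : ℕ} (h : N ≤ K) (hf : ∀ i, N ≤ i → f i = 0) :
    ∑ i ∈ Finset.range K, f i = ∑ i ∈ Finset.range N, f i := by
  refine (Finset.sum_subset (Finset.range_subset_range.mpr h) ?_).symm
  intro x hx hnx
  exact hf x (by simpa using hnx)

private lemma mem_Malpha_iff {x : ℂ} :
    x ∈ Malpha (α : ℂ) ↔ ∃ (N : ℕ) (e : ℕ → ℕ),
      x = ((∑ i ∈ Finset.range N, (e i : ℝ) * α ^ i : ℝ) : ℂ) := by
  constructor
  · intro hx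
    induction hx using AddSubmonoid.closure_induction with
    | mem x hx =>
      obtain ⟨k, rfl⟩ := hx
      refine ⟨k + 1, fun i => if i = k then 1 else 0, ?_⟩
      have hr : (∑ i ∈ Finset.range (k+1), (((if i = k then 1 else 0 : ℕ)) : ℝ) * α ^ i) = α ^ k := by
        rw [Finset.sum_eq_single k]
        · simp
        · intro b _ hbk
          simp [hbk]
        · intro h
          exact absurd (Finset.mem_range.mpr (Nat.lt_succ_self k)) h
      show (α : ℂ) ^ k = _
      rw [hr]
      push_cast
      rfl
    | zero => exact ⟨0, fun _ => 0, by simp⟩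
    | add x y hx hy ihx ihy =>
      obtain ⟨N, e, rfl⟩ := ihx
      obtain ⟨M, f, rfl⟩ := ihy
      refine ⟨max N M, fun i => (if i < N then e i else 0) + (if i < M then f i else 0), ?_⟩
      have h1 : ∑ i ∈ Finset.range N, (e i : ℝ) * α ^ i
          = ∑ i ∈ Finset.range (max N M), ((if i < N then e i else 0 : ℕ) : ℝ) * α ^ i := by
        rw [sum_pad _ (le_max_left N M) (fun i hi => by simp [Nat.not_lt.mpr hi])]
        apply Finset.sum_congr rfl
        intro i hi
        simp [Finset.mem_range.mp hi]
      have h2 : ∑ i ∈ Finset.range M, (f i : ℝ) * α ^ i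
          = ∑ i ∈ Finset.range (max N M), ((if i < M then f i else 0 : ℕ) : ℝ) * α ^ i := by
        rw [sum_pad _ (le_max_right N M) (fun i hi => by simp [Nat.not_lt.mpr hi])]
        apply Finset.sum_congr rfl
        intro i hi
        simp [Finset.mem_range.mp hi]
      have key : (∑ i ∈ Finset.range N, (e i : ℝ) * α ^ i)
            + (∑ i ∈ Finset.range M, (f i : ℝ) * α ^ i)
          = ∑ i ∈ Finset.range (max N M),
              (((if i < N then e i else 0) + (if i < M then f i else 0) : ℕ) : ℝ) * α ^ i := by
        rw [h1, h2, ← Finset.sum_add_distrib]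
        apply Finset.sum_congr rfl
        intro i _
        push_cast
        ring
      rw [← Complex.ofReal_add]
      exact congrArg (fun r : ℝ => (r : ℂ)) key
  · rintro ⟨N, e, rfl⟩
    have : ((∑ i ∈ Finset.range N, (e i : ℝ) * α ^ i : ℝ) : ℂ)
        = ∑ i ∈ Finset.range N, (e i) • ((α : ℂ)) ^ i := by
      push_cast
      apply Finset.sum_congr rfl
      intro i _
      rw [nsmul_eq_mul]
    rw [this]
    apply AddSubmonoid.sum_mem
    intro i _
    exact nsmul_mem (AddSubmonoid.subset_closure (Set.mem_range_self i)) (e i)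

private lemma rep_zero_iff (hαpos : 0 < α) (e : ℕ → ℕ) (N : ℕ) :
    (∑ i ∈ Finset.range N, (e i : ℝ) * α ^ i) = 0 ↔ ∀ i ∈ Finset.range N, e i = 0 := by
  constructor
  · intro h i hi
    have h' := (Finset.sum_eq_zero_iff_of_nonneg (fun i _ => by positivity)).mp h i hi
    have hp : (0:ℝ) < α ^ i := pow_pos hαpos i
    rcases mul_eq_zero.mp h' with h'' | h''
    · exact_mod_cast h''
    · exact absurd h'' (ne_of_gt hp)
  · intro h
    apply Finset.sum_eq_zero
    intro i hi
    rw [h i hi]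
    simp

private lemma reduce (hn : 2 ≤ n) (hαroot : α ^ n = (q : ℝ)) (T : ℕ) (e : ℕ → ℕ) :
    ∑ i ∈ Finset.range (n * T), (e i : ℝ) * α ^ i
      = ∑ j ∈ Finset.range n, ∑ t ∈ Finset.range T, (e (j + n * t) : ℝ) * (q : ℝ) ^ t * α ^ j := by
  have hn0 : 0 < n := by omega
  rw [← Finset.sum_product']
  refine Finset.sum_nbij' (i := fun i => (i % n, i / n)) (j := fun p => p.1 + n * p.2)
    ?_ ?_ ?_ ?_ ?_
  · intro a ha
    rw [Finset.mem_range] at ha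
    rw [Finset.mem_product, Finset.mem_range, Finset.mem_range]
    refine ⟨Nat.mod_lt _ hn0, ?_⟩
    rw [Nat.div_lt_iff_lt_mul hn0, mul_comm]
    exact ha
  · intro p hp
    rw [Finset.mem_product, Finset.mem_range, Finset.mem_range] at hp
    rw [Finset.mem_range]
    calc p.1 + n * p.2 < n + n * p.2 := by omega
      _ = n * (p.2 + 1) := by ring
      _ ≤ n * T := Nat.mul_le_mul_left n hp.2
  · intro a _
    exact Nat.mod_add_div a n
  · intro p hp
    rw [Finset.mem_product, Finset.mem_range, Finset.mem_range] at hp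
    have h1 : (p.1 + n * p.2) % n = p.1 := by
      rw [Nat.add_mul_mod_self_left, Nat.mod_eq_of_lt hp.1]
    have h2 : (p.1 + n * p.2) / n = p.2 := by
      rw [Nat.add_mul_div_left _ _ hn0, Nat.div_eq_of_lt hp.1, zero_add]
    simp [h1, h2]
  · intro a ha
    have hdecomp : a = a % n + n * (a / n) := (Nat.mod_add_div a n).symm
    conv_lhs => rw [hdecomp]
    rw [pow_add, pow_mul, hαroot]
    ring

end Rep



section Aux
variable {n : ℕ} {q : ℚ} {α : ℝ}

private lemma qkey_unique (hq : 0 < q) (hA : 2 ≤ q.num.natAbs) (hB : 2 ≤ q.den)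
    (hqkey : ∀ (k N : ℕ) (e : ℕ → ℕ), (∀ t, N ≤ t → e t = 0) →
      (∑ t ∈ Finset.range N, (e t : ℚ) * q ^ t) = q ^ k → e k = 0 → False)
    (t₀ T : ℕ) (e : ℕ → ℕ) (hpad : ∀ t, T ≤ t → e t = 0)
    (hsum : (∑ t ∈ Finset.range T, (e t : ℚ) * q ^ t) = q ^ t₀) :
    ∀ t, e t = if t = t₀ then 1 else 0 := by
  have het₀ : e t₀ ≠ 0 := fun h0 => hqkey t₀ T e hpad hsum h0
  have ht₀T : t₀ < T := by
    by_contra h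
    exact het₀ (hpad t₀ (Nat.le_of_not_lt h))
  have h1e : 1 ≤ e t₀ := Nat.one_le_iff_ne_zero.mpr het₀
  have hδ : (∑ t ∈ Finset.range T, (if t = t₀ then (1:ℚ) else 0) * q ^ t) = q ^ t₀ := by
    have h' : ∀ t ∈ Finset.range T,
        (if t = t₀ then (1:ℚ) else 0) * q ^ t = if t = t₀ then q ^ t₀ else 0 := by
      intro t _
      split <;> simp_all
    rw [Finset.sum_congr rfl h', Finset.sum_ite_eq' (Finset.range T) t₀]
    simp [ht₀T]
  have hzero : (∑ t ∈ Finset.range T, ((e t : ℚ) - if t = t₀ then 1 else 0) * q ^ t) = 0 := by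
    have h' : ∀ t ∈ Finset.range T, ((e t : ℚ) - if t = t₀ then 1 else 0) * q ^ t
        = (e t : ℚ) * q ^ t - (if t = t₀ then (1:ℚ) else 0) * q ^ t := fun t _ => by ring
    rw [Finset.sum_congr rfl h', Finset.sum_sub_distrib, hsum, hδ, sub_self]
  have hnonneg : ∀ t ∈ Finset.range T, 0 ≤ ((e t : ℚ) - if t = t₀ then 1 else 0) * q ^ t := by
    intro t _
    apply mul_nonneg _ (le_of_lt (pow_pos hq t))
    split
    · rename_i h
      subst h
      have : (1:ℚ) ≤ (e t : ℚ) := by exact_mod_cast h1e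
      linarith
    · simpa using (Nat.cast_nonneg (e t) : (0:ℚ) ≤ (e t : ℚ))
  have hterms := (Finset.sum_eq_zero_iff_of_nonneg hnonneg).mp hzero
  intro t
  by_cases htT : t < T
  · have := hterms t (Finset.mem_range.mpr htT)
    have hqt : q ^ t ≠ 0 := ne_of_gt (pow_pos hq t)
    have heq : (e t : ℚ) = if t = t₀ then 1 else 0 := by
      have := mul_eq_zero.mp this
      rcases this with h' | h'
      · linarith [sub_eq_zero.mp (by linarith [h'] : (e t : ℚ) - (if t = t₀ then 1 else 0) = 0)]
      · exact absurd h' hqt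
    by_cases h : t = t₀
    · rw [if_pos h] at heq ⊢
      exact_mod_cast heq
    · rw [if_neg h] at heq ⊢
      exact_mod_cast heq
  · have h0 := hpad t (Nat.le_of_not_lt htT)
    have : t ≠ t₀ := by omega
    simp [h0, this]

end Aux
section Uniq
variable {n : ℕ} {q : ℚ} {α : ℝ}

private lemma combine (e f : ℕ → ℕ) (N M : ℕ) (α : ℝ) :
    (∑ i ∈ Finset.range N, (e i : ℝ) * α ^ i) + (∑ i ∈ Finset.range M, (f i : ℝ) * α ^ i)
      = ∑ i ∈ Finset.range (max N M),
          (((if i < N then e i else 0) + (if i < M then f i else 0) : ℕ) : ℝ) * α ^ i := by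
  have h1 : ∑ i ∈ Finset.range N, (e i : ℝ) * α ^ i
      = ∑ i ∈ Finset.range (max N M), ((if i < N then e i else 0 : ℕ) : ℝ) * α ^ i := by
    rw [sum_pad _ (le_max_left N M) (fun i hi => by simp [Nat.not_lt.mpr hi])]
    apply Finset.sum_congr rfl
    intro i hi
    simp [Finset.mem_range.mp hi]
  have h2 : ∑ i ∈ Finset.range M, (f i : ℝ) * α ^ i
      = ∑ i ∈ Finset.range (max N M), ((if i < M then f i else 0 : ℕ) : ℝ) * α ^ i := by
    rw [sum_pad _ (le_max_right N M) (fun i hi => by simp [Nat.not_lt.mpr hi])]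
    apply Finset.sum_congr rfl
    intro i hi
    simp [Finset.mem_range.mp hi]
  rw [h1, h2, ← Finset.sum_add_distrib]
  apply Finset.sum_congr rfl
  intro i _
  push_cast
  ring

private lemma uniq (hn : 2 ≤ n) (hq : 0 < q)
    (hA : 2 ≤ q.num.natAbs) (hB : 2 ≤ q.den)
    (hαpos : 0 < α) (hαroot : α ^ n = (q : ℝ))
    (hirr : ∀ j : ℕ, 1 ≤ j → j ≤ n - 1 → Irrational (α ^ j))
    (j K : ℕ) (g : ℕ → ℕ) (hpad : ∀ i, K ≤ i → g i = 0)
    (hsum : (∑ i ∈ Finset.range K, (g i : ℝ) * α ^ i) = α ^ j) :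
    ∀ i, g i = if i = j then 1 else 0 := by
  have hn0 : 0 < n := by omega
  set T := K + j + 1 with hT
  have h2T : 2 * T ≤ n * T := Nat.mul_le_mul_right T hn
  have hKT : K ≤ n * T := by omega
  have hjT : j < n * T := by omega
  have ht₀T : j / n < T := lt_of_le_of_lt (Nat.div_le_self j n) (by omega)
  have hr : j % n < n := Nat.mod_lt _ hn0
  set δ : ℕ → ℕ := fun i => if i = j then 1 else 0 with hδdef
  have hsum1 : ∑ i ∈ Finset.range (n * T), (g i : ℝ) * α ^ i = α ^ j := by
    rw [sum_pad _ hKT (fun i hi => by simp [hpad i hi])]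
    exact hsum
  have hsum2 : ∑ i ∈ Finset.range (n * T), (δ i : ℝ) * α ^ i = α ^ j := by
    rw [Finset.sum_eq_single j]
    · simp [hδdef]
    · intro b _ hbj
      simp [hδdef, hbj]
    · intro h
      exact absurd (Finset.mem_range.mpr hjT) h
  rw [reduce hn hαroot T g] at hsum1
  rw [reduce hn hαroot T δ] at hsum2
  set c : ℕ → ℚ := fun j' =>
    ∑ t ∈ Finset.range T, ((g (j' + n * t) : ℚ) - (δ (j' + n * t) : ℚ)) * q ^ t with hc
  have hcz : ∑ j' ∈ Finset.range n, (c j' : ℝ) * α ^ j' = 0 := by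
    have hterm : ∀ j' ∈ Finset.range n, (c j' : ℝ) * α ^ j'
        = (∑ t ∈ Finset.range T, (g (j' + n * t) : ℝ) * (q : ℝ) ^ t * α ^ j')
          - (∑ t ∈ Finset.range T, (δ (j' + n * t) : ℝ) * (q : ℝ) ^ t * α ^ j') := by
      intro j' _
      have hcast : ((c j' : ℚ) : ℝ)
          = ∑ t ∈ Finset.range T, ((g (j' + n * t) : ℝ) - (δ (j' + n * t) : ℝ)) * (q : ℝ) ^ t := by
        rw [hc]
        push_cast
        ring
      rw [hcast, Finset.sum_mul, ← Finset.sum_sub_distrib]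
      apply Finset.sum_congr rfl
      intro t _
      ring
    rw [Finset.sum_congr rfl hterm, Finset.sum_sub_distrib, hsum1, hsum2, sub_self]
  have hind := indep hn hq hαpos hαroot hirr c hcz
  have hδval : ∀ j' < n, ∀ t : ℕ, δ (j' + n * t) = if j' = j % n ∧ t = j / n then 1 else 0 := by
    intro j' hj' t
    by_cases hcond : j' + n * t = j
    · have h1 : j % n = j' := by
        rw [← hcond, Nat.add_mul_mod_self_left, Nat.mod_eq_of_lt hj']
      have h2 : j / n = t := by
        rw [← hcond, Nat.add_mul_div_left _ _ hn0, Nat.div_eq_of_lt hj', zero_add]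
      have hc2 : j' = j % n ∧ t = j / n := ⟨h1.symm, h2.symm⟩
      simp only [hδdef]
      rw [if_pos hcond, if_pos hc2]
    · have hcond2 : ¬(j' = j % n ∧ t = j / n) := by
        rintro ⟨rfl, rfl⟩
        exact hcond (Nat.mod_add_div j n)
      simp [hδdef, hcond, hcond2]
  have hDsum : ∀ j' < n, (∑ t ∈ Finset.range T, (δ (j' + n * t) : ℚ) * q ^ t)
      = if j' = j % n then q ^ (j / n) else 0 := by
    intro j' hj'
    have h' : ∀ t ∈ Finset.range T, ((δ (j' + n * t) : ℚ)) * q ^ t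
        = if t = j / n then (if j' = j % n then q ^ (j / n) else 0) else 0 := by
      intro t _
      rw [hδval j' hj' t]
      by_cases h1 : j' = j % n <;> by_cases h2 : t = j / n <;> simp [h1, h2]
    rw [Finset.sum_congr rfl h', Finset.sum_ite_eq' (Finset.range T) (j / n),
      if_pos (Finset.mem_range.mpr ht₀T)]
  have hGsum : ∀ j' < n, (∑ t ∈ Finset.range T, (g (j' + n * t) : ℚ) * q ^ t)
      = if j' = j % n then q ^ (j / n) else 0 := by
    intro j' hj'
    have h0 := hind j' hj'
    simp only [hc] at h0
    have h' : ∀ t ∈ Finset.range T, ((g (j' + n * t) : ℚ) - (δ (j' + n * t) : ℚ)) * q ^ t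
        = (g (j' + n * t) : ℚ) * q ^ t - (δ (j' + n * t) : ℚ) * q ^ t := fun t _ => by ring
    rw [Finset.sum_congr rfl h', Finset.sum_sub_distrib, sub_eq_zero] at h0
    rw [h0, hDsum j' hj']
  -- conclude for each i
  intro i
  by_cases hiT : i < n * T
  · have hidecomp : i = i % n + n * (i / n) := (Nat.mod_add_div i n).symm
    have hin : i % n < n := Nat.mod_lt _ hn0
    have hiT' : i / n < T := by
      rw [Nat.div_lt_iff_lt_mul hn0, mul_comm]
      exact hiT
    by_cases hres : i % n = j % n
    · -- use qkey_unique on residue j % n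
      have hpad' : ∀ t, T ≤ t → g (j % n + n * t) = 0 := by
        intro t ht
        apply hpad
        have : n * T ≤ n * t := Nat.mul_le_mul_left n ht
        omega
      have hsum' := hGsum (j % n) hr
      rw [if_pos rfl] at hsum'
      have huniqt := qkey_unique hq hA hB (qkey hq hA hB) (j / n) T
        (fun t => g (j % n + n * t)) hpad' hsum'
      have hgi : g i = if i / n = j / n then 1 else 0 := by
        conv_lhs => rw [hidecomp, hres]
        exact huniqt (i / n)
      rw [hgi]
      by_cases hd : i / n = j / n
      · have : i = j := by
          rw [hidecomp, hres, hd, Nat.mod_add_div]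
        simp [hd, this]
      · have : i ≠ j := by
          intro h
          exact hd (by rw [h])
        simp [hd, this]
    · -- residue i % n ≠ j % n : everything zero
      have hsum' := hGsum (i % n) hin
      rw [if_neg hres] at hsum'
      have hterms := (Finset.sum_eq_zero_iff_of_nonneg
        (fun t _ => mul_nonneg (Nat.cast_nonneg _) (le_of_lt (pow_pos hq t)))).mp hsum'
      have hgz := hterms (i / n) (Finset.mem_range.mpr hiT')
      have hqt : q ^ (i / n) ≠ 0 := ne_of_gt (pow_pos hq _)
      have : (g (i % n + n * (i / n)) : ℚ) = 0 := by
        rcases mul_eq_zero.mp hgz with h' | h'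
        · exact h'
        · exact absurd h' hqt
      have hg0 : g i = 0 := by
        rw [hidecomp]
        exact_mod_cast this
      have hij : i ≠ j := fun h => hres (by rw [h])
      simp [hg0, hij]
  · have hg0 : g i = 0 := hpad i (by omega)
    have hij : i ≠ j := by omega
    simp [hg0, hij]

end Uniq

end All

theorem stmt_5 (n : ℕ) (hn : 2 ≤ n) (q : ℚ) (hq : 0 < q)
    (hqnotint : ∀ m : ℕ, q ≠ (m : ℚ))
    (hqnotrec : ∀ m : ℕ, 0 < m → q ≠ 1 / (m : ℚ))
    (α : ℝ) (hαpos : 0 < α) (hαroot : α ^ n = (q : ℝ))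
    (hirr : ∀ j : ℕ, 1 ≤ j → j ≤ n - 1 → Irrational (α ^ j)) :
    IsAtomicMalpha (α : ℂ) ∧
    atomsM (α : ℂ) = Set.range (fun j : ℕ => (α : ℂ) ^ j) ∧
    strongAtomsM (α : ℂ) = ∅ := by
  have hnum_pos : 0 < q.num := Rat.num_pos.mpr hq
  have hdenpos : 0 < q.den := q.pos
  have hB : 2 ≤ q.den := by
    by_contra h
    have hden1 : q.den = 1 := by omega
    apply hqnotint q.num.toNat
    conv_lhs => rw [← Rat.num_div_den q]
    rw [hden1]
    push_cast [Int.toNat_of_nonneg (le_of_lt hnum_pos)]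
    simp
    exact_mod_cast (Int.toNat_of_nonneg (le_of_lt hnum_pos)).symm
  have hA : 2 ≤ q.num.natAbs := by
    by_contra h
    have hcast : (q.num.natAbs : ℤ) = q.num := Int.natAbs_of_nonneg (le_of_lt hnum_pos)
    have h1 : q.num = 1 := by omega
    apply hqnotrec q.den hdenpos
    conv_lhs => rw [← Rat.num_div_den q]
    rw [h1]
    push_cast
    ring
  have hα0 : (α : ℂ) ≠ 0 := Complex.ofReal_ne_zero.mpr (ne_of_gt hαpos)
  have hpow_mem : ∀ j : ℕ, ((α : ℂ)) ^ j ∈ Malpha (α : ℂ) :=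
    fun j => AddSubmonoid.subset_closure (Set.mem_range_self j)
  -- every power is an atom
  have hpow_atom : ∀ j : ℕ, ((α : ℂ)) ^ j ∈ atomsM (α : ℂ) := by
    intro j
    refine ⟨hpow_mem j, pow_ne_zero j hα0, ?_⟩
    intro u v hu hv huv
    by_contra hcon
    push_neg at hcon
    obtain ⟨hu0, hv0⟩ := hcon
    obtain ⟨N, e, rfl⟩ := mem_Malpha_iff.mp hu
    obtain ⟨M, f, rfl⟩ := mem_Malpha_iff.mp hv
    have hreal : (∑ i ∈ Finset.range N, (e i : ℝ) * α ^ i)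
        + (∑ i ∈ Finset.range M, (f i : ℝ) * α ^ i) = α ^ j := by
      have h' : ((α ^ j : ℝ) : ℂ) = (((∑ i ∈ Finset.range N, (e i : ℝ) * α ^ i)
          + (∑ i ∈ Finset.range M, (f i : ℝ) * α ^ i) : ℝ) : ℂ) := by
        push_cast
        push_cast at huv
        exact huv
      exact (Complex.ofReal_inj.mp h').symm
    set g : ℕ → ℕ := fun i => (if i < N then e i else 0) + (if i < M then f i else 0) with hg
    have hgsum : (∑ i ∈ Finset.range (max N M), (g i : ℝ) * α ^ i) = α ^ j := by
      rw [← combine e f N M α]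
      exact hreal
    have hgpad : ∀ i, max N M ≤ i → g i = 0 := by
      intro i hi
      simp [hg, Nat.not_lt.mpr (le_trans (le_max_left N M) hi),
        Nat.not_lt.mpr (le_trans (le_max_right N M) hi)]
    have huniq := uniq hn hq hA hB hαpos hαroot hirr j (max N M) g hgpad hgsum
    obtain ⟨i₁, hi₁N, hei₁⟩ : ∃ i, i < N ∧ e i ≠ 0 := by
      by_contra h
      push_neg at h
      exact (Complex.ofReal_ne_zero.mp hu0)
        ((rep_zero_iff hαpos e N).mpr (fun i hi => h i (Finset.mem_range.mp hi)))
    obtain ⟨i₂, hi₂M, hfi₂⟩ : ∃ i, i < M ∧ f i ≠ 0 := by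
      by_contra h
      push_neg at h
      exact (Complex.ofReal_ne_zero.mp hv0)
        ((rep_zero_iff hαpos f M).mpr (fun i hi => h i (Finset.mem_range.mp hi)))
    have hg₁ : g i₁ ≠ 0 := by
      simp only [hg, if_pos hi₁N]
      omega
    have hg₂ : g i₂ ≠ 0 := by
      simp only [hg, if_pos hi₂M]
      omega
    have h₁ : i₁ = j := by
      by_contra hne
      have := huniq i₁
      rw [if_neg hne] at this
      exact hg₁ this
    have h₂ : i₂ = j := by
      by_contra hne
      have := huniq i₂
      rw [if_neg hne] at this
      exact hg₂ this
    have hgj := huniq j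
    rw [if_pos rfl] at hgj
    have h2gj : 2 ≤ g j := by
      subst h₁
      subst h₂
      simp only [hg, if_pos hi₁N, if_pos hi₂M]
      omega
    omega
  -- every atom is a power
  have hatom_pow : ∀ a ∈ atomsM (α : ℂ), ∃ j : ℕ, a = (α : ℂ) ^ j := by
    rintro a ⟨ha_mem, ha0, ha_atom⟩
    obtain ⟨N, e, rfl⟩ := mem_Malpha_iff.mp ha_mem
    obtain ⟨i₁, hi₁N, hei₁⟩ : ∃ i, i < N ∧ e i ≠ 0 := by
      by_contra h
      push_neg at h
      exact (Complex.ofReal_ne_zero.mp ha0)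
        ((rep_zero_iff hαpos e N).mpr (fun i hi => h i (Finset.mem_range.mp hi)))
    set e' : ℕ → ℕ := fun i => if i = i₁ then e i - 1 else e i with he'
    have h1e : 1 ≤ e i₁ := Nat.one_le_iff_ne_zero.mpr hei₁
    have hsplit : (∑ i ∈ Finset.range N, (e i : ℝ) * α ^ i)
        = α ^ i₁ + ∑ i ∈ Finset.range N, (e' i : ℝ) * α ^ i := by
      have hterm : ∀ i ∈ Finset.range N, (e i : ℝ) * α ^ i
          = (if i = i₁ then α ^ i₁ else 0) + (e' i : ℝ) * α ^ i := by
        intro i _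
        by_cases h : i = i₁
        · subst h
          rw [if_pos rfl]
          simp only [he', if_pos rfl]
          rw [Nat.cast_sub h1e]
          push_cast
          ring
        · rw [if_neg h]
          simp only [he', if_neg h]
          ring
      rw [Finset.sum_congr rfl hterm, Finset.sum_add_distrib,
        Finset.sum_ite_eq' (Finset.range N) i₁, if_pos (Finset.mem_range.mpr hi₁N)]
    have hrest_mem : ((∑ i ∈ Finset.range N, (e' i : ℝ) * α ^ i : ℝ) : ℂ) ∈ Malpha (α : ℂ) :=
      mem_Malpha_iff.mpr ⟨N, e', rfl⟩
    have hdecomp : ((∑ i ∈ Finset.range N, (e i : ℝ) * α ^ i : ℝ) : ℂ)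
        = (α : ℂ) ^ i₁ + ((∑ i ∈ Finset.range N, (e' i : ℝ) * α ^ i : ℝ) : ℂ) := by
      rw [hsplit]
      push_cast
      ring
    rcases ha_atom _ _ (hpow_mem i₁) hrest_mem hdecomp with h0 | h0
    · exact absurd h0 (pow_ne_zero i₁ hα0)
    · refine ⟨i₁, ?_⟩
      rw [hdecomp, h0, add_zero]
  refine ⟨?_, ?_, ?_⟩
  · -- atomic
    intro x hx hx0
    obtain ⟨N, e, rfl⟩ := mem_Malpha_iff.mp hx
    refine ⟨(Finset.range N).val.bind (fun i => Multiset.replicate (e i) ((α : ℂ) ^ i)), ?_, ?_⟩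
    · intro a ha
      rw [Multiset.mem_bind] at ha
      obtain ⟨i, _, hai⟩ := ha
      rw [Multiset.eq_of_mem_replicate hai]
      exact hpow_atom i
    · rw [Multiset.sum_bind]
      have h1 : ((Finset.range N).val.map
            (fun i => (Multiset.replicate (e i) ((α : ℂ) ^ i)).sum)).sum
          = ∑ i ∈ Finset.range N, (e i : ℂ) * (α : ℂ) ^ i := by
        rw [Finset.sum_eq_multiset_sum]
        apply congrArg Multiset.sum
        apply Multiset.map_congr rfl
        intro i _
        rw [Multiset.sum_replicate, nsmul_eq_mul]
      rw [h1]
      push_cast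
      rfl
  · -- atoms = powers
    ext a
    constructor
    · intro ha
      obtain ⟨j, rfl⟩ := hatom_pow a ha
      exact ⟨j, rfl⟩
    · rintro ⟨j, rfl⟩
      exact hpow_atom j
  · -- no strong atoms
    ext a
    simp only [Set.mem_empty_iff_false, iff_false]
    rintro ⟨ha_atom, hstrong⟩
    obtain ⟨j, rfl⟩ := hatom_pow a ha_atom
    have hq1 : q ≠ 1 := by simpa using hqnotint 1
    have hαn : ((α : ℂ)) ^ n = (q : ℂ) := by
      have := congrArg (fun r : ℝ => (r : ℂ)) hαroot
      push_cast at this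
      exact_mod_cast this
    have hne : (α : ℂ) ^ (j + n) ≠ (α : ℂ) ^ j := by
      rw [pow_add, hαn]
      intro h
      have h' : (α : ℂ) ^ j * (q : ℂ) = (α : ℂ) ^ j * 1 := by simpa using h
      have := mul_left_cancel₀ (pow_ne_zero j hα0) h'
      exact hq1 (by exact_mod_cast this)
    have hNp : 0 < q.num.natAbs := by omega
    have hsum : (Multiset.replicate q.den ((α : ℂ) ^ (j + n))).sum
        = q.num.natAbs • ((α : ℂ) ^ j) := by
      rw [Multiset.sum_replicate, nsmul_eq_mul, nsmul_eq_mul, pow_add, hαn]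
      have hcast : ((q.num.natAbs : ℕ) : ℂ) = (q : ℂ) * ((q.den : ℕ) : ℂ) := by
        have h0 := cast_numabs hq
        have := congrArg (fun r : ℚ => (r : ℂ)) h0
        push_cast at this
        exact_mod_cast this
      rw [hcast]
      ring
    have hrep := hstrong q.num.natAbs hNp (Multiset.replicate q.den ((α : ℂ) ^ (j + n)))
      (fun b hb => by rw [Multiset.eq_of_mem_replicate hb]; exact hpow_atom (j + n)) hsum
    have hmem : (α : ℂ) ^ (j + n) ∈ Multiset.replicate q.den ((α : ℂ) ^ (j + n)) :=
      Multiset.mem_replicate.mpr ⟨by omega, rfl⟩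
    rw [hrep] at hmem
    exact hne (Multiset.eq_of_mem_replicate hmem)
end

section
/- There exists an algebraic number α such that M_α is atomic, A(M_α) is infinite, and S(M_α) = ∅. -/
open Polynomial

/-- Key arithmetic lemma over ℕ. -/
lemma key_nat : ∀ (N : ℕ) (t : Multiset ℕ) (k : ℕ), k ≤ N → (∀ e ∈ t, e ≤ N) →
    (t.map fun e => 2 ^ e * 3 ^ (N - e)).sum = 2 ^ k * 3 ^ (N - k) → t = {k} := by
  intro N
  induction N with
  | zero =>
    intro t k hk ht hsum
    interval_cases k
    have h0 : ∀ e ∈ t, e = 0 := fun e he => Nat.le_zero.mp (ht e he)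
    have : t = Multiset.replicate (Multiset.card t) 0 :=
      (Multiset.eq_replicate_card).mpr h0
    rw [this] at hsum ⊢
    simp only [Multiset.map_replicate, pow_zero, Nat.sub_zero, one_mul,
      Multiset.sum_replicate, smul_eq_mul, mul_one] at hsum
    rw [hsum]; rfl
  | succ N ih =>
    intro t k hk ht hsum
    set m := t.count (N + 1) with hm
    set t' := t.filter (fun e => ¬ e = N + 1) with ht'
    have hsplit : Multiset.replicate m (N + 1) + t' = t := by
      rw [ht', hm, ← Multiset.filter_eq']
      exact Multiset.filter_add_not _ t
    have ht'le : ∀ e ∈ t', e ≤ N := by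
      intro e he
      have h1 := Multiset.of_mem_filter he
      have h2 := ht e (Multiset.mem_of_mem_filter he)
      omega
    have hmapt' : (t'.map fun e => 2 ^ e * 3 ^ (N + 1 - e)).sum
        = 3 * (t'.map fun e => 2 ^ e * 3 ^ (N - e)).sum := by
      rw [← Multiset.sum_map_mul_left]
      apply congrArg
      apply Multiset.map_congr rfl
      intro e he
      have : N + 1 - e = (N - e) + 1 := by have := ht'le e he; omega
      rw [this, pow_succ]; ring
    set S' := (t'.map fun e => 2 ^ e * 3 ^ (N - e)).sum with hS'
    have hsum2 : m * 2 ^ (N + 1) + 3 * S' = 2 ^ k * 3 ^ (N + 1 - k) := by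
      rw [← hsplit] at hsum
      simpa [Multiset.map_replicate, Multiset.sum_replicate, hmapt'] using hsum
    rcases Nat.lt_or_ge k (N + 1) with hkN | hkN
    · -- k ≤ N
      have hkN' : k ≤ N := by omega
      have hRHS : 2 ^ k * 3 ^ (N + 1 - k) = 3 * (2 ^ k * 3 ^ (N - k)) := by
        have : N + 1 - k = (N - k) + 1 := by omega
        rw [this, pow_succ]; ring
      rw [hRHS] at hsum2
      have hdvd : (3 : ℕ) ∣ m * 2 ^ (N + 1) := by omega
      have hcop : Nat.Coprime 3 (2 ^ (N + 1)) := Nat.Coprime.pow_right _ (by norm_num)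
      have hdm : (3 : ℕ) ∣ m := hcop.dvd_of_dvd_mul_right hdvd
      obtain ⟨s, hms⟩ := hdm
      rw [hms] at hsum2 hsplit
      have hsum3 : 2 * s * 2 ^ N + S' = 2 ^ k * 3 ^ (N - k) := by
        have h33 : 3 * (2 * s * 2 ^ N + S') = 3 * (2 ^ k * 3 ^ (N - k)) := by
          rw [← hsum2, pow_succ]
          ring
        omega
      have heq : ((Multiset.replicate (2 * s) N + t').map
          fun e => 2 ^ e * 3 ^ (N - e)).sum = 2 ^ k * 3 ^ (N - k) := by
        simp only [Multiset.map_add, Multiset.sum_add, Multiset.map_replicate,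
          Multiset.sum_replicate, Nat.sub_self, pow_zero, mul_one, smul_eq_mul, ← hS']
        exact hsum3
      have hmem : ∀ e ∈ Multiset.replicate (2 * s) N + t', e ≤ N := by
        intro e he
        rcases Multiset.mem_add.mp he with h | h
        · exact le_of_eq (Multiset.eq_of_mem_replicate h)
        · exact ht'le e h
      have hres := ih (Multiset.replicate (2 * s) N + t') k hkN' hmem heq
      have hcard := congrArg Multiset.card hres
      simp only [Multiset.card_add, Multiset.card_replicate, Multiset.card_singleton] at hcard
      have hs0 : s = 0 := by omega
      subst hs0
      simp only [Nat.mul_zero, Multiset.replicate_zero, zero_add] at hres hsplit ⊢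
      rw [← hsplit, hres]
    · -- k = N + 1
      have hkeq : k = N + 1 := by omega
      subst hkeq
      rw [Nat.sub_self, pow_zero, mul_one] at hsum2
      have hP : 0 < 2 ^ (N + 1) := by positivity
      have h1 : m * 2 ^ (N + 1) ≤ 1 * 2 ^ (N + 1) := by rw [one_mul]; omega
      have hmle : m ≤ 1 := Nat.le_of_mul_le_mul_right h1 hP
      interval_cases hm2 : m
      · exfalso
        have h3d : (3 : ℕ) ∣ 2 ^ (N + 1) := ⟨S', by omega⟩
        have := Nat.Prime.dvd_of_dvd_pow (p := 3) (by norm_num) h3d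
        omega
      · have hS0 : S' = 0 := by omega
        have ht'0 : t' = 0 := by
          by_contra h
          obtain ⟨e, he⟩ := Multiset.exists_mem_of_ne_zero h
          have : 2 ^ e * 3 ^ (N - e) ≤ S' :=
            Multiset.single_le_sum (fun x hx => Nat.zero_le x) _
              (Multiset.mem_map_of_mem _ he)
          have h2 : 0 < 2 ^ e * 3 ^ (N - e) := by positivity
          omega
        rw [← hsplit, ht'0]
        rfl

lemma aux_cast (e N : ℕ) (h : e ≤ N) :
    (2 / 3 : ℚ) ^ e * 3 ^ N = ((2 ^ e * 3 ^ (N - e) : ℕ) : ℚ) := by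
  have h3 : (3 : ℚ) ^ N = 3 ^ (N - e) * 3 ^ e := by
    rw [← pow_add]
    congr 1
    omega
  push_cast
  rw [div_pow, h3]
  field_simp

lemma key_rat (t : Multiset ℕ) (k : ℕ)
    (h : (t.map fun e => (2 / 3 : ℚ) ^ e).sum = (2 / 3 : ℚ) ^ k) : t = {k} := by
  set N := max k (t.sup) with hN
  have hkN : k ≤ N := le_max_left _ _
  have htN : ∀ e ∈ t, e ≤ N := fun e he => le_trans (Multiset.le_sup he) (le_max_right _ _)
  have h2 : (t.map fun e => (2 / 3 : ℚ) ^ e * 3 ^ N).sum = (2 / 3 : ℚ) ^ k * 3 ^ N := by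
    rw [Multiset.sum_map_mul_right, h]
  rw [aux_cast k N hkN] at h2
  have h3 : (t.map fun e => (2 / 3 : ℚ) ^ e * 3 ^ N).sum
      = (((t.map fun e => 2 ^ e * 3 ^ (N - e)).sum : ℕ) : ℚ) := by
    rw [Multiset.map_congr rfl (fun e he => aux_cast e N (htN e he))]
    rw [Nat.cast_multiset_sum, Multiset.map_map]
    rfl
  rw [h3] at h2
  exact key_nat N t k hkN htN (Nat.cast_injective h2)

lemma cast_pow_23 (e : ℕ) : (((2 / 3 : ℚ) ^ e : ℚ) : ℂ) = (2 / 3 : ℂ) ^ e := by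
  push_cast
  norm_num

lemma key_complex (t : Multiset ℕ) (k : ℕ)
    (h : (t.map fun e => (2 / 3 : ℂ) ^ e).sum = (2 / 3 : ℂ) ^ k) : t = {k} := by
  apply key_rat t k
  apply Rat.cast_injective (α := ℂ)
  rw [Rat.cast_multiset_sum, Multiset.map_map]
  have hc : Multiset.map (Rat.cast ∘ fun e => ((2 / 3 : ℚ)) ^ e) t
      = t.map (fun e => (2 / 3 : ℂ) ^ e) :=
    Multiset.map_congr rfl (fun e _ => cast_pow_23 e)
  rw [hc, h, cast_pow_23]

lemma lift_multiset (l : Multiset ℂ) (f : ℕ → ℂ) (h : ∀ y ∈ l, ∃ n, f n = y) :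
    ∃ t : Multiset ℕ, t.map f = l := by
  induction l using Multiset.induction_on with
  | empty => exact ⟨0, rfl⟩
  | cons a s ih =>
    obtain ⟨t, ht⟩ := ih (fun y hy => h y (Multiset.mem_cons_of_mem hy))
    obtain ⟨n, hn⟩ := h a (Multiset.mem_cons_self a s)
    exact ⟨n ::ₘ t, by rw [Multiset.map_cons, ht, hn]⟩

lemma mem_Malpha_iff_s6 {x : ℂ} :
    x ∈ Malpha (2 / 3) ↔ ∃ t : Multiset ℕ, (t.map fun e => (2 / 3 : ℂ) ^ e).sum = x := by
  constructor
  · intro hx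
    obtain ⟨l, hl, hsum⟩ := AddSubmonoid.exists_multiset_of_mem_closure hx
    obtain ⟨t, ht⟩ := lift_multiset l (fun e => (2 / 3 : ℂ) ^ e) (fun y hy => hl y hy)
    exact ⟨t, by rw [ht, hsum]⟩
  · rintro ⟨t, rfl⟩
    apply AddSubmonoid.multiset_sum_mem
    intro y hy
    obtain ⟨e, _, rfl⟩ := Multiset.mem_map.mp hy
    exact AddSubmonoid.subset_closure ⟨e, rfl⟩

lemma pow_mem23 (k : ℕ) : (2 / 3 : ℂ) ^ k ∈ Malpha (2 / 3) :=
  AddSubmonoid.subset_closure ⟨k, rfl⟩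

lemma pow_atom (k : ℕ) : (2 / 3 : ℂ) ^ k ∈ atomsM (2 / 3) := by
  refine ⟨pow_mem23 k, pow_ne_zero _ (by norm_num), ?_⟩
  intro u v hu hv heq
  obtain ⟨tu, htu⟩ := mem_Malpha_iff_s6.mp hu
  obtain ⟨tv, htv⟩ := mem_Malpha_iff_s6.mp hv
  have hsum : ((tu + tv).map fun e => (2 / 3 : ℂ) ^ e).sum = (2 / 3 : ℂ) ^ k := by
    rw [Multiset.map_add, Multiset.sum_add, htu, htv, heq]
  have := key_complex _ _ hsum
  have hcard := congrArg Multiset.card this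
  simp only [Multiset.card_add, Multiset.card_singleton] at hcard
  rcases Nat.add_eq_one_iff.mp hcard with ⟨h1, _⟩ | ⟨_, h2⟩
  · left
    rw [← htu, Multiset.card_eq_zero.mp h1]
    rfl
  · right
    rw [← htv, Multiset.card_eq_zero.mp h2]
    rfl

lemma atom_eq_pow {a : ℂ} (ha : a ∈ atomsM (2 / 3)) : ∃ k : ℕ, a = (2 / 3 : ℂ) ^ k := by
  obtain ⟨hmem, hne, hatom⟩ := ha
  obtain ⟨t, ht⟩ := mem_Malpha_iff_s6.mp hmem
  have htne : t ≠ 0 := by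
    rintro rfl
    simp at ht
    exact hne ht.symm
  obtain ⟨x, hx⟩ := Multiset.exists_mem_of_ne_zero htne
  obtain ⟨t', rfl⟩ := Multiset.exists_cons_of_mem hx
  rw [Multiset.map_cons, Multiset.sum_cons] at ht
  rcases hatom ((2 / 3 : ℂ) ^ x) ((t'.map fun e => (2 / 3 : ℂ) ^ e).sum)
      (pow_mem23 x) (mem_Malpha_iff_s6.mpr ⟨t', rfl⟩) ht.symm with h | h
  · exact absurd h (pow_ne_zero _ (by norm_num))
  · exact ⟨x, by rw [← ht, h, add_zero]⟩

lemma pow_inj : Function.Injective (fun k : ℕ => (2 / 3 : ℂ) ^ k) := by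
  intro m n h
  have : ({m} : Multiset ℕ).map (fun e => (2 / 3 : ℂ) ^ e) = {(2 / 3 : ℂ) ^ m} := rfl
  have hres := key_complex {m} n (by simp [h])
  simpa using hres

theorem stmt_6 :
    ∃ α : ℂ, IsAlgebraic ℚ α ∧
      IsAtomicMalpha α ∧ (atomsM α).Infinite ∧ strongAtomsM α = ∅ := by
  refine ⟨2 / 3, ?_, ?_, ?_, ?_⟩
  · have h := isAlgebraic_algebraMap (R := ℚ) (A := ℂ) (2 / 3)
    have he : algebraMap ℚ ℂ (2 / 3) = (2 / 3 : ℂ) := by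
      rw [eq_ratCast (algebraMap ℚ ℂ)]
      push_cast
      norm_num
    rwa [he] at h
  · intro x hx hne
    obtain ⟨t, ht⟩ := mem_Malpha_iff_s6.mp hx
    refine ⟨t.map fun e => (2 / 3 : ℂ) ^ e, ?_, ht⟩
    intro a ha
    obtain ⟨e, _, rfl⟩ := Multiset.mem_map.mp ha
    exact pow_atom e
  · exact Set.infinite_of_injective_forall_mem pow_inj pow_atom
  · rw [Set.eq_empty_iff_forall_notMem]
    rintro a ⟨ha, hstrong⟩
    obtain ⟨k, rfl⟩ := atom_eq_pow ha
    have hsum : (Multiset.replicate 3 ((2 / 3 : ℂ) ^ (k + 1))).sum = (2 : ℕ) • ((2 / 3 : ℂ) ^ k) := by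
      rw [Multiset.sum_replicate]
      simp only [nsmul_eq_mul, Nat.cast_ofNat]
      rw [pow_succ]
      ring
    have := hstrong 2 (by norm_num)
      (Multiset.replicate 3 ((2 / 3 : ℂ) ^ (k + 1)))
      (fun b hb => by rw [Multiset.eq_of_mem_replicate hb]; exact pow_atom (k + 1))
      hsum
    have hcard := congrArg Multiset.card this
    simp at hcard
end

section
/- Let α be a positive real algebraic number whose minimal polynomial over ℚ has exactly three positive real roots (one of which is α itself). Then M_α is atomic, every power α^n (n ∈ ℕ₀) is a strong atom of M_α, and both A(M_α) and S(M_α) are infinite. -/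
open Polynomial

lemma aux_castEval (p : Polynomial ℕ) (x : ℝ) :
    aeval (x : ℂ) p = (((p.map (Nat.castRingHom ℝ)).eval x : ℝ) : ℂ) := by
  have h : (((p.map (Nat.castRingHom ℝ)).eval x : ℝ) : ℂ)
      = Complex.ofRealHom (p.eval₂ (Nat.castRingHom ℝ) x) := by
    rw [Polynomial.eval_map]; rfl
  rw [h, Polynomial.hom_eval₂, Polynomial.aeval_def]
  congr 1

lemma aux_evalPos {p : Polynomial ℕ} (hp : p ≠ 0) {x : ℝ} (hx : 0 < x) :
    0 < (p.map (Nat.castRingHom ℝ)).eval x := by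
  rw [Polynomial.eval_map, Polynomial.eval₂_eq_sum, Polynomial.sum_def]
  apply Finset.sum_pos
  · intro i hi
    have h1 : p.coeff i ≠ 0 := Polynomial.mem_support_iff.1 hi
    have h2 : (0:ℝ) < (Nat.castRingHom ℝ) (p.coeff i) := by
      simpa using Nat.pos_of_ne_zero h1
    positivity
  · exact Polynomial.support_nonempty.2 hp

lemma aux_aeval_ne (α : ℝ) (hαpos : 0 < α) {p : Polynomial ℕ} (hp : p ≠ 0) :
    aeval (α : ℂ) p ≠ 0 := by
  rw [aux_castEval]
  exact_mod_cast (aux_evalPos hp hαpos).ne'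

lemma aux_convex (q mm : ℝ) (hq : 0 ≤ q) :
    ConvexOn ℝ Set.univ fun t => q * Real.exp (mm * t) := by
  refine ⟨convex_univ, fun t1 _ t2 _ a b ha hb hab => ?_⟩
  have h := convexOn_exp.2 (Set.mem_univ (mm * t1)) (Set.mem_univ (mm * t2)) ha hb hab
  simp only [smul_eq_mul] at *
  have e1 : mm * (a * t1 + b * t2) = a * (mm * t1) + b * (mm * t2) := by ring
  rw [e1]
  calc q * Real.exp (a * (mm * t1) + b * (mm * t2))
      ≤ q * (a * Real.exp (mm * t1) + b * Real.exp (mm * t2)) :=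
        mul_le_mul_of_nonneg_left h hq
    _ = a * (q * Real.exp (mm * t1)) + b * (q * Real.exp (mm * t2)) := by ring

lemma aux_strictconvex (q mm : ℝ) (hq : 0 < q) (hm : mm ≠ 0) :
    StrictConvexOn ℝ Set.univ fun t => q * Real.exp (mm * t) := by
  refine ⟨convex_univ, fun t1 _ t2 _ hne a b ha hb hab => ?_⟩
  have hne' : mm * t1 ≠ mm * t2 := fun h => hne (mul_left_cancel₀ hm h)
  have h := strictConvexOn_exp.2 (Set.mem_univ (mm * t1)) (Set.mem_univ (mm * t2)) hne' ha hb hab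
  simp only [smul_eq_mul] at *
  have e1 : mm * (a * t1 + b * t2) = a * (mm * t1) + b * (mm * t2) := by ring
  rw [e1]
  calc q * Real.exp (a * (mm * t1) + b * (mm * t2))
      < q * (a * Real.exp (mm * t1) + b * Real.exp (mm * t2)) := by
        exact (mul_lt_mul_iff_right₀ hq).2 h
    _ = a * (q * Real.exp (mm * t1)) + b * (q * Real.exp (mm * t2)) := by ring

lemma aux_convex_sum (s : Finset ℕ) (F : ℕ → ℝ → ℝ)
    (h : ∀ i ∈ s, ConvexOn ℝ Set.univ (F i)) :
    ConvexOn ℝ Set.univ (∑ i ∈ s, F i) := by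
  classical
  induction s using Finset.induction_on with
  | empty =>
    rw [Finset.sum_empty]; exact convexOn_const (0:ℝ) convex_univ
  | @insert a s ha ih =>
    rw [Finset.sum_insert ha]
    exact (h a (Finset.mem_insert_self a s)).add
      (ih fun i hi => h i (Finset.mem_insert_of_mem hi))

lemma aux_key (c : ℝ) (n : ℕ) (r : Polynomial ℕ)
    (hf : C c * X ^ n - r.map (Nat.castRingHom ℝ) ≠ 0)
    {x y z : ℝ} (hx : 0 < x) (hxy : x < y) (hyz : y < z)
    (h1 : (C c * X ^ n - r.map (Nat.castRingHom ℝ)).eval x = 0)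
    (h2 : (C c * X ^ n - r.map (Nat.castRingHom ℝ)).eval y = 0)
    (h3 : (C c * X ^ n - r.map (Nat.castRingHom ℝ)).eval z = 0) : False := by
  classical
  set F : ℕ → ℝ → ℝ := fun i t => (r.coeff i : ℝ) * Real.exp (((i:ℝ) - n) * t) with hF
  -- evaluation formula
  have hev : ∀ w : ℝ, 0 < w →
      (C c * X ^ n - r.map (Nat.castRingHom ℝ)).eval w
        = w ^ n * (c - ∑ i ∈ r.support, F i (Real.log w)) := by
    intro w hw
    have hmap : (r.map (Nat.castRingHom ℝ)).eval w
        = ∑ i ∈ r.support, (r.coeff i : ℝ) * w ^ i := by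
      rw [Polynomial.eval_map, Polynomial.eval₂_eq_sum, Polynomial.sum_def]
      rfl
    have hterm : ∀ i : ℕ,
        w ^ n * F i (Real.log w) = (r.coeff i : ℝ) * w ^ i := by
      intro i
      have e1 : Real.exp (((i:ℝ) - n) * Real.log w) = w ^ ((i:ℝ) - n) := by
        rw [Real.rpow_def_of_pos hw, mul_comm]
      have e2 : w ^ (n:ℕ) * w ^ ((i:ℝ) - (n:ℝ)) = w ^ (i:ℕ) := by
        rw [← Real.rpow_natCast w n, ← Real.rpow_add hw, ← Real.rpow_natCast w i]
        ring_nf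
      rw [hF]
      simp only []
      rw [e1, ← e2]
      ring
    simp only [Polynomial.eval_sub, Polynomial.eval_mul, Polynomial.eval_C,
      Polynomial.eval_pow, Polynomial.eval_X, hmap]
    rw [mul_sub, Finset.mul_sum]
    congr 1
    · ring
    · exact Finset.sum_congr rfl fun i _ => (hterm i).symm
  have hwpos : ∀ w : ℝ, 0 < w → (0:ℝ) < w ^ n := fun w hw => pow_pos hw n
  have hy' : 0 < y := lt_trans hx hxy
  have hz' : 0 < z := lt_trans hy' hyz
  have hzero : ∀ w : ℝ, 0 < w →
      (C c * X ^ n - r.map (Nat.castRingHom ℝ)).eval w = 0 →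
      ∑ i ∈ r.support, F i (Real.log w) = c := by
    intro w hw h0
    rw [hev w hw] at h0
    rcases mul_eq_zero.1 h0 with h | h
    · exact absurd h (hwpos w hw).ne'
    · linarith [sub_eq_zero.1 h]
  have Hx := hzero x hx h1
  have Hy := hzero y hy' h2
  have Hz := hzero z hz' h3
  by_cases hcase : ∃ j ∈ r.support, j ≠ n
  · obtain ⟨j, hj, hjn⟩ := hcase
    -- strict convexity of the sum
    have hconv : ConvexOn ℝ Set.univ (∑ i ∈ r.support.erase j, F i) :=
      aux_convex_sum _ _ fun i _ => aux_convex _ _ (Nat.cast_nonneg _)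
    have hstrictj : StrictConvexOn ℝ Set.univ (F j) := by
      apply aux_strictconvex
      · exact_mod_cast Nat.pos_of_ne_zero (Polynomial.mem_support_iff.1 hj)
      · have : (j:ℝ) ≠ (n:ℝ) := by exact_mod_cast hjn
        exact sub_ne_zero.2 this
    have hdec : (∑ i ∈ r.support, F i) = F j + ∑ i ∈ r.support.erase j, F i :=
      (Finset.add_sum_erase _ F hj).symm
    have hstrict : StrictConvexOn ℝ Set.univ (∑ i ∈ r.support, F i) := by
      rw [hdec]; exact hstrictj.add_convexOn hconv
    -- three points
    set t1 := Real.log x with ht1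
    set t2 := Real.log y with ht2
    set t3 := Real.log z with ht3
    have h12 : t1 < t2 := Real.log_lt_log hx hxy
    have h23 : t2 < t3 := Real.log_lt_log hy' hyz
    have h13 : t1 < t3 := lt_trans h12 h23
    set a : ℝ := (t3 - t2) / (t3 - t1) with hadef
    set b : ℝ := (t2 - t1) / (t3 - t1) with hbdef
    have hden : (0:ℝ) < t3 - t1 := by linarith
    have ha : 0 < a := div_pos (by linarith) hden
    have hb : 0 < b := div_pos (by linarith) hden
    have hab : a + b = 1 := by
      rw [hadef, hbdef, ← add_div, div_eq_one_iff_eq hden.ne']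
      ring
    have hmid : a • t1 + b • t3 = t2 := by
      simp only [smul_eq_mul, hadef, hbdef]
      field_simp
      ring
    have hlt := hstrict.2 (Set.mem_univ t1) (Set.mem_univ t3) (ne_of_lt h13) ha hb hab
    rw [hmid] at hlt
    simp only [Finset.sum_apply, smul_eq_mul] at hlt
    rw [Hx, Hy, Hz] at hlt
    have hc : a * c + b * c = c := by rw [← add_mul, hab, one_mul]
    linarith
  · -- support ⊆ {n}
    push_neg at hcase
    have hr : r = Polynomial.monomial n (r.coeff n) := by
      ext j
      by_cases hj : j = n
      · subst hj; simp
      · rw [Polynomial.coeff_monomial, if_neg (fun h => hj h.symm)]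
        by_contra hc
        exact hj (hcase j (Polynomial.mem_support_iff.2 hc))
    have hfm : C c * X ^ n - r.map (Nat.castRingHom ℝ)
        = Polynomial.monomial n (c - (r.coeff n : ℝ)) := by
      rw [hr, Polynomial.map_monomial]
      rw [Polynomial.C_mul_X_pow_eq_monomial]
      rw [← map_sub]
      simp
    have hevalx := h1
    rw [hfm] at hevalx
    rw [Polynomial.eval_monomial] at hevalx
    have hcn : c - (r.coeff n : ℝ) = 0 := by
      rcases mul_eq_zero.1 hevalx with h | h
      · exact h
      · exact absurd h (hwpos x hx).ne'
    apply hf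
    rw [hfm, hcn]
    simp

lemma aux_order {a b c : ℝ} (hab : a ≠ b) (hac : a ≠ c) (hbc : b ≠ c) :
    ∃ u v w : ℝ, u < v ∧ v < w ∧ u ∈ ({a,b,c} : Set ℝ) ∧ v ∈ ({a,b,c} : Set ℝ)
      ∧ w ∈ ({a,b,c} : Set ℝ) := by
  rcases lt_trichotomy a b with h1 | h1 | h1
  · rcases lt_trichotomy b c with h2 | h2 | h2
    · exact ⟨a, b, c, h1, h2, by simp, by simp, by simp⟩
    · exact absurd h2 hbc
    · rcases lt_trichotomy a c with h3 | h3 | h3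
      · exact ⟨a, c, b, h3, h2, by simp, by simp, by simp⟩
      · exact absurd h3 hac
      · exact ⟨c, a, b, h3, h1, by simp, by simp, by simp⟩
  · exact absurd h1 hab
  · rcases lt_trichotomy a c with h2 | h2 | h2
    · exact ⟨b, a, c, h1, h2, by simp, by simp, by simp⟩
    · exact absurd h2 hac
    · rcases lt_trichotomy b c with h3 | h3 | h3
      · exact ⟨b, c, a, h3, h2, by simp, by simp, by simp⟩
      · exact absurd h3 hbc
      · exact ⟨c, b, a, h3, h1, by simp, by simp, by simp⟩

lemma aux_coeff_count (t : Multiset ℕ) (j : ℕ) :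
    ((t.map fun i => (X : Polynomial ℕ)^i).sum).coeff j = t.count j := by
  induction t using Multiset.induction_on with
  | empty => simp
  | cons a t ih =>
    simp only [Multiset.map_cons, Multiset.sum_cons, Polynomial.coeff_add, ih,
      Multiset.count_cons, Polynomial.coeff_X_pow]
    by_cases h : j = a
    · subst h; simp [Nat.add_comm]
    · simp [h, Ne.symm h]

lemma aux_sum_sum {β : Type*} [AddCommMonoid β] (s : Finset ℕ) (f : ℕ → Multiset β) :
    (∑ i ∈ s, f i).sum = ∑ i ∈ s, (f i).sum := by
  classical
  induction s using Finset.induction_on with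
  | empty => simp
  | @insert a s ha ih => rw [Finset.sum_insert ha, Finset.sum_insert ha, Multiset.sum_add, ih]

lemma aux_mem_iff (α : ℝ) (x : ℂ) :
    x ∈ Malpha (α : ℂ) ↔ ∃ p : Polynomial ℕ, aeval (α : ℂ) p = x := by
  constructor
  · intro hx
    have hx' : x ∈ AddSubmonoid.closure (Set.range fun n : ℕ => (α:ℂ) ^ n) := hx
    clear hx
    induction hx' using AddSubmonoid.closure_induction with
    | mem y hy => obtain ⟨n, rfl⟩ := hy; exact ⟨X ^ n, by simp⟩
    | zero => exact ⟨0, by simp⟩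
    | add a b ha hb iha ihb =>
      obtain ⟨p, hp⟩ := iha
      obtain ⟨q, hq⟩ := ihb
      exact ⟨p + q, by rw [map_add, hp, hq]⟩
  · rintro ⟨p, rfl⟩
    induction p using Polynomial.induction_on' with
    | add p q hp hq => rw [map_add]; exact AddSubmonoid.add_mem _ hp hq
    | monomial n a =>
      rw [Polynomial.aeval_monomial]
      have h : (algebraMap ℕ ℂ) a * (α:ℂ)^n = a • ((α:ℂ)^n) := by
        simp [nsmul_eq_mul]
      rw [h]
      show a • (α:ℂ)^n ∈ AddSubmonoid.closure (Set.range fun n : ℕ => (α:ℂ) ^ n)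
      exact AddSubmonoid.nsmul_mem _ (AddSubmonoid.subset_closure (Set.mem_range_self n)) a

lemma aux_qr (r : Polynomial ℕ) (y : ℝ) :
    aeval y (r.map (Nat.castRingHom ℚ)) = (r.map (Nat.castRingHom ℝ)).eval y := by
  rw [Polynomial.aeval_def, Polynomial.eval_map, Polynomial.eval₂_map]
  congr 1

lemma aux_transfer (α : ℝ) (hα : IsAlgebraic ℚ α) (p q : Polynomial ℕ)
    (h : (p.map (Nat.castRingHom ℝ)).eval α = (q.map (Nat.castRingHom ℝ)).eval α)
    (x : ℝ) (hx : aeval x (minpoly ℚ α) = 0) :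
    (p.map (Nat.castRingHom ℝ)).eval x = (q.map (Nat.castRingHom ℝ)).eval x := by
  have h0 : aeval α (p.map (Nat.castRingHom ℚ) - q.map (Nat.castRingHom ℚ)) = 0 := by
    rw [map_sub, aux_qr, aux_qr, h, sub_self]
  obtain ⟨u, hu⟩ := minpoly.dvd ℚ α h0
  have h1 : aeval x (p.map (Nat.castRingHom ℚ) - q.map (Nat.castRingHom ℚ)) = 0 := by
    rw [hu, map_mul, hx, zero_mul]
  rw [map_sub, aux_qr, aux_qr, sub_eq_zero] at h1
  exact h1

theorem stmt_7 (α : ℝ) (hαpos : 0 < α) (hα : IsAlgebraic ℚ α)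
    (hroots : {x : ℝ | 0 < x ∧ Polynomial.aeval x (minpoly ℚ α) = 0}.ncard = 3) :
    IsAtomicMalpha (α : ℂ) ∧
    (∀ n : ℕ, (α : ℂ) ^ n ∈ strongAtomsM (α : ℂ)) ∧
    (atomsM (α : ℂ)).Infinite ∧
    (strongAtomsM (α : ℂ)).Infinite := by
  classical
  have hα0 : (α:ℂ) ≠ 0 := by exact_mod_cast hαpos.ne'
  -- three ordered positive roots of the minimal polynomial
  obtain ⟨x₁, y₁, z₁, h12, h13, h23, hSeq⟩ := Set.ncard_eq_three.1 hroots
  obtain ⟨u, v, w, huv, hvw, hu, hv, hw⟩ := aux_order h12 h13 h23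
  rw [← hSeq] at hu hv hw
  have descartes : ∀ (c : ℝ) (k : ℕ) (r : Polynomial ℕ),
      (∀ ρ : ℝ, 0 < ρ → aeval ρ (minpoly ℚ α) = 0 →
        (C c * X ^ k - r.map (Nat.castRingHom ℝ)).eval ρ = 0) →
      C c * X ^ k = r.map (Nat.castRingHom ℝ) := by
    intro c k r hroot
    by_contra hne
    exact aux_key c k r (sub_ne_zero.2 hne) hu.1 huv hvw
      (hroot u hu.1 hu.2) (hroot v hv.1 hv.2) (hroot w hw.1 hw.2)
  have transferC : ∀ p q : Polynomial ℕ, aeval (α:ℂ) p = aeval (α:ℂ) q →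
      ∀ ρ : ℝ, aeval ρ (minpoly ℚ α) = 0 →
      (p.map (Nat.castRingHom ℝ)).eval ρ = (q.map (Nat.castRingHom ℝ)).eval ρ := by
    intro p q h ρ hρ2
    apply aux_transfer α hα p q _ ρ hρ2
    rw [aux_castEval, aux_castEval] at h
    exact_mod_cast h
  have hmapid : ∀ (c k : ℕ),
      ((c • X ^ k : Polynomial ℕ)).map (Nat.castRingHom ℝ) = C (c:ℝ) * X ^ k := by
    intro c k
    rw [nsmul_eq_mul, Polynomial.map_mul, Polynomial.map_pow, Polynomial.map_X,
      Polynomial.map_natCast, ← Polynomial.C_eq_natCast]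
  have forceEq : ∀ (c k : ℕ) (r : Polynomial ℕ),
      aeval (α:ℂ) ((c • X ^ k : Polynomial ℕ)) = aeval (α:ℂ) r →
      (c • X ^ k : Polynomial ℕ) = r := by
    intro c k r h
    have h2 : C (c:ℝ) * X ^ k = r.map (Nat.castRingHom ℝ) := by
      apply descartes
      intro ρ hρ hρm
      have h3 := transferC (c • X ^ k) r h ρ hρm
      rw [Polynomial.eval_sub, ← hmapid, h3, sub_self]
    exact Polynomial.map_injective _ Nat.cast_injective (by rw [hmapid, h2])
  -- every power is an atom
  have atom_pow : ∀ k : ℕ, (α:ℂ)^k ∈ atomsM (α:ℂ) := by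
    intro k
    refine ⟨AddSubmonoid.subset_closure (Set.mem_range_self k), pow_ne_zero _ hα0, ?_⟩
    intro uu vv huu hvv heq
    obtain ⟨p, rfl⟩ := (aux_mem_iff α uu).1 huu
    obtain ⟨q, rfl⟩ := (aux_mem_iff α vv).1 hvv
    have heqpoly : (X ^ k : Polynomial ℕ) = p + q := by
      have h := forceEq 1 k (p + q) (by rw [one_smul, map_add, Polynomial.aeval_X_pow]; exact heq)
      rwa [one_smul] at h
    have hck : p.coeff k + q.coeff k = 1 := by
      have h := congrArg (fun r : Polynomial ℕ => r.coeff k) heqpoly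
      simpa [Polynomial.coeff_X_pow] using h.symm
    have hcj : ∀ j, j ≠ k → p.coeff j = 0 ∧ q.coeff j = 0 := by
      intro j hj
      have h := congrArg (fun r : Polynomial ℕ => r.coeff j) heqpoly
      simp only [Polynomial.coeff_X_pow, Polynomial.coeff_add] at h
      rw [if_neg hj] at h
      omega
    have : p.coeff k = 0 ∨ q.coeff k = 0 := by omega
    rcases this with h0 | h0
    · left
      have hp : p = 0 := by
        ext j
        by_cases hj : j = k
        · subst hj; simpa using h0
        · simpa using (hcj j hj).1
      rw [hp, map_zero]
    · right
      have hq : q = 0 := by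
        ext j
        by_cases hj : j = k
        · subst hj; simpa using h0
        · simpa using (hcj j hj).2
      rw [hq, map_zero]
  -- atoms are powers
  have atoms_sub : atomsM (α:ℂ) ⊆ Set.range (fun k : ℕ => (α:ℂ)^k) := by
    rintro a ⟨haM, ha0, hsplit⟩
    obtain ⟨p, rfl⟩ := (aux_mem_iff α a).1 haM
    have hp0 : p ≠ 0 := fun h => ha0 (by rw [h, map_zero])
    obtain ⟨i, hi⟩ := Polynomial.support_nonempty.2 hp0
    set r : Polynomial ℕ := p.erase i + Polynomial.monomial i (p.coeff i - 1) with hrdef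
    have hpr : p = X ^ i + r := by
      ext j
      by_cases hj : j = i
      · subst hj
        have h1 : 1 ≤ p.coeff j := Nat.one_le_iff_ne_zero.2 (Polynomial.mem_support_iff.1 hi)
        simp [hrdef, Polynomial.coeff_erase, Polynomial.coeff_X_pow, Polynomial.coeff_monomial]
        omega
      · simp [hrdef, Polynomial.coeff_erase, Polynomial.coeff_X_pow, Polynomial.coeff_monomial,
          hj, Ne.symm hj]
    have hmem1 : (α:ℂ)^i ∈ Malpha (α:ℂ) :=
      AddSubmonoid.subset_closure (Set.mem_range_self i)
    have hmem2 : aeval (α:ℂ) r ∈ Malpha (α:ℂ) := (aux_mem_iff α _).2 ⟨r, rfl⟩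
    have hsp := hsplit _ _ hmem1 hmem2 (by rw [hpr, map_add, Polynomial.aeval_X_pow])
    rcases hsp with h | h
    · exact absurd h (pow_ne_zero _ hα0)
    · have hr0 : r = 0 := by
        by_contra hr0
        exact aux_aeval_ne α hαpos hr0 h
      refine ⟨i, ?_⟩
      rw [hpr, hr0, add_zero, Polynomial.aeval_X_pow]
  -- strong atoms
  have strong : ∀ k : ℕ, (α:ℂ)^k ∈ strongAtomsM (α:ℂ) := by
    intro k
    refine ⟨atom_pow k, ?_⟩
    intro nn hnn s hs hsum
    have hpow : ∀ b ∈ s, ∃ i : ℕ, b = (α:ℂ)^i := by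
      intro b hb
      obtain ⟨i, hi⟩ := atoms_sub (hs b hb)
      exact ⟨i, hi.symm⟩
    set E : ℂ → ℕ := fun b => if h : ∃ i : ℕ, b = (α:ℂ)^i then h.choose else 0 with hE
    have hEb : ∀ b ∈ s, (α:ℂ)^(E b) = b := by
      intro b hb
      have h := hpow b hb
      simp only [hE, dif_pos h]
      exact h.choose_spec.symm
    set t : Multiset ℕ := s.map E with ht
    have hst : t.map (fun i => (α:ℂ)^i) = s := by
      rw [ht, Multiset.map_map]
      calc s.map ((fun i => (α:ℂ)^i) ∘ E) = s.map id :=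
            Multiset.map_congr rfl (fun b hb => hEb b hb)
        _ = s := Multiset.map_id s
    set P : Polynomial ℕ := (t.map fun i => (X : Polynomial ℕ)^i).sum with hP
    have hPev : aeval (α:ℂ) P = s.sum := by
      rw [hP, map_multiset_sum, Multiset.map_map, ← hst]
      congr 1
      apply Multiset.map_congr rfl
      intro i _
      simp
    have hrel : aeval (α:ℂ) ((nn • X ^ k : Polynomial ℕ)) = aeval (α:ℂ) P := by
      rw [hPev, hsum, map_nsmul, Polynomial.aeval_X_pow]
    have hforce := forceEq nn k P hrel
    have hts : t = Multiset.replicate nn k := by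
      ext j
      rw [Multiset.count_replicate, ← aux_coeff_count t j, ← hP, ← hforce]
      rw [Polynomial.coeff_smul, Polynomial.coeff_X_pow]
      by_cases h : j = k
      · subst h; simp
      · simp [h, Ne.symm h]
    rw [← hst, hts, Multiset.map_replicate]
  -- atomicity
  have atomic : IsAtomicMalpha (α:ℂ) := by
    intro x hx hx0
    obtain ⟨p, rfl⟩ := (aux_mem_iff α x).1 hx
    refine ⟨∑ i ∈ p.support, Multiset.replicate (p.coeff i) ((α:ℂ)^i), ?_, ?_⟩
    · intro a ha
      rw [Multiset.mem_sum] at ha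
      obtain ⟨i, hi, hai⟩ := ha
      rw [Multiset.eq_of_mem_replicate hai]
      exact atom_pow i
    · rw [aux_sum_sum, Polynomial.aeval_def, Polynomial.eval₂_eq_sum, Polynomial.sum_def]
      apply Finset.sum_congr rfl
      intro i _
      rw [Multiset.sum_replicate]
      simp [nsmul_eq_mul]
  -- injectivity of powers
  have hα1 : α ≠ 1 := by
    rintro rfl
    have hmp : minpoly ℚ (1:ℝ) = X - C 1 := by
      have h := minpoly.eq_X_sub_C (B := ℝ) (1 : ℚ)
      rwa [map_one] at h
    rw [hmp] at hroots
    have hset : {x : ℝ | 0 < x ∧ aeval x ((X : Polynomial ℚ) - C 1) = 0} = {1} := by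
      ext tt
      simp only [Set.mem_setOf_eq, Set.mem_singleton_iff, map_sub, Polynomial.aeval_X,
        Polynomial.aeval_C, map_one, sub_eq_zero]
      constructor
      · rintro ⟨_, h⟩; exact h
      · rintro rfl; exact ⟨one_pos, rfl⟩
    rw [hset] at hroots
    simp at hroots
  have powInj : Function.Injective fun k : ℕ => (α:ℂ)^k := by
    intro i j hij
    have hij' : (α:ℂ)^i = (α:ℂ)^j := hij
    have hr : (α:ℝ)^i = α^j := by exact_mod_cast hij'
    have hlog : (i:ℝ) * Real.log α = j * Real.log α := by
      rw [← Real.log_pow, ← Real.log_pow, hr]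
    have hlα : Real.log α ≠ 0 := Real.log_ne_zero_of_pos_of_ne_one hαpos hα1
    exact_mod_cast mul_right_cancel₀ hlα hlog
  have hrange : Set.range (fun k : ℕ => (α:ℂ)^k) ⊆ strongAtomsM (α:ℂ) := by
    rintro _ ⟨k, rfl⟩
    exact strong k
  have hinf : (Set.range fun k : ℕ => (α:ℂ)^k).Infinite :=
    Set.infinite_range_of_injective powInj
  refine ⟨atomic, strong, ?_, hinf.mono hrange⟩
  exact hinf.mono (fun a ha => ((hrange ha).1 : a ∈ atomsM (α:ℂ)))
end

section
/- Let α be an algebraic number of degree 2 over ℚ, and suppose that the unique primitive polynomial in ℤ[x] with positive leading coefficient that is a scalar multiple of the minimal polynomial of α has all of its coefficients nonnegative. Then M_α has no atoms: A(M_α) = ∅, and hence also S(M_α) = ∅. -/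
open Polynomial

lemma mem_Malpha_mul (α : ℂ) (c : ℤ) (hc : 0 ≤ c) (n : ℕ) :
    (c : ℂ) * α ^ n ∈ Malpha α := by
  have h1 : α ^ n ∈ Malpha α := AddSubmonoid.subset_closure ⟨n, rfl⟩
  have h2 := nsmul_mem h1 c.toNat
  have h3 : ((c.toNat : ℂ)) * α ^ n = (c : ℂ) * α ^ n := by
    have : ((c.toNat : ℤ) : ℂ) = (c : ℂ) := by exact_mod_cast congrArg (Int.cast : ℤ → ℂ) (Int.toNat_of_nonneg hc)
    push_cast at this ⊢
    rw [this]
  rwa [nsmul_eq_mul, h3] at h2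

theorem stmt_8 (α : ℂ) (hα : IsAlgebraic ℚ α)
    (hdeg : (minpoly ℚ α).natDegree = 2)
    (m : Polynomial ℤ) (hprim : m.IsPrimitive) (hlead : 0 < m.leadingCoeff)
    (r : ℚ) (hr : r ≠ 0)
    (hscal : m.map (Int.castRingHom ℚ) = C r * minpoly ℚ α)
    (hnonneg : ∀ i : ℕ, 0 ≤ m.coeff i) :
    atomsM α = ∅ ∧ strongAtomsM α = ∅ := by
  have hα0 : α ≠ 0 := by
    intro h
    rw [h, minpoly.zero, natDegree_X] at hdeg
    omega
  have hmdeg : m.natDegree = 2 := by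
    have h1 : (m.map (Int.castRingHom ℚ)).natDegree = m.natDegree :=
      natDegree_map_eq_of_injective (fun a b hab => Int.cast_injective hab) m
    rw [hscal, natDegree_C_mul hr, hdeg] at h1
    omega
  have haev : (aeval α) m = 0 := by
    have h1 : (aeval α) m = (aeval α) (m.map (Int.castRingHom ℚ)) := by
      rw [← algebraMap_int_eq, aeval_map_algebraMap]
    rw [h1, hscal]
    simp [minpoly.aeval]
  have hsum : (m.coeff 0 : ℂ) + (m.coeff 1 : ℂ) * α + (m.coeff 2 : ℂ) * α ^ 2 = 0 := by
    rw [aeval_eq_sum_range, hmdeg] at haev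
    simp only [Finset.sum_range_succ, Finset.sum_range_zero, zero_add, zsmul_eq_mul] at haev
    rw [← haev]
    ring
  set u : ℂ := (m.coeff 2 : ℂ) * α ^ 2 with hu_def
  set v : ℂ := (m.coeff 1 : ℂ) * α + (m.coeff 0 : ℂ) with hv_def
  have huv : u + v = 0 := by rw [hu_def, hv_def]; linear_combination hsum
  have hc2 : 0 < m.coeff 2 := by
    rwa [Polynomial.leadingCoeff, hmdeg] at hlead
  have hu0 : u ≠ 0 := by
    apply mul_ne_zero
    · exact_mod_cast hc2.ne'
    · exact pow_ne_zero 2 hα0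
  have humem : u ∈ Malpha α := mem_Malpha_mul α _ (hnonneg 2) 2
  have hvmem : v ∈ Malpha α := by
    have h1 : (m.coeff 1 : ℂ) * α ∈ Malpha α := by
      have := mem_Malpha_mul α (m.coeff 1) (hnonneg 1) 1
      rwa [pow_one] at this
    have h0 : (m.coeff 0 : ℂ) ∈ Malpha α := by
      have := mem_Malpha_mul α (m.coeff 0) (hnonneg 0) 0
      rwa [pow_zero, mul_one] at this
    exact AddSubmonoid.add_mem _ h1 h0
  have hv0 : v ≠ 0 := by
    intro h
    rw [h, add_zero] at huv
    exact hu0 huv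
  have hatoms : atomsM α = ∅ := by
    rw [Set.eq_empty_iff_forall_notMem]
    rintro a ⟨ha, ha0, hsp⟩
    have h1 : a + v = 0 ∨ u = 0 :=
      hsp (a + v) u (AddSubmonoid.add_mem _ ha hvmem) humem
        (by linear_combination -huv)
    have h2 : a + u = 0 ∨ v = 0 :=
      hsp (a + u) v (AddSubmonoid.add_mem _ ha humem) hvmem
        (by linear_combination -huv)
    rcases h1 with h1 | h1
    · rcases h2 with h2 | h2
      · exact ha0 (by linear_combination (h1 + h2 - huv) / 2)
      · exact hv0 h2
    · exact hu0 h1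
  refine ⟨hatoms, ?_⟩
  rw [Set.eq_empty_iff_forall_notMem]
  rintro a ⟨ha, -⟩
  rw [hatoms] at ha
  exact ha
end

section
/- Let a, b, c ∈ ℕ be positive integers with gcd(a,b,c) = 1 and with √(b²+4ac) irrational, and let α be a root of ax² + bx − c. If c = 1, then M_α has no atoms: A(M_α) = ∅ (and S(M_α) = ∅). If c > 1, then S(M_α) = ∅ and A(M_α) = {α^n : n ∈ ℕ₀}, which is infinite. -/
open Polynomial

noncomputable def mpoly (a b c : ℕ) : ℤ[X] := C (a:ℤ) * X^2 + C (b:ℤ) * X - C (c:ℤ)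

lemma mem_malpha_iff {α x : ℂ} :
    x ∈ Malpha α ↔ ∃ p : ℤ[X], (∀ i, 0 ≤ p.coeff i) ∧ aeval α p = x := by
  constructor
  · intro hx
    induction hx using AddSubmonoid.closure_induction with
    | mem y hy =>
      obtain ⟨n, rfl⟩ := hy
      exact ⟨X ^ n, fun i => by simp [coeff_X_pow]; split <;> simp, by simp⟩
    | zero => exact ⟨0, by simp, by simp⟩
    | add x y _ _ hx hy =>
      obtain ⟨p, hp, hpe⟩ := hx
      obtain ⟨q, hq, hqe⟩ := hy
      exact ⟨p + q, fun i => by simpa using add_nonneg (hp i) (hq i), by simp [hpe, hqe]⟩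
  · rintro ⟨p, hp, rfl⟩
    rw [aeval_eq_sum_range]
    apply AddSubmonoid.sum_mem
    intro i _
    have : p.coeff i = ((p.coeff i).toNat : ℤ) := (Int.toNat_of_nonneg (hp i)).symm
    rw [this, natCast_zsmul]
    exact AddSubmonoid.nsmul_mem (S := Malpha α)
      (AddSubmonoid.subset_closure (Set.mem_range_self i)) _

lemma coeff_mpoly_mul (a b c : ℕ) (h : ℤ[X]) (i : ℕ) :
    (mpoly a b c * h).coeff i =
      (a:ℤ) * (if 2 ≤ i then h.coeff (i-2) else 0)
      + (b:ℤ) * (if 1 ≤ i then h.coeff (i-1) else 0) - (c:ℤ) * h.coeff i := by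
  have : mpoly a b c * h = C (a:ℤ) * (h * X ^ 2) + C (b:ℤ) * (h * X ^ 1) - C (c:ℤ) * h := by
    unfold mpoly; ring
  rw [this]
  simp only [coeff_add, coeff_sub, coeff_C_mul, coeff_mul_X_pow']

section main
variable {a b c : ℕ} {α : ℂ}

lemma alpha_im (ha : 0 < a) (hc : 0 < c)
    (hroot : (a : ℂ) * α ^ 2 + (b : ℂ) * α - (c : ℂ) = 0) : α.im = 0 := by
  have hz : (2*(a:ℂ)*α + b)^2 = ((b:ℝ)^2 + 4*a*c : ℝ) := by
    push_cast
    linear_combination 4*(a:ℂ)*hroot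
  have hD : (0:ℝ) < (b:ℝ)^2 + 4*a*c := by
    have : (1:ℝ) ≤ (a:ℝ) := by exact_mod_cast ha
    have : (1:ℝ) ≤ (c:ℝ) := by exact_mod_cast hc
    positivity
  set z : ℂ := 2*(a:ℂ)*α + b with hzdef
  have him : z.im = 0 := by
    have h1 : (z^2).im = 0 := by rw [hz, Complex.ofReal_im]
    have h2 : (z^2).re = (b:ℝ)^2 + 4*a*c := by rw [hz, Complex.ofReal_re]
    rw [pow_two] at h1 h2
    simp [Complex.mul_im, Complex.mul_re] at h1 h2
    rcases mul_eq_zero.mp (by linarith : z.re * z.im = 0) with h | h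
    · nlinarith
    · exact h
  have : z.im = 2*(a:ℝ)*α.im := by
    simp [hzdef, Complex.add_im, Complex.mul_im]
    try ring
  rw [this] at him
  have ha' : (0:ℝ) < (a:ℝ) := by exact_mod_cast ha
  nlinarith

lemma alpha_eq (ha : 0 < a) (hc : 0 < c)
    (hroot : (a : ℂ) * α ^ 2 + (b : ℂ) * α - (c : ℂ) = 0) : ((α.re : ℝ) : ℂ) = α := by
  apply Complex.ext <;> simp [alpha_im ha hc hroot]

lemma alpha_irrational (ha : 0 < a) (hc : 0 < c)
    (hirr : Irrational (Real.sqrt ((b : ℝ) ^ 2 + 4 * a * c)))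
    (hroot : (a : ℂ) * α ^ 2 + (b : ℂ) * α - (c : ℂ) = 0) : Irrational α.re := by
  have hre := alpha_eq ha hc hroot
  have hzr : (2*(a:ℝ)*α.re + b)^2 = (b:ℝ)^2 + 4*a*c := by
    have hz : (2*(a:ℂ)*α + b)^2 = ((b:ℝ)^2 + 4*a*c : ℝ) := by
      push_cast
      linear_combination 4*(a:ℂ)*hroot
    rw [← hre] at hz
    exact_mod_cast hz
  have hs : Real.sqrt ((b:ℝ)^2 + 4*a*c) = |2*(a:ℝ)*α.re + b| := by
    rw [← hzr, Real.sqrt_sq_eq_abs]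
  rintro ⟨q, hq⟩
  apply hirr
  refine ⟨|2*(a:ℚ)*q + b|, ?_⟩
  rw [hs, ← hq]
  push_cast
  ring_nf

lemma mpoly_primitive (hgcd : Nat.gcd a (Nat.gcd b c) = 1) : (mpoly a b c).IsPrimitive := by
  intro r hr
  rw [C_dvd_iff_dvd_coeff] at hr
  have h0 := hr 0
  have h1 := hr 1
  have h2 := hr 2
  simp [mpoly, coeff_C, coeff_X, coeff_X_pow] at h0 h1 h2
  have hrc : r ∣ (c:ℤ) := h0
  have hbc : r ∣ ((Nat.gcd b c : ℕ) : ℤ) := by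
    rw [← Int.gcd_natCast_natCast]; exact Int.dvd_coe_gcd h1 hrc
  have habc : r ∣ ((Nat.gcd a (Nat.gcd b c) : ℕ) : ℤ) := by
    rw [← Int.gcd_natCast_natCast]; exact Int.dvd_coe_gcd h2 hbc
  rw [hgcd] at habc
  exact isUnit_of_dvd_one (by exact_mod_cast habc)

lemma mpoly_dvd (ha : 0 < a) (hc : 0 < c)
    (hgcd : Nat.gcd a (Nat.gcd b c) = 1)
    (hirr : Irrational (Real.sqrt ((b : ℝ) ^ 2 + 4 * a * c)))
    (hroot : (a : ℂ) * α ^ 2 + (b : ℂ) * α - (c : ℂ) = 0)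
    (q : ℤ[X]) (hq : aeval α q = 0) : ∃ h : ℤ[X], q = mpoly a b c * h := by
  rcases eq_or_ne q 0 with rfl | hq0
  · exact ⟨0, by simp⟩
  have haQ : (a:ℚ) ≠ 0 := by positivity
  have hmQ : (mpoly a b c).map (Int.castRingHom ℚ) = C (a:ℚ) * X^2 + C (b:ℚ) * X - C (c:ℚ) := by
    simp [mpoly]
  set mQ := (mpoly a b c).map (Int.castRingHom ℚ) with hmQdef
  have hmQdeg : mQ.natDegree = 2 := by
    rw [hmQ]
    compute_degree!
    exact_mod_cast ha.ne'
  have hmQ0 : mQ ≠ 0 := by intro h; rw [h] at hmQdeg; simp at hmQdeg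
  have haev : aeval α mQ = 0 := by
    rw [hmQ]
    simp only [map_sub, map_add, map_mul, aeval_C, aeval_X, map_pow]
    push_cast
    linear_combination hroot
  have hint : IsIntegral ℚ α := IsAlgebraic.isIntegral ⟨mQ, hmQ0, haev⟩
  set μ := minpoly ℚ α with hμdef
  have hμ0 : μ ≠ 0 := minpoly.ne_zero hint
  have hμdvd : μ ∣ mQ := minpoly.dvd ℚ α haev
  have hμ2 : 2 ≤ μ.natDegree := by
    rw [minpoly.two_le_natDegree_iff hint]
    rintro ⟨q', hq'⟩
    have : algebraMap ℚ ℂ q' = ((q' : ℝ) : ℂ) := by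
      rw [eq_ratCast (algebraMap ℚ ℂ) q']
      push_cast
      rfl
    rw [this] at hq'
    have hre : (q' : ℝ) = α.re := by
      rw [← hq']
      simp
    exact alpha_irrational ha hc hirr hroot ⟨q', hre⟩
  obtain ⟨k, hk⟩ := hμdvd
  have hk0 : k ≠ 0 := by rintro rfl; rw [mul_zero] at hk; exact hmQ0 hk
  have hkdeg : k.natDegree = 0 := by
    rw [hk, natDegree_mul hμ0 hk0] at hmQdeg
    omega
  obtain ⟨t, ht0, rfl⟩ : ∃ t : ℚ, t ≠ 0 ∧ k = C t := by
    refine ⟨k.coeff 0, ?_, eq_C_of_natDegree_eq_zero hkdeg⟩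
    intro h
    exact hk0 (by rw [eq_C_of_natDegree_eq_zero hkdeg, h, C_0])
  -- mQ divides qQ
  set qQ := q.map (Int.castRingHom ℚ) with hqQdef
  have hqQ0 : aeval α qQ = 0 := by
    rw [hqQdef, ← algebraMap_int_eq, aeval_map_algebraMap]
    exact hq
  obtain ⟨r, hr⟩ := minpoly.dvd ℚ α hqQ0
  have hmQdvdqQ : mQ ∣ qQ := by
    refine ⟨C t⁻¹ * r, ?_⟩
    rw [hr, hk, mul_assoc, ← mul_assoc (C t), ← C_mul,
      mul_inv_cancel₀ ht0, C_1, one_mul]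
  -- transfer to primPart
  have hcont0 : (q.content : ℚ) ≠ 0 := by
    exact_mod_cast (mt content_eq_zero_iff.mp hq0)
  have hccancel : C ((q.content:ℤ):ℚ) * C ((q.content:ℤ):ℚ)⁻¹ = 1 := by
    rw [← C_mul, mul_inv_cancel₀ hcont0, C_1]
  have hppQ : mQ ∣ q.primPart.map (Int.castRingHom ℚ) := by
    have hq_eq : qQ = C ((q.content:ℤ):ℚ) * q.primPart.map (Int.castRingHom ℚ) := by
      rw [hqQdef]
      conv_lhs => rw [q.eq_C_content_mul_primPart]
      rw [Polynomial.map_mul, map_C]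
      norm_num
    obtain ⟨s, hs⟩ := hmQdvdqQ
    refine ⟨C ((q.content:ℤ):ℚ)⁻¹ * s, ?_⟩
    apply mul_left_cancel₀ (show (C ((q.content:ℤ):ℚ)) ≠ 0 from by simpa using hcont0)
    calc C ((q.content:ℤ):ℚ) * (q.primPart.map (Int.castRingHom ℚ)) = qQ := hq_eq.symm
      _ = mQ * s := hs
      _ = (C ((q.content:ℤ):ℚ) * C ((q.content:ℤ):ℚ)⁻¹) * (mQ * s) := by
            rw [hccancel, one_mul]
      _ = C ((q.content:ℤ):ℚ) * (mQ * (C ((q.content:ℤ):ℚ)⁻¹ * s)) := by ring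
  have hdvd_pp : mpoly a b c ∣ q.primPart := by
    apply (mpoly_primitive hgcd).dvd_of_fraction_map_dvd_fraction_map (K := ℚ)
    rwa [algebraMap_int_eq]
  obtain ⟨h, hh⟩ := dvd_trans hdvd_pp q.primPart_dvd
  exact ⟨h, hh⟩

lemma key_h {a b c : ℕ} (ha : 0 < a) (hb : 0 < b) (hc2 : 2 ≤ c) (n : ℕ) (h : ℤ[X])
    (hco : ∀ i, 0 ≤ (mpoly a b c * h).coeff i + (X ^ n : ℤ[X]).coeff i) : h = 0 := by
  have ha1 : (1:ℤ) ≤ (a:ℤ) := by exact_mod_cast ha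
  have hb1 : (1:ℤ) ≤ (b:ℤ) := by exact_mod_cast hb
  have hc2' : (2:ℤ) ≤ (c:ℤ) := by exact_mod_cast hc2
  have hnonpos : ∀ i, h.coeff i ≤ 0 := by
    intro i
    induction i using Nat.strong_induction_on with
    | _ i IH =>
      have h0 := hco i
      rw [coeff_mpoly_mul, coeff_X_pow] at h0
      have t2 : (a:ℤ) * (if 2 ≤ i then h.coeff (i-2) else 0) ≤ 0 := by
        split_ifs with hi
        · exact mul_nonpos_of_nonneg_of_nonpos (by positivity) (IH _ (by omega))
        · simp
      have t1 : (b:ℤ) * (if 1 ≤ i then h.coeff (i-1) else 0) ≤ 0 := by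
        split_ifs with hi
        · exact mul_nonpos_of_nonneg_of_nonpos (by positivity) (IH _ (by omega))
        · simp
      have hone : (if i = n then (1:ℤ) else 0) ≤ 1 := by split_ifs <;> norm_num
      have hch : (c:ℤ) * h.coeff i ≤ 1 := by linarith
      by_contra hpos
      push_neg at hpos
      have h1 : (1:ℤ) ≤ h.coeff i := hpos
      nlinarith
  by_contra hne
  have hdne : h.coeff h.natDegree ≠ 0 := by
    rw [← leadingCoeff]; exact leadingCoeff_ne_zero.mpr hne
  set d := h.natDegree with hd
  have hdneg : h.coeff d ≤ -1 := by
    have := hnonpos d; omega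
  have hhi : ∀ j, d < j → h.coeff j = 0 := fun j hj => coeff_eq_zero_of_natDegree_lt hj
  -- step at d+2
  have h2 := hco (d+2)
  rw [coeff_mpoly_mul, coeff_X_pow] at h2
  simp only [show 2 ≤ d+2 from by omega, if_true, show d+2-2 = d from by omega,
    show 1 ≤ d+2 from by omega, show d+2-1 = d+1 from by omega,
    hhi (d+1) (by omega), hhi (d+2) (by omega)] at h2
  have hn : d + 2 = n := by
    by_contra hne2
    rw [if_neg hne2] at h2
    nlinarith
  rw [if_pos hn] at h2
  -- step at d+1
  have h1 := hco (d+1)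
  rw [coeff_mpoly_mul, coeff_X_pow] at h1
  have ht2 : (a:ℤ) * (if 2 ≤ d+1 then h.coeff (d+1-2) else 0) ≤ 0 := by
    split_ifs with hi
    · exact mul_nonpos_of_nonneg_of_nonpos (by positivity) (hnonpos _)
    · simp
  rw [if_pos (show 1 ≤ d+1 from by omega), show d+1-1 = d from by omega,
    hhi (d+1) (by omega), if_neg (show ¬ d+1 = n from by omega)] at h1
  nlinarith


lemma alpha_ne_zero (hc : 0 < c)
    (hroot : (a : ℂ) * α ^ 2 + (b : ℂ) * α - (c : ℂ) = 0) : α ≠ 0 := by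
  intro h
  rw [h] at hroot
  simp at hroot
  exact hc.ne' (by exact_mod_cast hroot)

lemma pow_injective (ha : 0 < a) (hc : 0 < c)
    (hirr : Irrational (Real.sqrt ((b : ℝ) ^ 2 + 4 * a * c)))
    (hroot : (a : ℂ) * α ^ 2 + (b : ℂ) * α - (c : ℂ) = 0) :
    Function.Injective (fun n : ℕ => α ^ n) := by
  have hα0 : α ≠ 0 := alpha_ne_zero hc hroot
  have hirr' := alpha_irrational ha hc hirr hroot
  have hre := alpha_eq ha hc hroot
  set t := ‖α‖ with ht
  have ht0 : 0 < t := norm_pos_iff.mpr hα0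
  have ht1 : t ≠ 1 := by
    intro h1
    have : |α.re| = 1 := by
      rw [← Real.norm_eq_abs, ← Complex.norm_real, hre]
      exact h1
    rcases abs_eq (le_of_lt one_pos) |>.mp this with h | h
    · exact (hirr' ⟨1, by rw [h]; norm_num⟩)
    · exact (hirr' ⟨-1, by rw [h]; norm_num⟩)
  intro i j hij
  simp only at hij
  have habs : t ^ i = t ^ j := by
    rw [ht, ← norm_pow, ← norm_pow, hij]
  have hlog : (i : ℝ) * Real.log t = (j : ℝ) * Real.log t := by
    rw [← Real.log_pow, ← Real.log_pow, habs]
  have hlt : Real.log t ≠ 0 := by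
    intro h
    rcases Real.log_eq_zero.mp h with h' | h' | h' <;> [linarith; exact ht1 h'; linarith]
  have : (i : ℝ) = (j : ℝ) := mul_right_cancel₀ hlt hlog
  exact_mod_cast this

lemma powM_mem (α : ℂ) (n : ℕ) : α ^ n ∈ Malpha α :=
  AddSubmonoid.subset_closure (Set.mem_range_self n)

lemma mul_pow_mem {x : ℂ} (hx : x ∈ Malpha α) (k : ℕ) : x * α ^ k ∈ Malpha α := by
  rw [mem_malpha_iff] at hx ⊢
  obtain ⟨p, hp, rfl⟩ := hx
  refine ⟨p * X ^ k, fun i => ?_, by simp⟩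
  rw [coeff_mul_X_pow']
  split_ifs
  · exact hp _
  · exact le_refl 0

lemma key (ha : 0 < a) (hb : 0 < b) (hc : 0 < c) (hc2 : 2 ≤ c)
    (hgcd : Nat.gcd a (Nat.gcd b c) = 1)
    (hirr : Irrational (Real.sqrt ((b : ℝ) ^ 2 + 4 * a * c)))
    (hroot : (a : ℂ) * α ^ 2 + (b : ℂ) * α - (c : ℂ) = 0)
    (n : ℕ) (p : ℤ[X]) (hp : ∀ i, 0 ≤ p.coeff i) (hv : aeval α p = α ^ n) :
    p = X ^ n := by
  obtain ⟨h, hh⟩ := mpoly_dvd ha hc hgcd hirr hroot (p - X ^ n) (by simp [hv])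
  have h0 : h = 0 := by
    apply key_h ha hb hc2 n h
    intro i
    rw [← hh]
    simp only [coeff_sub, sub_add_cancel]
    exact hp i
  rw [h0, mul_zero, sub_eq_zero] at hh
  exact hh

lemma atoms_eq (ha : 0 < a) (hb : 0 < b) (hc : 0 < c) (hc2 : 2 ≤ c)
    (hgcd : Nat.gcd a (Nat.gcd b c) = 1)
    (hirr : Irrational (Real.sqrt ((b : ℝ) ^ 2 + 4 * a * c)))
    (hroot : (a : ℂ) * α ^ 2 + (b : ℂ) * α - (c : ℂ) = 0) :
    atomsM α = Set.range (fun n : ℕ => α ^ n) := by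
  have hα0 : α ≠ 0 := alpha_ne_zero hc hroot
  ext x
  constructor
  · rintro ⟨hxM, hx0, hdec⟩
    rw [mem_malpha_iff] at hxM
    obtain ⟨p, hp, rfl⟩ := hxM
    obtain ⟨i, hi⟩ : ∃ i, p.coeff i ≠ 0 := by
      by_contra hcon
      push_neg at hcon
      exact hx0 (by rw [show p = 0 from Polynomial.ext fun i => hcon i]; simp)
    have hi1 : 1 ≤ p.coeff i := lt_of_le_of_ne (hp i) (Ne.symm hi)
    set r := p - X ^ i with hr
    have hrnn : ∀ j, 0 ≤ r.coeff j := by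
      intro j
      rw [hr, coeff_sub, coeff_X_pow]
      split_ifs with hij
      · subst hij; omega
      · simpa using hp j
    have hsplit : aeval α p = α ^ i + aeval α r := by
      rw [hr]; simp
    rcases hdec (α ^ i) (aeval α r) (powM_mem α i)
        (mem_malpha_iff.mpr ⟨r, hrnn, rfl⟩) hsplit with h | h
    · exact absurd h (pow_ne_zero i hα0)
    · have hr0 : r = 0 := by
        have hkey : r + X ^ i = X ^ i := by
          apply key ha hb hc hc2 hgcd hirr hroot i
          · intro j
            rw [coeff_add, coeff_X_pow]
            have := hrnn j
            split_ifs <;> omega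
          · simp [h]
        have := add_right_cancel (a := r) (b := (X:ℤ[X]) ^ i) (c := 0)
        simpa using hkey
      have : p = X ^ i := by rw [hr, sub_eq_zero] at hr0; exact hr0
      exact ⟨i, by rw [this]; simp⟩
  · rintro ⟨n, rfl⟩
    refine ⟨powM_mem α n, pow_ne_zero n hα0, ?_⟩
    intro u v hu hv heq
    rw [mem_malpha_iff] at hu hv
    obtain ⟨p, hp, rfl⟩ := hu
    obtain ⟨q, hq, rfl⟩ := hv
    have hsum : p + q = X ^ n := by
      apply key ha hb hc hc2 hgcd hirr hroot n
      · intro j; rw [coeff_add]; have := hp j; have := hq j; omega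
      · rw [map_add, ← heq]
    have hcoeff : ∀ j, p.coeff j + q.coeff j = (X ^ n : ℤ[X]).coeff j := by
      intro j; rw [← hsum, coeff_add]
    by_cases hpn : p.coeff n = 0
    · left
      have hp0 : p = 0 := by
        apply Polynomial.ext
        intro j
        simp only [coeff_zero]
        by_cases hjn : j = n
        · subst hjn; exact hpn
        · have h1 := hcoeff j
          rw [coeff_X_pow, if_neg hjn] at h1
          have h2 := hp j; have h3 := hq j
          omega
      rw [hp0]; simp
    · right
      have hq0 : q = 0 := by
        apply Polynomial.ext
        intro j
        simp only [coeff_zero]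
        by_cases hjn : j = n
        · rw [hjn]
          have h1 := hcoeff n
          rw [coeff_X_pow, if_pos rfl] at h1
          have h2 := hp n
          have h3 := hq n
          omega
        · have h1 := hcoeff j
          rw [coeff_X_pow, if_neg hjn] at h1
          have h2 := hp j; have h3 := hq j
          omega
      rw [hq0]; simp

lemma strong_empty (ha : 0 < a) (hb : 0 < b) (hc : 0 < c) (hc2 : 2 ≤ c)
    (hgcd : Nat.gcd a (Nat.gcd b c) = 1)
    (hirr : Irrational (Real.sqrt ((b : ℝ) ^ 2 + 4 * a * c)))
    (hroot : (a : ℂ) * α ^ 2 + (b : ℂ) * α - (c : ℂ) = 0) :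
    strongAtomsM α = ∅ := by
  have hatoms := atoms_eq ha hb hc hc2 hgcd hirr hroot
  ext x
  simp only [Set.mem_empty_iff_false, iff_false]
  rintro ⟨hatom, hstr⟩
  rw [hatoms] at hatom
  obtain ⟨k, rfl⟩ := hatom
  have hsum : (Multiset.replicate a (α^(k+2)) + Multiset.replicate b (α^(k+1))).sum
      = c • ((fun n : ℕ => α ^ n) k) := by
    simp only [Multiset.sum_add, Multiset.sum_replicate, nsmul_eq_mul]
    linear_combination α ^ k * hroot
  have hmem : ∀ y ∈ Multiset.replicate a (α^(k+2)) + Multiset.replicate b (α^(k+1)),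
      y ∈ atomsM α := by
    intro y hy
    rw [Multiset.mem_add] at hy
    rcases hy with hy | hy
    · rw [Multiset.eq_of_mem_replicate hy, hatoms]; exact ⟨k+2, rfl⟩
    · rw [Multiset.eq_of_mem_replicate hy, hatoms]; exact ⟨k+1, rfl⟩
  have hs := hstr c hc _ hmem hsum
  have hmem1 : α^(k+1) ∈ Multiset.replicate c ((fun n : ℕ => α ^ n) k) := by
    rw [← hs]
    exact Multiset.mem_add.mpr (Or.inr (Multiset.mem_replicate.mpr ⟨hb.ne', rfl⟩))
  have heq := Multiset.eq_of_mem_replicate hmem1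
  have := pow_injective ha hc hirr hroot heq
  omega

lemma atoms_empty_c1 (ha : 0 < a) (hb : 0 < b) (hc1 : c = 1)
    (hroot : (a : ℂ) * α ^ 2 + (b : ℂ) * α - (c : ℂ) = 0) :
    atomsM α = ∅ := by
  have hα0 : α ≠ 0 := alpha_ne_zero (by omega) hroot
  ext x
  simp only [Set.mem_empty_iff_false, iff_false]
  rintro ⟨hxM, hx0, hdec⟩
  have h1 : (a:ℂ) * α^2 + (b:ℂ) * α = 1 := by
    have := hroot
    rw [hc1] at this
    push_cast at this
    linear_combination this
  have hu : (a:ℂ) * (x * α^2) ∈ Malpha α := by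
    have := AddSubmonoid.nsmul_mem _ (mul_pow_mem hxM 2) a
    rwa [nsmul_eq_mul] at this
  have hv : (b:ℂ) * (x * α^1) ∈ Malpha α := by
    have := AddSubmonoid.nsmul_mem _ (mul_pow_mem hxM 1) b
    rwa [nsmul_eq_mul] at this
  rcases hdec _ _ hu hv (by linear_combination (-x) * h1) with h | h
  · exact (mul_ne_zero (mul_ne_zero (Nat.cast_ne_zero.mpr ha.ne') hx0)
      (pow_ne_zero 2 hα0)) (by linear_combination h)
  · exact (mul_ne_zero (mul_ne_zero (Nat.cast_ne_zero.mpr hb.ne') hx0)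
      (pow_ne_zero 1 hα0)) (by linear_combination h)

end main

theorem stmt_9 (a b c : ℕ) (ha : 0 < a) (hb : 0 < b) (hc : 0 < c)
    (hgcd : Nat.gcd a (Nat.gcd b c) = 1)
    (hirr : Irrational (Real.sqrt ((b : ℝ) ^ 2 + 4 * a * c)))
    (α : ℂ) (hroot : (a : ℂ) * α ^ 2 + (b : ℂ) * α - (c : ℂ) = 0) :
    (c = 1 → atomsM α = ∅ ∧ strongAtomsM α = ∅) ∧
    (1 < c → strongAtomsM α = ∅ ∧
      atomsM α = Set.range (fun n : ℕ => α ^ n) ∧ (atomsM α).Infinite) := by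
  constructor
  · intro hc1
    have hat := atoms_empty_c1 ha hb hc1 hroot
    refine ⟨hat, ?_⟩
    ext x
    simp only [Set.mem_empty_iff_false, iff_false]
    rintro ⟨hatom, -⟩
    rw [hat] at hatom
    exact hatom
  · intro hc2'
    have hc2 : 2 ≤ c := hc2'
    have hat := atoms_eq ha hb hc hc2 hgcd hirr hroot
    refine ⟨strong_empty ha hb hc hc2 hgcd hirr hroot, hat, ?_⟩
    rw [hat]
    exact Set.infinite_range_of_injective (pow_injective ha hc hirr hroot)
end
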